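/- arXiv:1206.5931 — 8 statements merged into one kernel-verified Lean document; each statement's English description precedes it below -/
import Mathlib

section
/- Let f be a positive probability density on ℝ with cumulative distribution function F(x) = ∫_{−∞}^x f(y) dy and median m, and suppose b := max( sup_{x≥m} (∫_x^{+∞} f(y) dy)(∫_m^x dy/f(y)), sup_{x≤m} (∫_{−∞}^x f(y) dy)(∫_x^m dy/f(y)) ) < +∞. Then for any probability density g on ℝ with cumulative distribution function G(x) = ∫_{−∞}^x g(y) dy, ∫_ℝ (F(x) − G(x))² / f(x) dx ≤ 4b ∫_ℝ (f(x) − g(x))² / f(x) dx. -/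
open MeasureTheory ENNReal

-- Squared quadratic Wasserstein distance: infimum over couplings of the expected
-- squared distance.
noncomputable def W2sq {E : Type*} [MeasurableSpace E] [NormedAddCommGroup E]
    (μ ν : Measure E) : ℝ≥0∞ :=
  ⨅ (γ : Measure (E × E)) (_ : IsProbabilityMeasure γ)
    (_ : γ.map Prod.fst = μ) (_ : γ.map Prod.snd = ν),
    ∫⁻ p, ENNReal.ofReal (‖p.1 - p.2‖ ^ 2) ∂γ

-- Chi-square pseudo-distance squared: `∫ (dν/dμ − 1)² dμ` if `ν ≪ μ`, `+∞` otherwise.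
open Classical in
noncomputable def chiSqSq {E : Type*} [MeasurableSpace E] (ν μ : Measure E) : ℝ≥0∞ :=
  if ν ≪ μ then ∫⁻ x, ENNReal.ofReal (((ν.rnDeriv μ x).toReal - 1) ^ 2) ∂μ else ⊤

-- The constant `b` of condition (6.2.2): the maximum of
-- `sup_{x ≥ m} (∫_x^∞ f)(∫_m^x 1/f)` and `sup_{x ≤ m} (∫_{-∞}^x f)(∫_x^m 1/f)`.
noncomputable def bConst (f : ℝ → ℝ) (m : ℝ) : ℝ≥0∞ :=
  max
    (⨆ x ∈ Set.Ici m,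
      (∫⁻ y in Set.Ioi x, ENNReal.ofReal (f y)) *
        ∫⁻ y in Set.Ioc m x, ENNReal.ofReal ((f y)⁻¹))
    (⨆ x ∈ Set.Iic m,
      (∫⁻ y in Set.Iic x, ENNReal.ofReal (f y)) *
        ∫⁻ y in Set.Ico x m, ENNReal.ofReal ((f y)⁻¹))

open Set

lemma setLIntegral_pos_of_pos (φ : ℝ → ℝ≥0∞) (hφ : Measurable φ) (h0 : ∀ x, 0 < φ x)
    {s : Set ℝ} (hsm : 0 < volume s) : 0 < ∫⁻ x in s, φ x := by
  rw [lintegral_pos_iff_support hφ]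
  have : Function.support φ = univ := by
    ext x; simp [Function.support, (h0 x).ne']
  rw [this]
  simpa [Measure.restrict_apply_univ] using hsm

lemma tail_level (ν : Measure ℝ) (hatom : ∀ c : ℝ, ν {c} = 0) (t : ℝ≥0∞) :
    ν {x | ν (Ioi x) ≤ t} ≤ t := by
  set S := {x : ℝ | ν (Ioi x) ≤ t} with hS
  have hup : ∀ x ∈ S, ∀ y, x ≤ y → y ∈ S := by
    intro x hx y hxy
    exact le_trans (measure_mono (Ioi_subset_Ioi hxy)) hx
  have hIoi : ∀ c : ℝ, (∀ n : ℕ, c + 1/(n+1) ∈ S) → ν (Ioi c) ≤ t := by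
    intro c hc
    have hun : Ioi c = ⋃ n : ℕ, Ioi (c + 1/(n+1)) := by
      ext x
      simp only [mem_Ioi, mem_iUnion]
      constructor
      · intro hx
        obtain ⟨n, hn⟩ := exists_nat_one_div_lt (sub_pos.2 hx)
        exact ⟨n, by linarith⟩
      · rintro ⟨n, hn⟩
        have : (0:ℝ) < 1/(n+1) := by positivity
        linarith
    have hdir : Directed (fun x1 x2 : Set ℝ => x1 ⊆ x2) (fun n : ℕ => Ioi (c + 1/(n+1))) := by
      apply Monotone.directed_le
      intro i j hij
      apply Ioi_subset_Ioi
      have hij' : (i:ℝ) ≤ j := Nat.cast_le.2 hij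
      have : (1:ℝ)/(j+1) ≤ 1/(i+1) := by
        apply one_div_le_one_div_of_le (by positivity)
        linarith
      linarith
    rw [hun, hdir.measure_iUnion]
    exact iSup_le fun n => hc n
  rcases S.eq_empty_or_nonempty with h | hne
  · rw [show S = ∅ from h]; simp
  by_cases hbdd : BddBelow S
  · set c := sInf S with hc
    have hsub : S ⊆ Ici c := fun x hx => csInf_le hbdd hx
    have hmem : ∀ n : ℕ, c + 1/(n+1) ∈ S := by
      intro n
      have hpos : (0:ℝ) < 1/(n+1) := by positivity
      have : sInf S < c + 1/(n+1) := by rw [← hc]; linarith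
      obtain ⟨s', hs', hlt⟩ := (csInf_lt_iff hbdd hne).1 this
      exact hup s' hs' _ (le_of_lt hlt)
    calc ν S ≤ ν ({c} ∪ Ioi c) := by
          refine measure_mono (hsub.trans ?_)
          intro x hx
          rcases eq_or_lt_of_le (mem_Ici.1 hx) with h | h
          · exact Or.inl h.symm
          · exact Or.inr h
      _ ≤ ν {c} + ν (Ioi c) := measure_union_le _ _
      _ ≤ t := by rw [hatom c, zero_add]; exact hIoi c hmem
  · have huniv : S = univ := by
      ext x
      simp only [mem_univ, iff_true]
      obtain ⟨y, hy, hyx⟩ := not_bddBelow_iff.1 hbdd x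
      exact hup y hy x (le_of_lt hyx)
    have hun : (univ : Set ℝ) = ⋃ n : ℕ, Ioi (-(n:ℝ)) := by
      ext x
      simp only [mem_univ, true_iff, mem_iUnion, mem_Ioi]
      obtain ⟨n, hn⟩ := exists_nat_gt (-x)
      exact ⟨n, by linarith⟩
    have hdir : Directed (fun x1 x2 : Set ℝ => x1 ⊆ x2) (fun n : ℕ => Ioi (-(n:ℝ))) := by
      apply Monotone.directed_le
      intro i j hij
      apply Ioi_subset_Ioi
      have : (i:ℝ) ≤ j := Nat.cast_le.2 hij
      linarith
    calc ν S ≤ ν univ := measure_mono (subset_univ S)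
      _ ≤ t := by
          rw [hun, hdir.measure_iUnion]
          refine iSup_le fun n => ?_
          have : (-(n:ℝ)) ∈ S := huniv ▸ mem_univ _
          exact this

/-- Level-set bound for the initial-segment function of a measure without atoms. -/
lemma init_level (ν : Measure ℝ) (hatom : ∀ c : ℝ, ν {c} = 0) (m y : ℝ) (t : ℝ≥0∞) :
    ν ({x | ν (Ioc m x) ≤ t} ∩ Ioc m y) ≤ t := by
  set S := {x : ℝ | ν (Ioc m x) ≤ t} with hS
  have hdown : ∀ x ∈ S, ∀ z, z ≤ x → z ∈ S := by
    intro x hx z hzx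
    exact le_trans (measure_mono (Ioc_subset_Ioc_right hzx)) hx
  have hIoc : ∀ c : ℝ, (∀ n : ℕ, c - 1/(n+1) ∈ S) → ν (Ioc m c) ≤ t := by
    intro c hc
    have hsplit : Ioc m c ⊆ Ioo m c ∪ {c} := by
      intro x hx
      rcases lt_or_eq_of_le hx.2 with h | h
      · exact Or.inl ⟨hx.1, h⟩
      · exact Or.inr (by simp [h])
    have hun : Ioo m c = ⋃ n : ℕ, Ioc m (c - 1/(n+1)) := by
      ext x
      simp only [mem_Ioo, mem_iUnion, mem_Ioc]
      constructor
      · rintro ⟨h1, h2⟩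
        obtain ⟨n, hn⟩ := exists_nat_one_div_lt (sub_pos.2 h2)
        exact ⟨n, h1, by linarith⟩
      · rintro ⟨n, h1, h2⟩
        have : (0:ℝ) < 1/(n+1) := by positivity
        exact ⟨h1, by linarith⟩
    have hdir : Directed (fun x1 x2 : Set ℝ => x1 ⊆ x2) (fun n : ℕ => Ioc m (c - 1/(n+1))) := by
      apply Monotone.directed_le
      intro i j hij
      apply Ioc_subset_Ioc_right
      have hij' : (i:ℝ) ≤ j := Nat.cast_le.2 hij
      have : (1:ℝ)/(j+1) ≤ 1/(i+1) := by
        apply one_div_le_one_div_of_le (by positivity)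
        linarith
      linarith
    calc ν (Ioc m c) ≤ ν (Ioo m c ∪ {c}) := measure_mono hsplit
      _ ≤ ν (Ioo m c) + ν {c} := measure_union_le _ _
      _ ≤ t := by
          rw [hatom c, add_zero, hun, hdir.measure_iUnion]
          exact iSup_le fun n => hc n
  rcases S.eq_empty_or_nonempty with h | hne
  · have : S ∩ Ioc m y = ∅ := by rw [show S = ∅ from h]; simp
    rw [this]; simp
  by_cases hbdd : BddAbove S
  · set c := sSup S with hc
    have hmem : ∀ n : ℕ, c - 1/(n+1) ∈ S := by
      intro n
      have hpos : (0:ℝ) < 1/(n+1) := by positivity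
      have : c - 1/(n+1) < sSup S := by rw [← hc]; linarith
      obtain ⟨s', hs', hlt⟩ := (lt_csSup_iff hbdd hne).1 this
      exact hdown s' hs' _ (le_of_lt hlt)
    have hνc : ν (Ioc m c) ≤ t := hIoc c hmem
    have hsub : S ∩ Ioc m y ⊆ Ioc m c := by
      rintro x ⟨hxS, hxy⟩
      exact ⟨hxy.1, le_csSup hbdd hxS⟩
    exact le_trans (measure_mono hsub) hνc
  · have huniv : S = univ := by
      ext x
      simp only [mem_univ, iff_true]
      obtain ⟨z, hz, hxz⟩ := not_bddAbove_iff.1 hbdd x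
      exact hdown z hz x (le_of_lt hxz)
    have hy : y ∈ S := huniv ▸ mem_univ _
    exact le_trans (measure_mono inter_subset_right) hy

lemma abstract_piece {α : Type*} [MeasurableSpace α] (μ : Measure α)
    (w W : α → ℝ≥0∞) (hw : Measurable w) (hW : Measurable W)
    (W0 : ℝ≥0∞) (hW0 : W0 ≠ ⊤)
    (htot : ∫⁻ x, w x ∂μ ≤ W0)
    (hlevel : ∀ t, t < W0 → ∫⁻ x in {x | W x ≤ t}, w x ∂μ ≤ t) :
    ∫⁻ x, w x * (W x) ^ (-(2⁻¹ : ℝ)) ∂μ ≤ 2 * W0 ^ (2⁻¹ : ℝ) := by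
  -- trivial case W0 = 0
  rcases eq_or_ne W0 0 with rfl | hW0pos
  · have hz : ∫⁻ x, w x ∂μ = 0 := le_antisymm (by simpa using htot) (zero_le)
    have hzero : w =ᵐ[μ] 0 := (lintegral_eq_zero_iff hw).1 hz
    have : (fun x => w x * W x ^ (-(2⁻¹:ℝ))) =ᵐ[μ] 0 := by
      filter_upwards [hzero] with x hx
      simp [hx]
    rw [lintegral_congr_ae this]
    simp
  -- main case
  set u : ℝ≥0∞ := W0 ^ (2⁻¹ : ℝ) with hu
  have hu0 : u ≠ 0 := by
    simp only [hu, ne_eq, ENNReal.rpow_eq_zero_iff]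
    push_neg
    refine ⟨fun h => absurd h hW0pos, fun h => absurd h hW0⟩
  have huT : u ≠ ⊤ := by
    simp only [hu, ne_eq, ENNReal.rpow_eq_top_iff]
    push_neg
    refine ⟨fun h => absurd h hW0pos, fun h => absurd h hW0⟩
  have hu2 : u ^ 2 = W0 := by
    rw [hu, ← ENNReal.rpow_natCast (W0 ^ (2⁻¹:ℝ)) 2, ← ENNReal.rpow_mul]
    norm_num
  -- replace W by W' = min W W0
  set W' : α → ℝ≥0∞ := fun x => min (W x) W0 with hW'def
  have hW' : Measurable W' := hW.min measurable_const
  have hmono_lhs : ∫⁻ x, w x * (W x) ^ (-(2⁻¹ : ℝ)) ∂μ ≤ ∫⁻ x, w x * (W' x) ^ (-(2⁻¹ : ℝ)) ∂μ := by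
    apply lintegral_mono
    intro x
    apply mul_le_mul_right
    rw [ENNReal.rpow_neg, ENNReal.rpow_neg]
    exact ENNReal.inv_le_inv.2 (ENNReal.rpow_le_rpow (min_le_left _ _) (by norm_num))
  refine hmono_lhs.trans ?_
  have hlevel' : ∀ t, ∫⁻ x in {x | W' x ≤ t}, w x ∂μ ≤ t := by
    intro t
    rcases lt_or_ge t W0 with h | h
    · have : {x | W' x ≤ t} = {x | W x ≤ t} := by
        ext x
        simp only [hW'def, mem_setOf_eq, min_le_iff]
        exact ⟨fun hx => hx.resolve_right (fun hc => absurd hc (not_le.2 h)), Or.inl⟩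
      rw [this]; exact hlevel t h
    · exact le_trans (le_trans (setLIntegral_le_lintegral _ _) htot) h
  -- main estimate for each a < 1
  have key : ∀ a : ℝ≥0∞, a ≠ 0 → a < 1 →
      ∫⁻ x, w x * (W' x) ^ (-(2⁻¹ : ℝ)) ∂μ ≤ u * a⁻¹ + u := by
    intro a ha0 ha1
    have haT : a ≠ ⊤ := (ha1.trans one_lt_top).ne
    set s : ℕ → ℝ≥0∞ := fun k => u * a ^ k with hsdef
    have hs0 : ∀ k, s k ≠ 0 := fun k => mul_ne_zero hu0 (pow_ne_zero k ha0)
    have hsT : ∀ k, s k ≠ ⊤ := fun k => ENNReal.mul_ne_top huT (ENNReal.pow_ne_top haT)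
    have hsanti : Antitone s := by
      apply antitone_nat_of_succ_le
      intro k
      rw [hsdef]
      simp only [pow_succ]
      calc u * (a ^ k * a) = u * a ^ k * a := by ring
        _ ≤ u * a ^ k * 1 := mul_le_mul_right ha1.le _
        _ = u * a ^ k := mul_one _
    set S : ℕ → Set α := fun k => {x | W' x ≤ s k ^ 2} with hSdef
    have hSmeas : ∀ k, MeasurableSet (S k) := fun k => hW' measurableSet_Iic
    have hSanti : ∀ {j k : ℕ}, j ≤ k → S k ⊆ S j := by
      intro j k hjk x hx
      exact le_trans hx (pow_le_pow_left' (hsanti hjk) 2)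
    have hS0 : S 0 = univ := by
      ext x
      simp only [hSdef, mem_setOf_eq, mem_univ, iff_true]
      have : s 0 = u := by simp [hsdef]
      rw [this, hu2]
      exact min_le_right _ _
    set E : ℕ → Set α := fun k => S k \ S (k+1) with hEdef
    have hEmeas : ∀ k, MeasurableSet (E k) := fun k => (hSmeas k).diff (hSmeas (k+1))
    have hEdisj : Pairwise (Function.onFun Disjoint E) := by
      have key2 : ∀ i j, i < j → Disjoint (E i) (E j) := by
        intro i j hij
        refine Set.disjoint_left.2 fun x hxi hxj => hxi.2 (hSanti (Nat.succ_le_of_lt hij) hxj.1)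
      intro i j hij
      rcases hij.lt_or_gt with h | h
      · exact key2 i j h
      · exact (key2 j i h).symm
    set Z : Set α := {x | W' x = 0} with hZdef
    have hZmeas : MeasurableSet Z := hW' (measurableSet_singleton 0)
    have hcompl : Zᶜ = ⋃ k, E k := by
      ext x
      simp only [hZdef, mem_compl_iff, mem_setOf_eq, mem_iUnion]
      constructor
      · intro hx
        have hpos : 0 < W' x := pos_iff_ne_zero.2 hx
        have htend : Filter.Tendsto (fun k : ℕ => s k ^ 2) Filter.atTop (nhds 0) := by
          have h1 : (fun k : ℕ => s k ^ 2) = fun k => u ^ 2 * (a ^ 2) ^ k := by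
            funext k
            rw [hsdef]
            simp only [mul_pow, ← pow_mul, ← pow_mul']
            ring_nf
          rw [h1]
          have ha2 : (a^2 : ℝ≥0∞) < 1 := by
            calc a ^ 2 ≤ a * 1 := by rw [pow_two]; exact mul_le_mul_right ha1.le _
              _ = a := mul_one _
              _ < 1 := ha1
          have := ENNReal.tendsto_pow_atTop_nhds_zero_of_lt_one ha2
          have h2 := ENNReal.Tendsto.const_mul (a := u ^ 2) this (Or.inr (by
            exact ENNReal.pow_ne_top huT))
          simpa using h2
        obtain ⟨n, hn⟩ := (htend.eventually (gt_mem_nhds hpos)).exists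
        -- x ∉ S n
        have hxn : x ∉ S n := fun hc => absurd (lt_of_le_of_lt hc hn) (lt_irrefl _)
        have hex : ∃ n, x ∉ S n := ⟨n, hxn⟩
        have hfind := Nat.find_spec hex
        set n₀ := Nat.find hex with hn₀
        have hn₀pos : n₀ ≠ 0 := by
          intro hc
          apply hfind
          rw [hc, hS0]
          exact mem_univ x
        obtain ⟨k, hk⟩ := Nat.exists_eq_succ_of_ne_zero hn₀pos
        refine ⟨k, ?_, ?_⟩
        · by_contra hc
          have := Nat.find_min' hex hc
          omega
        · rw [← Nat.succ_eq_add_one, ← hk]; exact hfind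
      · rintro ⟨k, _, hk2⟩ hc
        exact hk2 (by simp only [hSdef, mem_setOf_eq, hc]; exact zero_le)
    -- split the integral
    set F : α → ℝ≥0∞ := fun x => w x * (W' x) ^ (-(2⁻¹ : ℝ)) with hFdef
    have hsplit : ∫⁻ x, F x ∂μ = ∫⁻ x in Z, F x ∂μ + ∫⁻ x in Zᶜ, F x ∂μ :=
      (lintegral_add_compl F hZmeas).symm
    have hZzero : ∫⁻ x in Z, F x ∂μ = 0 := by
      have h1 : ∫⁻ x in Z, w x ∂μ = 0 := by
        have : Z = {x | W' x ≤ 0} := by ext x; simp [hZdef]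
        rw [this]
        exact le_antisymm (hlevel' 0) (zero_le)
      have h2 : w =ᵐ[μ.restrict Z] 0 := (lintegral_eq_zero_iff hw).1 h1
      have h3 : F =ᵐ[μ.restrict Z] 0 := by
        filter_upwards [h2] with x hx
        simp [hFdef, hx]
      rw [lintegral_congr_ae h3]
      simp
    -- the union part
    set mm : ℕ → ℝ≥0∞ := fun k => ∫⁻ x in E k, w x ∂μ with hmmdef
    have hEbound : ∀ k, ∫⁻ x in E k, F x ∂μ ≤ (s (k+1))⁻¹ * mm k := by
      intro k
      have hpt : ∀ x ∈ E k, F x ≤ w x * (s (k+1))⁻¹ := by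
        intro x hx
        apply mul_le_mul_right
        have hxgt : s (k+1) ^ 2 ≤ W' x := le_of_not_ge (fun hc => hx.2 hc)
        have heq : ((s (k+1)) ^ 2 : ℝ≥0∞) ^ (-(2⁻¹:ℝ)) = (s (k+1))⁻¹ := by
          rw [ENNReal.rpow_neg, ← ENNReal.rpow_natCast (s (k+1)) 2, ← ENNReal.rpow_mul]
          norm_num
        calc (W' x) ^ (-(2⁻¹:ℝ)) ≤ ((s (k+1)) ^ 2 : ℝ≥0∞) ^ (-(2⁻¹:ℝ)) := by
              rw [ENNReal.rpow_neg, ENNReal.rpow_neg]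
              exact ENNReal.inv_le_inv.2 (ENNReal.rpow_le_rpow hxgt (by norm_num))
          _ = (s (k+1))⁻¹ := heq
      calc ∫⁻ x in E k, F x ∂μ ≤ ∫⁻ x in E k, w x * (s (k+1))⁻¹ ∂μ :=
            setLIntegral_mono (hw.mul_const _) hpt
        _ = mm k * (s (k+1))⁻¹ := lintegral_mul_const' _ _ (ENNReal.inv_ne_top.2 (hs0 _))
        _ = (s (k+1))⁻¹ * mm k := mul_comm _ _
    -- delta telescoping
    set δ : ℕ → ℝ≥0∞ := fun j => match j with
      | 0 => (s 1)⁻¹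
      | (j+1) => (s (j+2))⁻¹ - (s (j+1))⁻¹
      with hδdef
    have hδsum : ∀ k, ∑ j ∈ Finset.range (k+1), δ j = (s (k+1))⁻¹ := by
      intro k
      induction k with
      | zero => simp [hδdef]
      | succ k ih =>
          rw [Finset.sum_range_succ, ih]
          exact add_tsub_cancel_of_le (ENNReal.inv_le_inv.2 (hsanti (by omega)))
    have hstep1 : ∑' k, (s (k+1))⁻¹ * mm k = ∑' k, ∑' j, if j < k+1 then δ j * mm k else 0 := by
      apply tsum_congr
      intro k
      rw [← hδsum k, Finset.sum_mul]
      rw [tsum_eq_sum (s := Finset.range (k+1)) (fun j hj => if_neg (by simpa using hj))]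
      apply Finset.sum_congr rfl
      intro j hj
      rw [if_pos (by simpa using hj)]
    have hstep2 : ∑' (k : ℕ), ∑' (j : ℕ), (if j < k+1 then δ j * mm k else 0)
        = ∑' (j : ℕ), δ j * ∑' (k : ℕ), (if j < k+1 then mm k else 0) := by
      rw [ENNReal.tsum_comm]
      apply tsum_congr
      intro j
      rw [← ENNReal.tsum_mul_left]
      apply tsum_congr
      intro k
      by_cases h : j < k + 1 <;> simp [h]
    have hinner : ∀ j, ∑' (k : ℕ), (if j < k+1 then mm k else 0) ≤ s j ^ 2 := by
      intro j
      have h1 : ∀ k, (if j < k+1 then mm k else 0)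
          = ∫⁻ x in (if j < k+1 then E k else ∅), w x ∂μ := by
        intro k
        split <;> simp [hmmdef]
      rw [tsum_congr h1]
      rw [← lintegral_iUnion (fun k => by split; exacts [hEmeas k, MeasurableSet.empty])
        (by
          intro i k hik
          simp only [Function.onFun]
          split <;> split
          · exact (hEdisj hik).mono le_rfl le_rfl
          · exact disjoint_bot_right
          · exact disjoint_bot_left
          · exact disjoint_bot_left)]
      refine le_trans (lintegral_mono_set ?_) (hlevel' (s j ^ 2))
      intro x hx
      simp only [mem_iUnion] at hx
      obtain ⟨k, hk⟩ := hx
      by_cases h : j < k + 1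
      · rw [if_pos h] at hk
        exact hSanti (by omega) hk.1
      · rw [if_neg h] at hk
        exact absurd hk (notMem_empty x)
    -- final numeric computation
    have haa : a * a⁻¹ = 1 := ENNReal.mul_inv_cancel ha0 haT
    have h0term : δ 0 * s 0 ^ 2 = u * a⁻¹ := by
      have hs02 : s 0 ^ 2 = s 1 * (u * a⁻¹) := by
        rw [hsdef]
        simp only [pow_zero, pow_one, mul_one]
        rw [show u * a * (u * a⁻¹) = u * u * (a * a⁻¹) by ring, haa, mul_one, ← pow_two]
      show (s 1)⁻¹ * s 0 ^ 2 = u * a⁻¹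
      rw [hs02, ← mul_assoc, ENNReal.inv_mul_cancel (hs0 1) (hsT 1), one_mul]
    have hterm : ∀ j, δ (j+1) * s (j+1) ^ 2 = u * a ^ j - u * a ^ (j+1) := by
      intro j
      have hz : (s (j+1) : ℝ≥0∞) ^ 2 ≠ ⊤ := ENNReal.pow_ne_top (hsT _)
      show ((s (j+2))⁻¹ - (s (j+1))⁻¹) * s (j+1) ^ 2 = _
      rw [ENNReal.sub_mul (fun _ _ => hz)]
      congr 1
      · have h1 : (s (j+1)) ^ 2 = s (j+2) * (u * a ^ j) := by rw [hsdef]; ring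
        rw [h1, ← mul_assoc, ENNReal.inv_mul_cancel (hs0 _) (hsT _), one_mul]
      · rw [pow_two, ← mul_assoc, ENNReal.inv_mul_cancel (hs0 _) (hsT _), one_mul, hsdef]
    have hpart : ∀ n, ∑ j ∈ Finset.range n, (u * a ^ j - u * a ^ (j+1)) = u - u * a ^ n := by
      intro n
      induction n with
      | zero => simp
      | succ n ih =>
          rw [Finset.sum_range_succ, ih]
          have h1 : u * a ^ (n+1) ≤ u * a ^ n := by
            apply mul_le_mul_right
            calc a ^ (n+1) = a ^ n * a := pow_succ a n
              _ ≤ a ^ n * 1 := mul_le_mul_right ha1.le _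
              _ = a ^ n := mul_one _
          have h2 : u * a ^ n ≤ u := by
            calc u * a ^ n ≤ u * 1 := by
                  apply mul_le_mul_right
                  exact pow_le_one' ha1.le n
              _ = u := mul_one _
          exact tsub_add_tsub_cancel h2 h1
    have htail : ∑' j, δ (j+1) * s (j+1) ^ 2 ≤ u := by
      rw [tsum_congr hterm, ENNReal.tsum_eq_iSup_sum]
      refine iSup_le fun fs => ?_
      obtain ⟨n, hn⟩ := fs.exists_nat_subset_range
      calc ∑ j ∈ fs, (u * a ^ j - u * a ^ (j+1))
          ≤ ∑ j ∈ Finset.range n, (u * a ^ j - u * a ^ (j+1)) :=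
            Finset.sum_le_sum_of_subset hn
        _ = u - u * a ^ n := hpart n
        _ ≤ u := tsub_le_self
    have hfinal : ∑' j, δ j * s j ^ 2 ≤ u * a⁻¹ + u := by
      rw [tsum_eq_zero_add' (f := fun j => δ j * s j ^ 2) ENNReal.summable]
      exact add_le_add (le_of_eq h0term) htail
    calc ∫⁻ x, w x * (W' x) ^ (-(2⁻¹ : ℝ)) ∂μ
        = ∫⁻ x in Z, F x ∂μ + ∫⁻ x in Zᶜ, F x ∂μ := hsplit
      _ = ∫⁻ x in Zᶜ, F x ∂μ := by rw [hZzero, zero_add]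
      _ = ∑' k, ∫⁻ x in E k, F x ∂μ := by rw [hcompl, lintegral_iUnion hEmeas hEdisj]
      _ ≤ ∑' k, (s (k+1))⁻¹ * mm k := ENNReal.tsum_le_tsum hEbound
      _ = ∑' j, δ j * ∑' k, (if j < k+1 then mm k else 0) := by rw [hstep1, hstep2]
      _ ≤ ∑' j, δ j * s j ^ 2 :=
          ENNReal.tsum_le_tsum (fun j => mul_le_mul_right (hinner j) _)
      _ ≤ u * a⁻¹ + u := hfinal
  -- take a → 1
  refine ENNReal.le_of_forall_pos_le_add fun ε hε _ => ?_
  have hεne : (ε : ℝ≥0∞) ≠ 0 := by exact_mod_cast hε.ne'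
  have hεT : (ε : ℝ≥0∞) ≠ ⊤ := coe_ne_top
  set a : ℝ≥0∞ := u / (u + ε) with hadef
  have hsum0 : u + (ε:ℝ≥0∞) ≠ 0 := by simp [hu0]
  have hsumT : u + (ε:ℝ≥0∞) ≠ ⊤ := by simp [huT, hεT]
  have ha0 : a ≠ 0 := by
    rw [hadef, ne_eq, ENNReal.div_eq_zero_iff]
    push_neg
    exact ⟨hu0, hsumT⟩
  have ha1 : a < 1 := by
    rw [hadef, ENNReal.div_lt_iff (Or.inl hsum0) (Or.inl hsumT), one_mul]
    exact ENNReal.lt_add_right huT hεne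
  have hainv : u * a⁻¹ = u + ε := by
    rw [hadef, ENNReal.inv_div (Or.inl hsumT) (Or.inl hsum0)]
    exact ENNReal.mul_div_cancel hu0 huT
  calc ∫⁻ x, w x * (W' x) ^ (-(2⁻¹ : ℝ)) ∂μ ≤ u * a⁻¹ + u := key a ha0 ha1
    _ = 2 * u + ε := by rw [hainv]; ring
    _ = 2 * W0 ^ (2⁻¹:ℝ) + ε := by rw [hu]

lemma half_hardy (φ d ψ : ℝ → ℝ≥0∞) (hφ : Measurable φ) (hd : Measurable d)
    (hψ : Measurable ψ) (hφd : ∀ x, φ x * d x = 1) (hφ1 : ∫⁻ x, φ x = 1)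
    (m : ℝ) (B : ℝ≥0∞) (hBtop : B ≠ ⊤)
    (hB : ∀ x, m ≤ x → (∫⁻ y in Ioi x, φ y) * (∫⁻ y in Ioc m x, d y) ≤ B) :
    ∫⁻ x in Ioi m, (∫⁻ y in Ioi x, ψ y) ^ 2 * d x
      ≤ 4 * B * ∫⁻ y in Ioi m, ψ y ^ 2 * d y := by
  -- pointwise facts about φ and d
  have hφ0 : ∀ x, φ x ≠ 0 := fun x h => by simpa [h] using hφd x
  have hφT : ∀ x, φ x ≠ ⊤ := by
    intro x h
    have := hφd x
    rcases eq_or_ne (d x) 0 with h0 | h0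
    · simp [h0] at this
    · rw [h, ENNReal.top_mul h0] at this; exact absurd this (by simp)
  have hd0 : ∀ x, d x ≠ 0 := fun x h => by simpa [h] using hφd x
  have hdT : ∀ x, d x ≠ ⊤ := by
    intro x h
    have := hφd x
    rw [h, ENNReal.mul_top (hφ0 x)] at this; exact absurd this (by simp)
  set ν : Measure ℝ := volume.withDensity φ with hν
  set νd : Measure ℝ := volume.withDensity d with hνd
  have hνs : ∀ {s : Set ℝ}, MeasurableSet s → ν s = ∫⁻ y in s, φ y :=
    fun hs => withDensity_apply φ hs
  have hνds : ∀ {s : Set ℝ}, MeasurableSet s → νd s = ∫⁻ y in s, d y :=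
    fun hs => withDensity_apply d hs
  have hatomν : ∀ c : ℝ, ν {c} = 0 := by
    intro c
    rw [hνs (measurableSet_singleton c), Measure.restrict_eq_zero.2 (by simp),
      lintegral_zero_measure]
  have hatomνd : ∀ c : ℝ, νd {c} = 0 := by
    intro c
    rw [hνds (measurableSet_singleton c), Measure.restrict_eq_zero.2 (by simp),
      lintegral_zero_measure]
  set T : ℝ → ℝ≥0∞ := fun x => ν (Ioi x) with hT
  set Φ : ℝ → ℝ≥0∞ := fun x => νd (Ioc m x) with hΦ
  have hTanti : Antitone T := fun x y hxy => measure_mono (Ioi_subset_Ioi hxy)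
  have hTmeas : Measurable T := hTanti.measurable
  have hΦmono : Monotone Φ := fun x y hxy => measure_mono (Ioc_subset_Ioc_right hxy)
  have hΦmeas : Measurable Φ := hΦmono.measurable
  have hT1 : ∀ x, T x ≤ 1 := by
    intro x
    calc T x ≤ ν univ := measure_mono (subset_univ _)
      _ = 1 := by rw [hνs MeasurableSet.univ, Measure.restrict_univ, hφ1]
  have hTpos : ∀ x, 0 < T x := by
    intro x
    rw [hT]
    show 0 < ν (Ioi x)
    rw [hνs measurableSet_Ioi]
    exact setLIntegral_pos_of_pos φ hφ (fun y => pos_iff_ne_zero.2 (hφ0 y)) (by simp)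
  have hΦpos : ∀ x, m < x → 0 < Φ x := by
    intro x hx
    show 0 < νd (Ioc m x)
    rw [hνds measurableSet_Ioc]
    refine setLIntegral_pos_of_pos d hd (fun y => pos_iff_ne_zero.2 (hd0 y)) ?_
    rw [Real.volume_Ioc]
    simp [hx]
  have hTΦ : ∀ x, m ≤ x → T x * Φ x ≤ B := by
    intro x hx
    have h := hB x hx
    show ν (Ioi x) * νd (Ioc m x) ≤ B
    rwa [hνs measurableSet_Ioi, hνds measurableSet_Ioc]
  have hΦT : ∀ x, m < x → Φ x ≠ ⊤ := by
    intro x hx h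
    have := hTΦ x hx.le
    rw [h, ENNReal.mul_top (hTpos x).ne'] at this
    exact hBtop (top_le_iff.1 this)
  have hB0 : B ≠ 0 := by
    intro h
    have := hTΦ (m+1) (by linarith)
    rw [h, le_zero_iff, mul_eq_zero] at this
    rcases this with h1 | h1
    · exact (hTpos (m+1)).ne' h1
    · exact (hΦpos (m+1) (by linarith)).ne' h1
  -- the two Hardy-type integral estimates from `abstract_piece`
  have key1 : ∀ x : ℝ, ∫⁻ y in Ioi x, φ y * (T y) ^ (-(2⁻¹:ℝ)) ≤ 2 * (T x) ^ (2⁻¹:ℝ) := by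
    intro x
    refine abstract_piece (volume.restrict (Ioi x)) φ T hφ hTmeas (T x)
      (by exact (lt_of_le_of_lt (hT1 x) one_lt_top).ne) (le_of_eq (hνs measurableSet_Ioi).symm) ?_
    intro t _
    have hmst : MeasurableSet {y : ℝ | T y ≤ t} := hTmeas measurableSet_Iic
    rw [Measure.restrict_restrict hmst]
    calc ∫⁻ y in {y | T y ≤ t} ∩ Ioi x, φ y ≤ ∫⁻ y in {y | T y ≤ t}, φ y :=
          lintegral_mono_set inter_subset_left
      _ = ν {y | ν (Ioi y) ≤ t} := (hνs hmst).symm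
      _ ≤ t := tail_level ν hatomν t
  have key2 : ∀ y : ℝ, m < y → ∫⁻ x in Ioc m y, d x * (Φ x) ^ (-(2⁻¹:ℝ)) ≤ 2 * (Φ y) ^ (2⁻¹:ℝ) := by
    intro y hy
    refine abstract_piece (volume.restrict (Ioc m y)) d Φ hd hΦmeas (Φ y)
      (hΦT y hy) (le_of_eq (hνds measurableSet_Ioc).symm) ?_
    intro t _
    have hmst : MeasurableSet {x : ℝ | Φ x ≤ t} := hΦmeas measurableSet_Iic
    rw [Measure.restrict_restrict hmst]
    calc ∫⁻ x in {x | Φ x ≤ t} ∩ Ioc m y, d x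
        = νd ({x | νd (Ioc m x) ≤ t} ∩ Ioc m y) :=
          (hνds (hmst.inter measurableSet_Ioc)).symm
      _ ≤ t := init_level νd hatomνd m y t
  -- Cauchy-Schwarz pointwise
  set e : ℝ := 2⁻¹ with hedef
  have he0 : (0:ℝ) ≤ e := by norm_num [hedef]
  have hsq : ∀ X : ℝ≥0∞, (X ^ ((1:ℝ)/2)) ^ 2 = X := by
    intro X
    rw [← ENNReal.rpow_natCast (X ^ ((1:ℝ)/2)) 2, ← ENNReal.rpow_mul]
    norm_num
  set ρ : ℝ → ℝ≥0∞ := fun y => ψ y ^ 2 * d y * (T y) ^ e with hρ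
  have hρm : Measurable ρ := by
    apply Measurable.mul
    · exact (hψ.pow_const 2).mul hd
    · exact hTmeas.pow_const e
  set σ : ℝ → ℝ≥0∞ := fun x => (T x) ^ e * d x with hσ
  have hσm : Measurable σ := (hTmeas.pow_const e).mul hd
  have hσT : ∀ x, σ x ≠ ⊤ := by
    intro x
    rw [hσ]
    exact ENNReal.mul_ne_top
      (ne_top_of_le_ne_top one_ne_top (ENNReal.rpow_le_one (hT1 x) he0)) (hdT x)
  have hCS : ∀ x : ℝ, (∫⁻ y in Ioi x, ψ y) ^ 2 ≤
      (∫⁻ y in Ioi x, ρ y) * (∫⁻ y in Ioi x, φ y * (T y) ^ (-e)) := by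
    intro x
    set uu : ℝ → ℝ≥0∞ := fun y => (ψ y ^ 2 * d y * (T y) ^ e) ^ e with huu
    set vv : ℝ → ℝ≥0∞ := fun y => (φ y * (T y) ^ (-e)) ^ e with hvv
    have huum : Measurable uu := hρm.pow_const e
    have hvvm : Measurable vv := ((hφ.mul (hTmeas.pow_const (-e))).pow_const e)
    have hTe1 : ∀ y, (T y) ^ e * (T y) ^ (-e) = 1 := by
      intro y
      rw [← ENNReal.rpow_add e (-e) (hTpos y).ne'
        (ne_top_of_le_ne_top one_ne_top (hT1 y))]
      simp
    have huv : ∀ y, uu y * vv y = ψ y := by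
      intro y
      rw [huu, hvv, ← ENNReal.mul_rpow_of_nonneg _ _ he0]
      have h1 : ψ y ^ 2 * d y * T y ^ e * (φ y * T y ^ (-e))
          = ψ y ^ 2 * (φ y * d y) * (T y ^ e * T y ^ (-e)) := by ring
      rw [h1, hφd y, hTe1 y, mul_one, mul_one,
        ← ENNReal.rpow_natCast (ψ y) 2, ← ENNReal.rpow_mul]
      norm_num [hedef]
    have hconj : Real.HolderConjugate 2 2 := Real.HolderConjugate.two_two
    have hH := ENNReal.lintegral_mul_le_Lp_mul_Lq (volume.restrict (Ioi x)) hconj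
      huum.aemeasurable hvvm.aemeasurable
    have huu2 : ∀ y, uu y ^ (2:ℝ) = ρ y := by
      intro y
      rw [huu, ← ENNReal.rpow_mul, hρ]
      norm_num [hedef]
    have hvv2 : ∀ y, vv y ^ (2:ℝ) = φ y * (T y) ^ (-e) := by
      intro y
      rw [hvv, ← ENNReal.rpow_mul]
      norm_num [hedef]
    calc (∫⁻ y in Ioi x, ψ y) ^ 2 = (∫⁻ y in Ioi x, (uu * vv) y) ^ 2 := by
          congr 1
          exact lintegral_congr fun y => (huv y).symm
      _ ≤ ((∫⁻ y in Ioi x, uu y ^ (2:ℝ)) ^ ((1:ℝ)/2)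
            * (∫⁻ y in Ioi x, vv y ^ (2:ℝ)) ^ ((1:ℝ)/2)) ^ 2 := pow_le_pow_left' hH 2
      _ = (∫⁻ y in Ioi x, uu y ^ (2:ℝ)) * (∫⁻ y in Ioi x, vv y ^ (2:ℝ)) := by
          rw [mul_pow, hsq, hsq]
      _ = (∫⁻ y in Ioi x, ρ y) * (∫⁻ y in Ioi x, φ y * (T y) ^ (-e)) := by
          rw [lintegral_congr huu2, lintegral_congr hvv2]
  -- step 1 : apply CS and key1 pointwise
  set A : ℝ → ℝ≥0∞ := fun x => ∫⁻ y in Ioi x, ρ y with hA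
  have hAanti : Antitone A := fun x y hxy => lintegral_mono_set (Ioi_subset_Ioi hxy)
  have hAmeas : Measurable A := hAanti.measurable
  have step1 : ∫⁻ x in Ioi m, (∫⁻ y in Ioi x, ψ y) ^ 2 * d x
      ≤ 2 * ∫⁻ x in Ioi m, A x * σ x := by
    rw [← lintegral_const_mul 2 (f := fun x => A x * σ x) (hAmeas.mul hσm)]
    refine setLIntegral_mono ((hAmeas.mul hσm).const_mul 2) ?_
    intro x _
    calc (∫⁻ y in Ioi x, ψ y) ^ 2 * d x
        ≤ (A x * (∫⁻ y in Ioi x, φ y * (T y) ^ (-e))) * d x :=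
          mul_le_mul_left (hCS x) _
      _ ≤ (A x * (2 * (T x) ^ e)) * d x :=
          mul_le_mul_left (mul_le_mul_right (key1 x) _) _
      _ = 2 * (A x * σ x) := by rw [hσ]; ring
  -- Tonelli swap
  set K : ℝ → ℝ → ℝ≥0∞ := fun x y =>
    ({p : ℝ × ℝ | p.1 < p.2}.indicator (fun p => ρ p.2 * σ p.1) (x, y)) with hK
  have hKmeas : Measurable (Function.uncurry K) := by
    have h : Function.uncurry K = {p : ℝ × ℝ | p.1 < p.2}.indicator
        (fun p => ρ p.2 * σ p.1) := rfl
    rw [h]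
    exact ((hρm.comp measurable_snd).mul (hσm.comp measurable_fst)).indicator
      (measurableSet_lt measurable_fst measurable_snd)
  have hKval : ∀ x y, K x y = if x < y then ρ y * σ x else 0 := by
    intro x y
    rw [hK]
    simp [Set.indicator_apply]
  have step2 : ∫⁻ x in Ioi m, A x * σ x = ∫⁻ x in Ioi m, ∫⁻ y in Ioi m, K x y := by
    refine setLIntegral_congr_fun measurableSet_Ioi ?_
    intro x hx
    have h1 : ∀ y, K x y = (Ioi x).indicator (fun y => ρ y * σ x) y := by
      intro y
      rw [hKval]
      simp [Set.indicator_apply, mem_Ioi]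
    calc A x * σ x = ∫⁻ y in Ioi x, ρ y * σ x := by
          rw [hA, lintegral_mul_const' (σ x) ρ (hσT x)]
      _ = ∫⁻ y in Ioi x ∩ Ioi m, ρ y * σ x := by
          rw [inter_eq_left.2 (Ioi_subset_Ioi (le_of_lt hx))]
      _ = ∫⁻ y in Ioi x, (ρ y * σ x) ∂(volume.restrict (Ioi m)) := by
          rw [Measure.restrict_restrict measurableSet_Ioi]
      _ = ∫⁻ y in Ioi m, (Ioi x).indicator (fun y => ρ y * σ x) y :=
          (lintegral_indicator measurableSet_Ioi _).symm
      _ = ∫⁻ y in Ioi m, K x y := by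
          exact lintegral_congr fun y => (h1 y).symm
  have step3 : ∫⁻ x in Ioi m, ∫⁻ y in Ioi m, K x y = ∫⁻ y in Ioi m, ∫⁻ x in Ioi m, K x y :=
    lintegral_lintegral_swap hKmeas.aemeasurable
  have step4 : ∀ y ∈ Ioi m, ∫⁻ x in Ioi m, K x y = ρ y * ∫⁻ x in Ioo m y, σ x := by
    intro y _
    have h1 : ∀ x, K x y = (Iio y).indicator (fun x => ρ y * σ x) x := by
      intro x
      rw [hKval]
      simp [Set.indicator_apply, mem_Iio]
    calc ∫⁻ x in Ioi m, K x y
        = ∫⁻ x in Ioi m, (Iio y).indicator (fun x => ρ y * σ x) x :=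
          lintegral_congr fun x => h1 x
      _ = ∫⁻ x in Iio y, (ρ y * σ x) ∂(volume.restrict (Ioi m)) :=
          lintegral_indicator measurableSet_Iio _
      _ = ∫⁻ x in Iio y ∩ Ioi m, ρ y * σ x := by
          rw [Measure.restrict_restrict measurableSet_Iio]
      _ = ∫⁻ x in Ioo m y, ρ y * σ x := by rw [inter_comm, Ioi_inter_Iio]
      _ = ρ y * ∫⁻ x in Ioo m y, σ x := lintegral_const_mul (ρ y) hσm
  have hBee : B ^ e * B ^ e = B := by
    rw [← ENNReal.rpow_add e e hB0 hBtop]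
    norm_num [hedef]
  have step5 : ∀ y, m < y → ρ y * ∫⁻ x in Ioo m y, σ x ≤ 2 * B * (ψ y ^ 2 * d y) := by
    intro y hy
    have hσbound : ∀ x ∈ Ioc m y, σ x ≤ B ^ e * (d x * (Φ x) ^ (-e)) := by
      intro x hx
      rw [hσ]
      have h1 : T x ≤ B / Φ x :=
        (ENNReal.le_div_iff_mul_le (Or.inl (hΦpos x hx.1).ne')
          (Or.inl (hΦT x hx.1))).2 (hTΦ x hx.1.le)
      have h2 : T x ^ e ≤ (B / Φ x) ^ e := ENNReal.rpow_le_rpow h1 he0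
      have h3 : (B / Φ x) ^ e = B ^ e * (Φ x) ^ (-e) := by
        rw [ENNReal.div_rpow_of_nonneg _ _ he0, div_eq_mul_inv, ENNReal.rpow_neg]
      calc T x ^ e * d x ≤ (B ^ e * (Φ x) ^ (-e)) * d x :=
            mul_le_mul_left (h2.trans_eq h3) _
        _ = B ^ e * (d x * (Φ x) ^ (-e)) := by ring
    calc ρ y * ∫⁻ x in Ioo m y, σ x
        ≤ ρ y * ∫⁻ x in Ioc m y, σ x :=
          mul_le_mul_right (lintegral_mono_set Ioo_subset_Ioc_self) _
      _ ≤ ρ y * ∫⁻ x in Ioc m y, B ^ e * (d x * (Φ x) ^ (-e)) :=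
          mul_le_mul_right (setLIntegral_mono
            ((hd.mul (hΦmeas.pow_const (-e))).const_mul _) hσbound) _
      _ = ρ y * (B ^ e * ∫⁻ x in Ioc m y, d x * (Φ x) ^ (-e)) := by
          rw [lintegral_const_mul (B ^ e) (f := fun x => d x * (Φ x) ^ (-e)) (hd.mul (hΦmeas.pow_const (-e)))]
      _ ≤ ρ y * (B ^ e * (2 * (Φ y) ^ e)) :=
          mul_le_mul_right (mul_le_mul_right (key2 y hy) _) _
      _ = 2 * (ψ y ^ 2 * d y) * (B ^ e * ((T y) ^ e * (Φ y) ^ e)) := by rw [hρ]; ring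
      _ ≤ 2 * (ψ y ^ 2 * d y) * (B ^ e * B ^ e) := by
          apply mul_le_mul_right
          apply mul_le_mul_right
          rw [← ENNReal.mul_rpow_of_nonneg _ _ he0]
          exact ENNReal.rpow_le_rpow (hTΦ y hy.le) he0
      _ = 2 * B * (ψ y ^ 2 * d y) := by rw [hBee]; ring
  calc ∫⁻ x in Ioi m, (∫⁻ y in Ioi x, ψ y) ^ 2 * d x
      ≤ 2 * ∫⁻ x in Ioi m, A x * σ x := step1
    _ = 2 * ∫⁻ y in Ioi m, ∫⁻ x in Ioi m, K x y := by rw [step2, step3]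
    _ = 2 * ∫⁻ y in Ioi m, ρ y * ∫⁻ x in Ioo m y, σ x := by
        rw [setLIntegral_congr_fun measurableSet_Ioi step4]
    _ ≤ 2 * ∫⁻ y in Ioi m, 2 * B * (ψ y ^ 2 * d y) := by
        apply mul_le_mul_right
        exact setLIntegral_mono (((hψ.pow_const 2).mul hd).const_mul _)
          (fun y hy => step5 y hy)
    _ = 4 * B * ∫⁻ y in Ioi m, ψ y ^ 2 * d y := by
        rw [lintegral_const_mul (2 * B) (f := fun y => ψ y ^ 2 * d y) ((hψ.pow_const 2).mul hd)]
        ring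

lemma setLIntegral_comp_neg (u : ℝ → ℝ≥0∞) (s : Set ℝ) (hs : MeasurableSet s) :
    ∫⁻ x in (fun x : ℝ => -x) ⁻¹' s, u (-x) = ∫⁻ x in s, u x :=
  (Measure.measurePreserving_neg volume).setLIntegral_comp_preimage_emb
    (MeasurableEquiv.neg ℝ).measurableEmbedding u s

-- STATEMENT 4: if the positive probability density f has median m and b < ∞, then for
-- any probability density g, ∫ (F - G)²/f ≤ 4 b ∫ (f - g)²/f.
theorem cdf_chisq_bound (f g : ℝ → ℝ) (hfpos : ∀ x, 0 < f x) (hgpos : ∀ x, 0 ≤ g x)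
    (hfm : Measurable f) (hgm : Measurable g)
    (hf1 : ∫⁻ x, ENNReal.ofReal (f x) = 1) (hg1 : ∫⁻ x, ENNReal.ofReal (g x) = 1)
    (m : ℝ) (hmed : ∫ y in Set.Iic m, f y = 1 / 2)
    (hb : bConst f m ≠ ⊤) :
    ∫⁻ x, ENNReal.ofReal
        (((∫ y in Set.Iic x, f y) - ∫ y in Set.Iic x, g y) ^ 2 / f x)
      ≤ 4 * bConst f m * ∫⁻ x, ENNReal.ofReal ((f x - g x) ^ 2 / f x) := by
  classical
  set φ : ℝ → ℝ≥0∞ := fun x => ENNReal.ofReal (f x) with hφdef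
  set dd : ℝ → ℝ≥0∞ := fun x => ENNReal.ofReal ((f x)⁻¹) with hdddef
  set ψ : ℝ → ℝ≥0∞ := fun x => ENNReal.ofReal |f x - g x| with hψdef
  have hφm : Measurable φ := hfm.ennreal_ofReal
  have hddm : Measurable dd := hfm.inv.ennreal_ofReal
  have hψm : Measurable ψ := (hfm.sub hgm).abs.ennreal_ofReal
  have hφd : ∀ x, φ x * dd x = 1 := by
    intro x
    rw [hφdef, hdddef]
    simp only
    rw [← ENNReal.ofReal_mul (hfpos x).le, mul_inv_cancel₀ (hfpos x).ne',
      ENNReal.ofReal_one]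
  -- integrability
  have hfint : Integrable f := by
    refine ⟨hfm.aestronglyMeasurable, ?_⟩
    rw [hasFiniteIntegral_iff_ofReal (ae_of_all _ fun x => (hfpos x).le), hf1]
    exact one_lt_top
  have hgint : Integrable g := by
    refine ⟨hgm.aestronglyMeasurable, ?_⟩
    rw [hasFiniteIntegral_iff_ofReal (ae_of_all _ hgpos), hg1]
    exact one_lt_top
  have hfint1 : ∫ x, f x = 1 := by
    rw [integral_eq_lintegral_of_nonneg_ae (ae_of_all _ fun x => (hfpos x).le)
      hfm.aestronglyMeasurable, hf1]
    simp
  have hgint1 : ∫ x, g x = 1 := by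
    rw [integral_eq_lintegral_of_nonneg_ae (ae_of_all _ hgpos)
      hgm.aestronglyMeasurable, hg1]
    simp
  set H : ℝ → ℝ := fun x => (∫ y in Iic x, f y) - ∫ y in Iic x, g y with hH
  have htail : ∀ x, H x = (∫ y in Ioi x, g y) - ∫ y in Ioi x, f y := by
    intro x
    have h1 := integral_add_compl (measurableSet_Iic (a := x)) hfint
    have h2 := integral_add_compl (measurableSet_Iic (a := x)) hgint
    rw [compl_Iic, hfint1] at h1
    rw [compl_Iic, hgint1] at h2
    rw [hH]
    simp only
    linarith
  -- pointwise bounds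
  have hint2 : Integrable (fun y => |f y - g y|) := by
    simpa [Pi.sub_apply] using (hfint.sub hgint).abs
  have hpt : ∀ (x : ℝ) (s : Set ℝ), |H x| ≤ (∫ y in s, |f y - g y|) →
      ENNReal.ofReal (H x ^ 2 / f x) ≤ (∫⁻ y in s, ψ y) ^ 2 * dd x := by
    intro x s habs
    have h1 : ENNReal.ofReal (H x ^ 2 / f x) = ENNReal.ofReal (H x ^ 2) * dd x := by
      rw [div_eq_mul_inv, ENNReal.ofReal_mul (sq_nonneg _), hdddef]
    rw [h1]
    apply mul_le_mul_left
    have h2 : ENNReal.ofReal (H x ^ 2) = ENNReal.ofReal |H x| ^ 2 := by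
      rw [← ENNReal.ofReal_pow (abs_nonneg _), sq_abs]
    rw [h2]
    apply pow_le_pow_left' _ 2
    calc ENNReal.ofReal |H x| ≤ ENNReal.ofReal (∫ y in s, |f y - g y|) :=
          ENNReal.ofReal_le_ofReal habs
      _ = ∫⁻ y in s, ψ y := by
          rw [ofReal_integral_eq_lintegral_ofReal hint2.integrableOn
            (ae_of_all _ fun y => abs_nonneg _)]
  have habsIic : ∀ x, |H x| ≤ ∫ y in Iic x, |f y - g y| := by
    intro x
    have h0 : H x = ∫ y in Iic x, (f y - g y) := by
      rw [hH]
      simp only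
      rw [integral_sub hfint.integrableOn hgint.integrableOn]
    rw [h0]
    calc |∫ y in Iic x, (f y - g y)| = ‖∫ y in Iic x, (f y - g y)‖ :=
          (Real.norm_eq_abs _).symm
      _ ≤ ∫ y in Iic x, ‖f y - g y‖ := norm_integral_le_integral_norm _
      _ = ∫ y in Iic x, |f y - g y| := by simp [Real.norm_eq_abs]
  have habsIoi : ∀ x, |H x| ≤ ∫ y in Ioi x, |f y - g y| := by
    intro x
    have h0 : H x = ∫ y in Ioi x, (g y - f y) := by
      rw [htail x, integral_sub hgint.integrableOn hfint.integrableOn]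
    rw [h0]
    calc |∫ y in Ioi x, (g y - f y)| = ‖∫ y in Ioi x, (g y - f y)‖ :=
          (Real.norm_eq_abs _).symm
      _ ≤ ∫ y in Ioi x, ‖g y - f y‖ := norm_integral_le_integral_norm _
      _ = ∫ y in Ioi x, |f y - g y| := by
          congr 1
          funext y
          rw [Real.norm_eq_abs, abs_sub_comm]
  have hptIoi : ∀ x, ENNReal.ofReal (H x ^ 2 / f x) ≤ (∫⁻ y in Ioi x, ψ y) ^ 2 * dd x :=
    fun x => hpt x (Ioi x) (habsIoi x)
  have hptIio : ∀ x, ENNReal.ofReal (H x ^ 2 / f x) ≤ (∫⁻ y in Iio x, ψ y) ^ 2 * dd x := by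
    intro x
    have h := hpt x (Iic x) (habsIic x)
    rwa [setLIntegral_congr (μ := volume) (Iio_ae_eq_Iic (a := x)).symm] at h
  -- the two halves of the constant
  set bR := ⨆ x ∈ Set.Ici m, (∫⁻ y in Ioi x, φ y) * ∫⁻ y in Ioc m x, dd y with hbR
  set bL := ⨆ x ∈ Set.Iic m, (∫⁻ y in Iic x, φ y) * ∫⁻ y in Ico x m, dd y with hbL
  have hbeq : bConst f m = max bR bL := rfl
  have hbRtop : bR ≠ ⊤ := ne_top_of_le_ne_top hb (hbeq ▸ le_max_left _ _)
  have hbLtop : bL ≠ ⊤ := ne_top_of_le_ne_top hb (hbeq ▸ le_max_right _ _)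
  have hbRle : ∀ x, m ≤ x → (∫⁻ y in Ioi x, φ y) * (∫⁻ y in Ioc m x, dd y) ≤ bR :=
    fun x hx => le_biSup (fun x => (∫⁻ y in Ioi x, φ y) * ∫⁻ y in Ioc m x, dd y)
      (mem_Ici.2 hx)
  -- right half
  have hright := half_hardy φ dd ψ hφm hddm hψm hφd hf1 m bR hbRtop hbRle
  -- left half by reflection
  have hpreIio : ∀ a : ℝ, (fun x : ℝ => -x) ⁻¹' (Iio a) = Ioi (-a) := by
    intro a
    ext x
    simp only [mem_preimage, mem_Iio, mem_Ioi]
    constructor <;> intro h <;> linarith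
  have hpreIio' : ∀ a : ℝ, (fun x : ℝ => -x) ⁻¹' (Iio (-a)) = Ioi a := by
    intro a
    ext x
    simp only [mem_preimage, mem_Iio, mem_Ioi]
    constructor <;> intro h <;> linarith
  have hneg1 : ∫⁻ x, φ (-x) = 1 := by
    have h := setLIntegral_comp_neg φ univ MeasurableSet.univ
    simp only [preimage_univ, Measure.restrict_univ] at h
    rw [h, hf1]
  have hBL : ∀ x, -m ≤ x →
      (∫⁻ y in Ioi x, φ (-y)) * (∫⁻ y in Ioc (-m) x, dd (-y)) ≤ bL := by
    intro x hx
    have e1 : ∫⁻ y in Ioi x, φ (-y) = ∫⁻ y in Iic (-x), φ y := by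
      rw [← hpreIio' x, setLIntegral_comp_neg φ (Iio (-x)) measurableSet_Iio,
        setLIntegral_congr (μ := volume) (Iio_ae_eq_Iic (a := -x))]
    have hpre2 : (fun y : ℝ => -y) ⁻¹' (Ico (-x) m) = Ioc (-m) x := by
      ext y
      simp only [mem_preimage, mem_Ico, mem_Ioc]
      constructor <;> intro h <;> exact ⟨by linarith [h.1, h.2], by linarith [h.1, h.2]⟩
    have e2 : ∫⁻ y in Ioc (-m) x, dd (-y) = ∫⁻ y in Ico (-x) m, dd y := by
      rw [← hpre2, setLIntegral_comp_neg dd _ measurableSet_Ico]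
    rw [e1, e2]
    exact le_biSup (fun z => (∫⁻ y in Iic z, φ y) * ∫⁻ y in Ico z m, dd y)
      (mem_Iic.2 (by linarith : -x ≤ m))
  have hleft0 := half_hardy (fun x => φ (-x)) (fun x => dd (-x)) (fun x => ψ (-x))
    (hφm.comp measurable_neg) (hddm.comp measurable_neg) (hψm.comp measurable_neg)
    (fun x => hφd (-x)) hneg1 (-m) bL hbLtop hBL
  have hinner : ∀ x : ℝ, ∫⁻ y in Ioi x, ψ (-y) = ∫⁻ y in Iio (-x), ψ y := by
    intro x
    rw [← hpreIio' x, setLIntegral_comp_neg ψ (Iio (-x)) measurableSet_Iio]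
  have eL : ∫⁻ x in Ioi (-m), (∫⁻ y in Ioi x, ψ (-y)) ^ 2 * dd (-x)
      = ∫⁻ x in Iio m, (∫⁻ y in Iio x, ψ y) ^ 2 * dd x := by
    calc ∫⁻ x in Ioi (-m), (∫⁻ y in Ioi x, ψ (-y)) ^ 2 * dd (-x)
        = ∫⁻ x in Ioi (-m), (fun z => (∫⁻ y in Iio z, ψ y) ^ 2 * dd z) (-x) := by
          refine setLIntegral_congr_fun measurableSet_Ioi (fun x _ => ?_)
          simp only
          rw [hinner x]
      _ = ∫⁻ z in Iio m, (∫⁻ y in Iio z, ψ y) ^ 2 * dd z := by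
          rw [← hpreIio m]
          exact setLIntegral_comp_neg (fun z => (∫⁻ y in Iio z, ψ y) ^ 2 * dd z)
            (Iio m) measurableSet_Iio
  have eR : ∫⁻ y in Ioi (-m), ψ (-y) ^ 2 * dd (-y) = ∫⁻ y in Iio m, ψ y ^ 2 * dd y := by
    calc ∫⁻ y in Ioi (-m), ψ (-y) ^ 2 * dd (-y)
        = ∫⁻ y in (fun x : ℝ => -x) ⁻¹' (Iio m), (fun z => ψ z ^ 2 * dd z) (-y) := by
          rw [hpreIio m]
      _ = ∫⁻ z in Iio m, ψ z ^ 2 * dd z :=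
          setLIntegral_comp_neg (fun z => ψ z ^ 2 * dd z) (Iio m) measurableSet_Iio
  have hleft : ∫⁻ x in Iio m, (∫⁻ y in Iio x, ψ y) ^ 2 * dd x
      ≤ 4 * bL * ∫⁻ y in Iio m, ψ y ^ 2 * dd y := by
    rw [← eL, ← eR]
    exact hleft0
  -- measurability of the two comparison functions
  have hmono1 : Monotone (fun x : ℝ => ∫⁻ y in Iio x, ψ y) :=
    fun x y hxy => lintegral_mono_set (Iio_subset_Iio hxy)
  have hanti1 : Antitone (fun x : ℝ => ∫⁻ y in Ioi x, ψ y) :=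
    fun x y hxy => lintegral_mono_set (Ioi_subset_Ioi hxy)
  -- final assembly
  have hL : ∫⁻ x in Iio m, ENNReal.ofReal (H x ^ 2 / f x)
      ≤ 4 * bConst f m * ∫⁻ y in Iio m, ψ y ^ 2 * dd y := by
    calc ∫⁻ x in Iio m, ENNReal.ofReal (H x ^ 2 / f x)
        ≤ ∫⁻ x in Iio m, (∫⁻ y in Iio x, ψ y) ^ 2 * dd x :=
          setLIntegral_mono ((hmono1.measurable.pow_const 2).mul hddm)
            (fun x _ => hptIio x)
      _ ≤ 4 * bL * ∫⁻ y in Iio m, ψ y ^ 2 * dd y := hleft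
      _ ≤ 4 * bConst f m * ∫⁻ y in Iio m, ψ y ^ 2 * dd y := by
          apply mul_le_mul_left
          apply mul_le_mul_right
          rw [hbeq]
          exact le_max_right _ _
  have hR : ∫⁻ x in Ici m, ENNReal.ofReal (H x ^ 2 / f x)
      ≤ 4 * bConst f m * ∫⁻ y in Ioi m, ψ y ^ 2 * dd y := by
    rw [setLIntegral_congr (μ := volume) (Ioi_ae_eq_Ici (a := m)).symm]
    calc ∫⁻ x in Ioi m, ENNReal.ofReal (H x ^ 2 / f x)
        ≤ ∫⁻ x in Ioi m, (∫⁻ y in Ioi x, ψ y) ^ 2 * dd x :=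
          setLIntegral_mono ((hanti1.measurable.pow_const 2).mul hddm)
            (fun x _ => hptIoi x)
      _ ≤ 4 * bR * ∫⁻ y in Ioi m, ψ y ^ 2 * dd y := hright
      _ ≤ 4 * bConst f m * ∫⁻ y in Ioi m, ψ y ^ 2 * dd y := by
          apply mul_le_mul_left
          apply mul_le_mul_right
          rw [hbeq]
          exact le_max_left _ _
  have hRHSpt : ∀ x, ENNReal.ofReal ((f x - g x) ^ 2 / f x) = ψ x ^ 2 * dd x := by
    intro x
    rw [hψdef, hdddef]
    simp only
    rw [div_eq_mul_inv, ENNReal.ofReal_mul (sq_nonneg _),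
      ← ENNReal.ofReal_pow (abs_nonneg _), sq_abs]
  calc ∫⁻ x, ENNReal.ofReal
        (((∫ y in Set.Iic x, f y) - ∫ y in Set.Iic x, g y) ^ 2 / f x)
      = (∫⁻ x in Iio m, ENNReal.ofReal (H x ^ 2 / f x))
        + ∫⁻ x in Ici m, ENNReal.ofReal (H x ^ 2 / f x) := by
        rw [← compl_Iio, lintegral_add_compl _ measurableSet_Iio]
    _ ≤ 4 * bConst f m * (∫⁻ y in Iio m, ψ y ^ 2 * dd y)
        + 4 * bConst f m * ∫⁻ y in Ioi m, ψ y ^ 2 * dd y := add_le_add hL hR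
    _ = 4 * bConst f m * ((∫⁻ y in Iio m, ψ y ^ 2 * dd y)
        + ∫⁻ y in Ioi m, ψ y ^ 2 * dd y) := (mul_add _ _ _).symm
    _ ≤ 4 * bConst f m * ∫⁻ y, ψ y ^ 2 * dd y := by
        apply mul_le_mul_right
        calc (∫⁻ y in Iio m, ψ y ^ 2 * dd y) + ∫⁻ y in Ioi m, ψ y ^ 2 * dd y
            ≤ (∫⁻ y in Iio m, ψ y ^ 2 * dd y) + ∫⁻ y in Ici m, ψ y ^ 2 * dd y :=
              add_le_add_right (lintegral_mono_set Ioi_subset_Ici_self) _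
          _ = ∫⁻ y, ψ y ^ 2 * dd y := by
              rw [← compl_Iio, lintegral_add_compl _ measurableSet_Iio]
    _ = 4 * bConst f m * ∫⁻ x, ENNReal.ofReal ((f x - g x) ^ 2 / f x) := by
        rw [lintegral_congr hRHSpt]
end

section
/- For any two probability measures μ and ν on ℝ with cumulative distribution functions F and G respectively, W₂²(μ,ν) = ∫_ℝ ∫_ℝ [ (F(min(x,y)) − G(max(x,y)))⁺ + (G(min(x,y)) − F(max(x,y)))⁺ ] dy dx, where a⁺ = max(a,0). -/
open MeasureTheory ENNReal

open Set ProbabilityTheory Filter Topology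

set_option linter.unusedSectionVars false

open MeasureTheory ENNReal Set ProbabilityTheory Filter Topology

noncomputable def qf (μ : Measure ℝ) (u : ℝ) : ℝ := sInf {x | u ≤ cdf μ x}

section qf
variable {μ : Measure ℝ} [IsProbabilityMeasure μ] {u s : ℝ}

lemma qf_set_nonempty (hu : u < 1) : {x | u ≤ cdf μ x}.Nonempty :=
  ((tendsto_cdf_atTop (μ := μ)).eventually (eventually_ge_nhds hu)).exists

lemma qf_set_bddBelow (hu : 0 < u) : BddBelow {x | u ≤ cdf μ x} := by
  obtain ⟨x₀, hx₀⟩ := ((tendsto_cdf_atBot (μ := μ)).eventually (eventually_lt_nhds hu)).exists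
  exact ⟨x₀, fun y hy => le_of_not_gt fun h =>
    absurd (hy.trans ((monotone_cdf (μ := μ)) h.le)) (not_le.2 hx₀)⟩

lemma le_cdf_qf (hu0 : 0 < u) (hu1 : u < 1) : u ≤ cdf μ (qf μ u) := by
  have hne := qf_set_nonempty (μ := μ) hu1
  have hbd := qf_set_bddBelow (μ := μ) hu0
  have hstep : ∀ x, qf μ u < x → u ≤ cdf μ x := by
    intro x hx
    obtain ⟨y, hy, hyx⟩ := (csInf_lt_iff hbd hne).mp hx
    exact hy.trans ((monotone_cdf (μ := μ)) hyx.le)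
  have ht : Tendsto (cdf μ) (𝓝[>] (qf μ u)) (𝓝 (cdf μ (qf μ u))) :=
    ((cdf μ).right_continuous _).mono_left (nhdsWithin_mono _ Ioi_subset_Ici_self)
  refine ge_of_tendsto ht ?_
  filter_upwards [self_mem_nhdsWithin] with x hx using hstep x hx

lemma qf_le_iff (hu0 : 0 < u) (hu1 : u < 1) : qf μ u ≤ s ↔ u ≤ cdf μ s := by
  constructor
  · intro h
    exact (le_cdf_qf hu0 hu1).trans ((monotone_cdf (μ := μ)) h)
  · intro h
    exact csInf_le (qf_set_bddBelow hu0) h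

lemma qf_monotoneOn : MonotoneOn (qf μ) (Ioo (0:ℝ) 1) := by
  intro u hu v hv huv
  rw [qf_le_iff hu.1 hu.2]
  exact huv.trans (le_cdf_qf hv.1 hv.2)

lemma qf_aemeasurable : AEMeasurable (qf μ) (volume.restrict (Ioo (0:ℝ) 1)) :=
  aemeasurable_restrict_of_monotoneOn measurableSet_Ioo qf_monotoneOn

lemma map_qf : Measure.map (qf μ) (volume.restrict (Ioo (0:ℝ) 1)) = μ := by
  have hprob : IsProbabilityMeasure (volume.restrict (Ioo (0:ℝ) 1)) := by
    constructor
    simp [Real.volume_Ioo]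
  have : IsProbabilityMeasure (Measure.map (qf μ) (volume.restrict (Ioo (0:ℝ) 1))) :=
    Measure.isProbabilityMeasure_map qf_aemeasurable
  refine Measure.ext_of_Iic _ _ fun s => ?_
  rw [Measure.map_apply_of_aemeasurable qf_aemeasurable measurableSet_Iic]
  have hset : Ioo (0:ℝ) 1 ∩ (qf μ ⁻¹' Iic s) = Ioo (0:ℝ) 1 ∩ Iic (cdf μ s) := by
    ext u
    simp only [mem_inter_iff, mem_Ioo, mem_preimage, mem_Iic, and_congr_right_iff]
    intro hu
    exact qf_le_iff hu.1 hu.2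
  rw [Measure.restrict_apply₀' (measurableSet_Ioo.nullMeasurableSet), inter_comm, hset]
  have h0 : (0:ℝ) ≤ cdf μ s := cdf_nonneg μ s
  have h1 : cdf μ s ≤ 1 := cdf_le_one μ s
  have : volume (Ioo (0:ℝ) 1 ∩ Iic (cdf μ s)) = ENNReal.ofReal (cdf μ s) := by
    apply le_antisymm
    · calc volume (Ioo (0:ℝ) 1 ∩ Iic (cdf μ s)) ≤ volume (Ioc 0 (cdf μ s)) := by
            apply measure_mono; rintro u ⟨⟨h0u, _⟩, hus⟩; exact ⟨h0u, hus⟩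
        _ = ENNReal.ofReal (cdf μ s) := by rw [Real.volume_Ioc, sub_zero]
    · calc ENNReal.ofReal (cdf μ s) = volume (Ioo 0 (cdf μ s)) := by
            rw [Real.volume_Ioo, sub_zero]
        _ ≤ volume (Ioo (0:ℝ) 1 ∩ Iic (cdf μ s)) := by
            apply measure_mono; rintro u ⟨h0u, hu⟩
            exact ⟨⟨h0u, lt_of_lt_of_le hu h1⟩, hu.le⟩
  rw [this, ofReal_cdf]


open MeasureTheory ENNReal Set ProbabilityTheory Filter Topology

lemma interval_decomp {a b s t : ℝ} (hst : s ≤ t) :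
    (min a b ≤ s ∧ t < max a b) ↔ ((a ≤ s ∧ t < b) ∨ (b ≤ s ∧ t < a)) := by
  simp only [min_le_iff, lt_max_iff]
  constructor
  · rintro ⟨h1 | h1, h2 | h2⟩
    · exact absurd (h1.trans hst) (not_le.2 h2)
    · exact Or.inl ⟨h1, h2⟩
    · exact Or.inr ⟨h1, h2⟩
    · exact absurd (h1.trans hst) (not_le.2 h2)
  · rintro (⟨h1, h2⟩ | ⟨h1, h2⟩)
    · exact ⟨Or.inl h1, Or.inr h2⟩
    · exact ⟨Or.inr h1, Or.inl h2⟩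

lemma cost_eq (γ : Measure (ℝ × ℝ)) [IsFiniteMeasure γ] :
    ∫⁻ p, ENNReal.ofReal (‖p.1 - p.2‖ ^ 2) ∂γ
      = ∫⁻ x, ∫⁻ y, (γ {p : ℝ × ℝ | p.1 ≤ min x y ∧ max x y < p.2}
          + γ {p : ℝ × ℝ | p.2 ≤ min x y ∧ max x y < p.1}) := by
  set S : Set ((ℝ × ℝ) × ℝ × ℝ) :=
    {q | (min q.1.1 q.1.2 ≤ q.2.1 ∧ q.2.1 < max q.1.1 q.1.2) ∧
         (min q.1.1 q.1.2 ≤ q.2.2 ∧ q.2.2 < max q.1.1 q.1.2)} with hSdef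
  have hS : MeasurableSet S := by
    apply MeasurableSet.inter
    · exact (measurableSet_le (measurable_fst.fst.min measurable_fst.snd) measurable_snd.fst).inter
        (measurableSet_lt measurable_snd.fst (measurable_fst.fst.max measurable_fst.snd))
    · exact (measurableSet_le (measurable_fst.fst.min measurable_fst.snd) measurable_snd.snd).inter
        (measurableSet_lt measurable_snd.snd (measurable_fst.fst.max measurable_fst.snd))
  have h1 : ∀ p : ℝ × ℝ, ENNReal.ofReal (‖p.1 - p.2‖ ^ 2)
      = (volume.prod volume) (Prod.mk p ⁻¹' S) := by
    intro p
    have hpre : Prod.mk p ⁻¹' S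
        = (Ico (min p.1 p.2) (max p.1 p.2)) ×ˢ (Ico (min p.1 p.2) (max p.1 p.2)) := by
      ext z
      simp only [hSdef, mem_preimage, mem_setOf_eq, mem_prod, mem_Ico]
    rw [hpre, Measure.prod_prod, Real.volume_Ico, Real.norm_eq_abs, abs_sub_comm,
      ← max_sub_min_eq_abs, ← ENNReal.ofReal_mul (by simp [sub_nonneg, min_le_max]), ← sq]
  calc ∫⁻ p, ENNReal.ofReal (‖p.1 - p.2‖ ^ 2) ∂γ
      = ∫⁻ p, (volume.prod volume) (Prod.mk p ⁻¹' S) ∂γ := lintegral_congr h1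
    _ = (γ.prod (volume.prod volume)) S := (Measure.prod_apply hS).symm
    _ = ∫⁻ z, γ ((fun p => (p, z)) ⁻¹' S) ∂(volume.prod volume) := Measure.prod_apply_symm hS
    _ = ∫⁻ x, ∫⁻ y, γ ((fun p => (p, (x, y))) ⁻¹' S) := by
        rw [lintegral_prod _ (measurable_measure_prodMk_right hS).aemeasurable]
    _ = _ := by
        refine lintegral_congr fun x => lintegral_congr fun y => ?_
        have hsets : (fun p => (p, (x, y))) ⁻¹' S
            = {p : ℝ × ℝ | p.1 ≤ min x y ∧ max x y < p.2}
              ∪ {p : ℝ × ℝ | p.2 ≤ min x y ∧ max x y < p.1} := by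
          ext p
          simp only [hSdef, mem_preimage, mem_setOf_eq, mem_union]
          rw [show ((min p.1 p.2 ≤ x ∧ x < max p.1 p.2) ∧ (min p.1 p.2 ≤ y ∧ y < max p.1 p.2))
              ↔ (min p.1 p.2 ≤ min x y ∧ max x y < max p.1 p.2) by
            constructor
            · rintro ⟨⟨h1, h2⟩, h3, h4⟩; exact ⟨le_min h1 h3, max_lt h2 h4⟩
            · rintro ⟨h1, h2⟩
              exact ⟨⟨h1.trans (min_le_left _ _), lt_of_le_of_lt (le_max_left _ _) h2⟩,
                h1.trans (min_le_right _ _), lt_of_le_of_lt (le_max_right _ _) h2⟩]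
          exact interval_decomp min_le_max
        rw [hsets, measure_union ?_ ?_]
        · rw [Set.disjoint_left]
          rintro p ⟨h1, h2⟩ ⟨h3, h4⟩
          exact absurd ((h1.trans min_le_max).trans_lt h4) (lt_irrefl _)
        · exact (measurableSet_le measurable_snd (measurable_const.min measurable_const)).inter
            (measurableSet_lt measurable_const measurable_fst)

section main
variable (μ ν : Measure ℝ) [IsProbabilityMeasure μ] [IsProbabilityMeasure ν]

variable (μ ν : Measure ℝ) [IsProbabilityMeasure μ] [IsProbabilityMeasure ν]

lemma coupling_lb_fst (γ : Measure (ℝ × ℝ)) [IsProbabilityMeasure γ]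
    (hfst : γ.map Prod.fst = μ) (hsnd : γ.map Prod.snd = ν) (s t : ℝ) :
    ENNReal.ofReal ((μ (Iic s)).toReal - (ν (Iic t)).toReal)
      ≤ γ {p : ℝ × ℝ | p.1 ≤ s ∧ t < p.2} := by
  have hA : γ {p : ℝ × ℝ | p.1 ≤ s} = μ (Iic s) := by
    rw [← hfst, Measure.map_apply measurable_fst measurableSet_Iic]; rfl
  have hB : γ {p : ℝ × ℝ | p.2 ≤ t} = ν (Iic t) := by
    rw [← hsnd, Measure.map_apply measurable_snd measurableSet_Iic]; rfl
  have hsplit : μ (Iic s) ≤ γ {p : ℝ × ℝ | p.1 ≤ s ∧ t < p.2} + ν (Iic t) := by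
    rw [← hA, ← hB]
    refine le_trans (measure_mono ?_) (measure_union_le _ _)
    intro p hp
    by_cases h : p.2 ≤ t
    · exact Or.inr h
    · exact Or.inl ⟨hp, not_le.1 h⟩
  rw [ENNReal.ofReal_sub _ ENNReal.toReal_nonneg, ENNReal.ofReal_toReal (measure_ne_top μ _),
    ENNReal.ofReal_toReal (measure_ne_top ν _)]
  exact tsub_le_iff_right.2 hsplit

lemma coupling_lb_snd (γ : Measure (ℝ × ℝ)) [IsProbabilityMeasure γ]
    (hfst : γ.map Prod.fst = μ) (hsnd : γ.map Prod.snd = ν) (s t : ℝ) :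
    ENNReal.ofReal ((ν (Iic s)).toReal - (μ (Iic t)).toReal)
      ≤ γ {p : ℝ × ℝ | p.2 ≤ s ∧ t < p.1} := by
  have hA : γ {p : ℝ × ℝ | p.2 ≤ s} = ν (Iic s) := by
    rw [← hsnd, Measure.map_apply measurable_snd measurableSet_Iic]; rfl
  have hB : γ {p : ℝ × ℝ | p.1 ≤ t} = μ (Iic t) := by
    rw [← hfst, Measure.map_apply measurable_fst measurableSet_Iic]; rfl
  have hsplit : ν (Iic s) ≤ γ {p : ℝ × ℝ | p.2 ≤ s ∧ t < p.1} + μ (Iic t) := by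
    rw [← hA, ← hB]
    refine le_trans (measure_mono ?_) (measure_union_le _ _)
    intro p hp
    by_cases h : p.1 ≤ t
    · exact Or.inr h
    · exact Or.inl ⟨hp, not_le.1 h⟩
  rw [ENNReal.ofReal_sub _ ENNReal.toReal_nonneg, ENNReal.ofReal_toReal (measure_ne_top ν _),
    ENNReal.ofReal_toReal (measure_ne_top μ _)]
  exact tsub_le_iff_right.2 hsplit

lemma vol_aux (s t : ℝ) :
    volume ({u : ℝ | qf μ u ≤ s ∧ t < qf ν u} ∩ Ioo (0:ℝ) 1)
      = ENNReal.ofReal (cdf μ s - cdf ν t) := by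
  apply le_antisymm
  · refine le_trans (measure_mono ?_) (le_of_eq (Real.volume_Ioc (a := cdf ν t) (b := cdf μ s)))
    rintro u ⟨⟨h1, h2⟩, hu⟩
    refine ⟨?_, (qf_le_iff hu.1 hu.2).1 h1⟩
    by_contra h
    exact absurd ((qf_le_iff hu.1 hu.2).2 (not_lt.1 h)) (not_le.2 h2)
  · rw [← Real.volume_Ioo (a := cdf ν t) (b := cdf μ s)]
    refine measure_mono ?_
    rintro u ⟨h1, h2⟩
    have hu : u ∈ Ioo (0:ℝ) 1 :=
      ⟨(cdf_nonneg ν t).trans_lt h1, h2.trans_le (cdf_le_one μ s)⟩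
    refine ⟨⟨(qf_le_iff hu.1 hu.2).2 h2.le, ?_⟩, hu⟩
    by_contra h
    exact absurd ((qf_le_iff hu.1 hu.2).1 (not_lt.1 h)) (not_le.2 h1)

noncomputable def mc : Measure (ℝ × ℝ) :=
  Measure.map (fun u => (qf μ u, qf ν u)) (volume.restrict (Ioo (0:ℝ) 1))

lemma U_prob : IsProbabilityMeasure (volume.restrict (Ioo (0:ℝ) 1)) := by
  constructor
  simp [Real.volume_Ioo]

lemma pair_aemeasurable :
    AEMeasurable (fun u => (qf μ u, qf ν u)) (volume.restrict (Ioo (0:ℝ) 1)) :=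
  qf_aemeasurable.prodMk qf_aemeasurable

instance mc_prob : IsProbabilityMeasure (mc μ ν) := by
  have := U_prob
  exact Measure.isProbabilityMeasure_map (pair_aemeasurable μ ν)

lemma mc_fst : (mc μ ν).map Prod.fst = μ := by
  rw [mc, AEMeasurable.map_map_of_aemeasurable measurable_fst.aemeasurable (pair_aemeasurable μ ν)]
  exact map_qf

lemma mc_snd : (mc μ ν).map Prod.snd = ν := by
  rw [mc, AEMeasurable.map_map_of_aemeasurable measurable_snd.aemeasurable (pair_aemeasurable μ ν)]
  exact map_qf

lemma mc_measurable_set (s t : ℝ) : MeasurableSet {p : ℝ × ℝ | p.1 ≤ s ∧ t < p.2} :=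
  (measurableSet_le measurable_fst measurable_const).inter
    (measurableSet_lt measurable_const measurable_snd)

lemma mc_A (s t : ℝ) :
    mc μ ν {p : ℝ × ℝ | p.1 ≤ s ∧ t < p.2}
      = ENNReal.ofReal ((μ (Iic s)).toReal - (ν (Iic t)).toReal) := by
  rw [mc, Measure.map_apply_of_aemeasurable (pair_aemeasurable μ ν) (mc_measurable_set s t),
    Measure.restrict_apply₀' measurableSet_Ioo.nullMeasurableSet]
  have : (fun u => (qf μ u, qf ν u)) ⁻¹' {p : ℝ × ℝ | p.1 ≤ s ∧ t < p.2}
      = {u : ℝ | qf μ u ≤ s ∧ t < qf ν u} := rfl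
  rw [this, vol_aux, cdf_eq_real, cdf_eq_real, measureReal_def, measureReal_def]

lemma mc_measurable_set' (s t : ℝ) : MeasurableSet {p : ℝ × ℝ | p.2 ≤ s ∧ t < p.1} :=
  (measurableSet_le measurable_snd measurable_const).inter
    (measurableSet_lt measurable_const measurable_fst)

lemma mc_B (s t : ℝ) :
    mc μ ν {p : ℝ × ℝ | p.2 ≤ s ∧ t < p.1}
      = ENNReal.ofReal ((ν (Iic s)).toReal - (μ (Iic t)).toReal) := by
  rw [mc, Measure.map_apply_of_aemeasurable (pair_aemeasurable μ ν) (mc_measurable_set' s t),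
    Measure.restrict_apply₀' measurableSet_Ioo.nullMeasurableSet]
  have : (fun u => (qf μ u, qf ν u)) ⁻¹' {p : ℝ × ℝ | p.2 ≤ s ∧ t < p.1}
      = {u : ℝ | qf ν u ≤ s ∧ t < qf μ u} := rfl
  rw [this, vol_aux, cdf_eq_real, cdf_eq_real, measureReal_def, measureReal_def]


end main

-- STATEMENT 6: W₂²(μ,ν) = ∫∫ [(F(min(x,y)) − G(max(x,y)))⁺ + (G(min(x,y)) − F(max(x,y)))⁺] dy dx,
-- where F, G are the c.d.f.s of μ, ν (positive part given by ENNReal.ofReal).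
theorem w2sq_eq_double_integral (μ ν : Measure ℝ)
    [IsProbabilityMeasure μ] [IsProbabilityMeasure ν] :
    W2sq μ ν = ∫⁻ x, ∫⁻ y,
      (ENNReal.ofReal ((μ (Set.Iic (min x y))).toReal - (ν (Set.Iic (max x y))).toReal) +
        ENNReal.ofReal ((ν (Set.Iic (min x y))).toReal - (μ (Set.Iic (max x y))).toReal)) := by
  apply le_antisymm
  · have hcost : ∫⁻ p, ENNReal.ofReal (‖p.1 - p.2‖ ^ 2) ∂(mc μ ν)
        = ∫⁻ x, ∫⁻ y,
          (ENNReal.ofReal ((μ (Set.Iic (min x y))).toReal - (ν (Set.Iic (max x y))).toReal) +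
            ENNReal.ofReal ((ν (Set.Iic (min x y))).toReal - (μ (Set.Iic (max x y))).toReal)) := by
      rw [cost_eq (mc μ ν)]
      refine lintegral_congr fun x => lintegral_congr fun y => ?_
      rw [mc_A, mc_B]
    rw [← hcost, W2sq]
    refine iInf_le_of_le (mc μ ν) ?_
    refine iInf_le_of_le (mc_prob μ ν) ?_
    refine iInf_le_of_le (mc_fst μ ν) ?_
    exact iInf_le _ (mc_snd μ ν)
  · rw [W2sq]
    refine le_iInf fun γ => le_iInf fun hγ => le_iInf fun hfst => le_iInf fun hsnd => ?_
    haveI := hγ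
    rw [cost_eq γ]
    exact lintegral_mono fun x => lintegral_mono fun y =>
      add_le_add (coupling_lb_fst μ ν γ hfst hsnd _ _) (coupling_lb_snd μ ν γ hfst hsnd _ _)
end qf
end

section
/- For any two probability measures μ and ν on ℝ with cumulative distribution functions F and G respectively, W₂²(μ,ν) = 2 ∫_ℝ ∫_x^{+∞} [ (F(x) − G(y))⁺ + (G(x) − F(y))⁺ ] dy dx, where a⁺ = max(a,0). -/
set_option linter.unusedSectionVars false
set_option maxHeartbeats 800000

open MeasureTheory ENNReal Set Filter ProbabilityTheory
open scoped Topology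

namespace W2aux

variable {μ ν : Measure ℝ} [IsProbabilityMeasure μ] [IsProbabilityMeasure ν]

noncomputable def qf (μ : Measure ℝ) (t : ℝ) : ℝ := sInf {x | t ≤ cdf μ x}

variable {μ ν : Measure ℝ} [IsProbabilityMeasure μ] [IsProbabilityMeasure ν]

lemma qf_nonempty {t : ℝ} (ht1 : t < 1) : {x | t ≤ cdf μ x}.Nonempty :=
  ((tendsto_cdf_atTop μ).eventually (eventually_ge_nhds ht1)).exists

lemma qf_bddBelow {t : ℝ} (ht : 0 < t) : BddBelow {x | t ≤ cdf μ x} := by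
  obtain ⟨x₀, hx₀⟩ := ((tendsto_cdf_atBot μ).eventually (eventually_lt_nhds ht)).exists
  refine ⟨x₀, fun z hz => ?_⟩
  by_contra hlt
  push_neg at hlt
  exact absurd (hz.trans (monotone_cdf μ hlt.le)) (not_le.mpr hx₀)

lemma le_cdf_qf {t : ℝ} (ht : 0 < t) (ht1 : t < 1) : t ≤ cdf μ (qf μ t) := by
  have hb := qf_bddBelow (μ := μ) ht
  have hne := qf_nonempty (μ := μ) ht1
  have hc : ContinuousWithinAt (cdf μ) (Ioi (qf μ t)) (qf μ t) :=
    ((cdf μ).right_continuous _).mono Ioi_subset_Ici_self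
  refine ge_of_tendsto hc ?_
  filter_upwards [self_mem_nhdsWithin] with y hy
  obtain ⟨s, hs, hsy⟩ := (csInf_lt_iff hb hne).mp hy
  exact hs.trans (monotone_cdf μ hsy.le)

lemma qf_le_iff {t x : ℝ} (ht : 0 < t) (ht1 : t < 1) :
    qf μ t ≤ x ↔ t ≤ cdf μ x :=
  ⟨fun h => (le_cdf_qf ht ht1).trans (monotone_cdf μ h),
   fun h => csInf_le (qf_bddBelow ht) h⟩

lemma measurable_indq : Measurable ((Ioo (0:ℝ) 1).indicator (qf μ)) := by
  apply measurable_of_Iic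
  intro x
  by_cases hx : (0:ℝ) ≤ x
  · have : (Ioo (0:ℝ) 1).indicator (qf μ) ⁻¹' Iic x
        = (Ioo 0 1 ∩ Iic (cdf μ x)) ∪ (Ioo (0:ℝ) 1)ᶜ := by
      ext t
      by_cases ht : t ∈ Ioo (0:ℝ) 1
      · simp only [mem_preimage, mem_Iic, indicator_of_mem ht, mem_union, mem_inter_iff, ht,
          true_and, mem_compl_iff, not_true_eq_false, or_false]
        exact qf_le_iff ht.1 ht.2
      · simp [indicator_of_notMem ht, ht, hx]
    rw [this]
    exact ((measurableSet_Ioo.inter measurableSet_Iic).union measurableSet_Ioo.compl)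
  · have : (Ioo (0:ℝ) 1).indicator (qf μ) ⁻¹' Iic x = Ioo 0 1 ∩ Iic (cdf μ x) := by
      ext t
      by_cases ht : t ∈ Ioo (0:ℝ) 1
      · simp only [mem_preimage, mem_Iic, indicator_of_mem ht, mem_inter_iff, ht, true_and]
        exact qf_le_iff ht.1 ht.2
      · simp [indicator_of_notMem ht, ht, hx]
    rw [this]
    exact measurableSet_Ioo.inter measurableSet_Iic

lemma aem_qf : AEMeasurable (qf μ) (volume.restrict (Ioo 0 1)) :=
  ⟨(Ioo (0:ℝ) 1).indicator (qf μ), measurable_indq, by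
    filter_upwards [ae_restrict_mem measurableSet_Ioo] with t ht
    simp [indicator_of_mem ht]⟩

instance : IsProbabilityMeasure (volume.restrict (Ioo (0:ℝ) 1)) :=
  ⟨by simp [Real.volume_Ioo]⟩

lemma vol_between {s : Set ℝ} {a b : ℝ} (h1 : Ioo a b ⊆ s) (h2 : s ⊆ Ioc a b) :
    volume s = ENNReal.ofReal (b - a) := by
  refine le_antisymm ((measure_mono h2).trans_eq Real.volume_Ioc) ?_
  calc ENNReal.ofReal (b - a) = volume (Ioo a b) := Real.volume_Ioo.symm
    _ ≤ volume s := measure_mono h1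

lemma map_qf : (volume.restrict (Ioo 0 1)).map (qf μ) = μ := by
  have hprob : IsProbabilityMeasure ((volume.restrict (Ioo 0 1)).map (qf μ)) :=
    Measure.isProbabilityMeasure_map aem_qf
  refine Measure.ext_of_Iic _ _ (fun x => ?_)
  rw [Measure.map_apply_of_aemeasurable aem_qf measurableSet_Iic,
      Measure.restrict_apply' measurableSet_Ioo]
  have hsub1 : Ioo 0 (cdf μ x) ⊆ qf μ ⁻¹' Iic x ∩ Ioo 0 1 := by
    intro t ht
    have ht1 : t < 1 := ht.2.trans_le (cdf_le_one μ x)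
    exact ⟨(qf_le_iff ht.1 ht1).mpr ht.2.le, ht.1, ht1⟩
  have hsub2 : qf μ ⁻¹' Iic x ∩ Ioo 0 1 ⊆ Ioc 0 (cdf μ x) := by
    rintro t ⟨htq, ht0, ht1⟩
    exact ⟨ht0, (qf_le_iff ht0 ht1).mp htq⟩
  rw [vol_between hsub1 hsub2, sub_zero, ofReal_cdf]


noncomputable def cpl (μ ν : Measure ℝ) : Measure (ℝ × ℝ) :=
  (volume.restrict (Ioo 0 1)).map (fun t => (qf μ t, qf ν t))

lemma aem_pair : AEMeasurable (fun t => (qf μ t, qf ν t)) (volume.restrict (Ioo 0 1)) :=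
  aem_qf.prodMk aem_qf

instance : IsProbabilityMeasure (cpl μ ν) := Measure.isProbabilityMeasure_map aem_pair

lemma cpl_fst : (cpl μ ν).map Prod.fst = μ := by
  rw [cpl, AEMeasurable.map_map_of_aemeasurable measurable_fst.aemeasurable aem_pair]
  exact map_qf

lemma cpl_snd : (cpl μ ν).map Prod.snd = ν := by
  rw [cpl, AEMeasurable.map_map_of_aemeasurable measurable_snd.aemeasurable aem_pair]
  exact map_qf

lemma cpl_apply (x y : ℝ) :
    cpl μ ν {p : ℝ × ℝ | p.1 ≤ x ∧ y < p.2} = ENNReal.ofReal (cdf μ x - cdf ν y) := by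
  have hs : MeasurableSet {p : ℝ × ℝ | p.1 ≤ x ∧ y < p.2} := by
    simp only [setOf_and]
    exact (measurableSet_Iic.preimage measurable_fst).inter
      (measurableSet_Ioi.preimage measurable_snd)
  rw [cpl, Measure.map_apply_of_aemeasurable aem_pair hs,
      Measure.restrict_apply' measurableSet_Ioo]
  refine vol_between ?_ ?_
  · intro t ht
    have h0 : 0 < t := (cdf_nonneg ν y).trans_lt ht.1
    have h1 : t < 1 := ht.2.trans_le (cdf_le_one μ x)
    refine ⟨⟨(qf_le_iff h0 h1).mpr ht.2.le, ?_⟩, h0, h1⟩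
    by_contra hy
    push_neg at hy
    exact absurd ((qf_le_iff h0 h1).mp hy) (not_le.mpr ht.1)
  · rintro t ⟨⟨hqx, hqy⟩, ht0, ht1⟩
    refine ⟨?_, (qf_le_iff ht0 ht1).mp hqx⟩
    by_contra hle
    push_neg at hle
    exact absurd ((qf_le_iff ht0 ht1).mpr hle) (not_le.mpr hqy)

lemma cpl_apply' (x y : ℝ) :
    cpl μ ν {p : ℝ × ℝ | p.2 ≤ x ∧ y < p.1} = ENNReal.ofReal (cdf ν x - cdf μ y) := by
  have hs : MeasurableSet {p : ℝ × ℝ | p.2 ≤ x ∧ y < p.1} := by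
    simp only [setOf_and]
    exact (measurableSet_Iic.preimage measurable_snd).inter
      (measurableSet_Ioi.preimage measurable_fst)
  rw [cpl, Measure.map_apply_of_aemeasurable aem_pair hs,
      Measure.restrict_apply' measurableSet_Ioo]
  refine vol_between ?_ ?_
  · intro t ht
    have h0 : 0 < t := (cdf_nonneg μ y).trans_lt ht.1
    have h1 : t < 1 := ht.2.trans_le (cdf_le_one ν x)
    refine ⟨⟨(qf_le_iff h0 h1).mpr ht.2.le, ?_⟩, h0, h1⟩
    by_contra hy
    push_neg at hy
    exact absurd ((qf_le_iff h0 h1).mp hy) (not_le.mpr ht.1)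
  · rintro t ⟨⟨hqx, hqy⟩, ht0, ht1⟩
    refine ⟨?_, (qf_le_iff ht0 ht1).mp hqx⟩
    by_contra hle
    push_neg at hle
    exact absurd ((qf_le_iff ht0 ht1).mpr hle) (not_le.mpr hqy)


lemma lin_aux {a b : ℝ} (hab : a ≤ b) :
    ∫⁻ x in Ici a, ENNReal.ofReal (b - x) = ENNReal.ofReal ((b - a) ^ 2 / 2) := by
  have hdisj : Disjoint (Icc a b) (Ioi b) :=
    disjoint_left.mpr fun t ht ht' => absurd ht.2 (not_le.mpr ht')
  rw [← Icc_union_Ioi_eq_Ici hab, lintegral_union measurableSet_Ioi hdisj]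
  have h0 : ∫⁻ x in Ioi b, ENNReal.ofReal (b - x) = 0 := by
    rw [setLIntegral_congr_fun measurableSet_Ioi
      (fun x (hx : b < x) => ENNReal.ofReal_of_nonpos (by linarith))]
    simp
  rw [h0, add_zero]
  have hint : IntegrableOn (fun x => b - x) (Icc a b) :=
    (continuous_const.sub continuous_id).integrableOn_Icc
  have hnn : 0 ≤ᵐ[volume.restrict (Icc a b)] fun x => b - x :=
    (ae_restrict_iff' measurableSet_Icc).mpr (ae_of_all _ fun x hx => show (0:ℝ) ≤ b - x from sub_nonneg.mpr hx.2)
  rw [← ofReal_integral_eq_lintegral_ofReal hint hnn]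
  congr 1
  rw [integral_Icc_eq_integral_Ioc, ← intervalIntegral.integral_of_le hab,
    intervalIntegral.integral_sub intervalIntegrable_const intervalIntegral.intervalIntegrable_id,
    intervalIntegral.integral_const, integral_id, smul_eq_mul]
  ring

lemma tri_meas (a b : ℝ) :
    MeasurableSet {q : ℝ × ℝ | a ≤ q.1 ∧ q.1 < q.2 ∧ q.2 < b} := by
  simp only [setOf_and]
  exact (measurableSet_le measurable_const measurable_fst).inter
    ((measurableSet_lt measurable_fst measurable_snd).inter
      (measurableSet_lt measurable_snd measurable_const))

lemma tri {a b : ℝ} (hab : a ≤ b) :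
    (volume.prod volume) {q : ℝ × ℝ | a ≤ q.1 ∧ q.1 < q.2 ∧ q.2 < b}
      = ENNReal.ofReal ((b - a) ^ 2 / 2) := by
  rw [Measure.prod_apply (tri_meas a b)]
  have hsec : ∀ x : ℝ, volume (Prod.mk x ⁻¹' {q : ℝ × ℝ | a ≤ q.1 ∧ q.1 < q.2 ∧ q.2 < b})
      = (Ici a).indicator (fun x => ENNReal.ofReal (b - x)) x := by
    intro x
    by_cases hx : a ≤ x
    · have hpre : Prod.mk x ⁻¹' {q : ℝ × ℝ | a ≤ q.1 ∧ q.1 < q.2 ∧ q.2 < b} = Ioo x b := by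
        ext y; simp [hx, mem_Ioo]
      rw [hpre, Real.volume_Ioo, indicator_of_mem (show x ∈ Ici a from hx)]
    · have hpre : Prod.mk x ⁻¹' {q : ℝ × ℝ | a ≤ q.1 ∧ q.1 < q.2 ∧ q.2 < b} = ∅ := by
        ext y; simp [hx]
      rw [hpre, measure_empty, indicator_of_notMem (show x ∉ Ici a from hx)]
  simp_rw [hsec]
  rw [lintegral_indicator measurableSet_Ici, lin_aux hab]

lemma ptwise (a b : ℝ) :
    (volume.prod volume) {q : ℝ × ℝ | a ≤ q.1 ∧ q.1 < q.2 ∧ q.2 < b}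
      + (volume.prod volume) {q : ℝ × ℝ | b ≤ q.1 ∧ q.1 < q.2 ∧ q.2 < a}
      = ENNReal.ofReal ((a - b) ^ 2 / 2) := by
  rcases le_total a b with hab | hab
  · have hempty : {q : ℝ × ℝ | b ≤ q.1 ∧ q.1 < q.2 ∧ q.2 < a} = ∅ := by
      ext q
      simp only [mem_setOf_eq, mem_empty_iff_false, iff_false, not_and]
      intro h1 h2 h3
      linarith
    rw [tri hab, hempty, measure_empty, add_zero]
    congr 1; ring
  · have hempty : {q : ℝ × ℝ | a ≤ q.1 ∧ q.1 < q.2 ∧ q.2 < b} = ∅ := by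
      ext q
      simp only [mem_setOf_eq, mem_empty_iff_false, iff_false, not_and]
      intro h1 h2 h3
      linarith
    rw [tri hab, hempty, measure_empty, zero_add]

lemma two_ofReal_half (c : ℝ) : 2 * ENNReal.ofReal (c / 2) = ENNReal.ofReal c := by
  rw [← ENNReal.ofReal_ofNat 2, ← ENNReal.ofReal_mul (by norm_num : (0:ℝ) ≤ 2)]
  congr 1
  ring

/-- The master expansion of the quadratic cost of a coupling. -/
lemma cost_eq (γ : Measure (ℝ × ℝ)) [IsProbabilityMeasure γ] :
    ∫⁻ p, ENNReal.ofReal (‖p.1 - p.2‖ ^ 2) ∂γ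
      = 2 * ∫⁻ x, ∫⁻ y in Ioi x,
          (γ {p : ℝ × ℝ | p.1 ≤ x ∧ y < p.2} + γ {p : ℝ × ℝ | p.2 ≤ x ∧ y < p.1}) := by
  set A : Set ((ℝ × ℝ) × (ℝ × ℝ)) :=
    {z | z.1.1 ≤ z.2.1 ∧ z.2.1 < z.2.2 ∧ z.2.2 < z.1.2} with hAdef
  set B : Set ((ℝ × ℝ) × (ℝ × ℝ)) :=
    {z | z.1.2 ≤ z.2.1 ∧ z.2.1 < z.2.2 ∧ z.2.2 < z.1.1} with hBdef
  have hA : MeasurableSet A := by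
    simp only [hAdef, setOf_and]
    exact (measurableSet_le (measurable_fst.comp measurable_fst)
        (measurable_fst.comp measurable_snd)).inter
      ((measurableSet_lt (measurable_fst.comp measurable_snd)
        (measurable_snd.comp measurable_snd)).inter
       (measurableSet_lt (measurable_snd.comp measurable_snd)
        (measurable_snd.comp measurable_fst)))
  have hB : MeasurableSet B := by
    simp only [hBdef, setOf_and]
    exact (measurableSet_le (measurable_snd.comp measurable_fst)
        (measurable_fst.comp measurable_snd)).inter
      ((measurableSet_lt (measurable_fst.comp measurable_snd)
        (measurable_snd.comp measurable_snd)).inter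
       (measurableSet_lt (measurable_snd.comp measurable_snd)
        (measurable_fst.comp measurable_fst)))
  -- step 1: pointwise identity
  have step1 : ∫⁻ p, ENNReal.ofReal (‖p.1 - p.2‖ ^ 2) ∂γ
      = ∫⁻ p, 2 * ((volume.prod volume) (Prod.mk p ⁻¹' A)
          + (volume.prod volume) (Prod.mk p ⁻¹' B)) ∂γ := by
    refine lintegral_congr fun p => ?_
    have h1 : Prod.mk p ⁻¹' A = {q : ℝ × ℝ | p.1 ≤ q.1 ∧ q.1 < q.2 ∧ q.2 < p.2} := rfl
    have h2 : Prod.mk p ⁻¹' B = {q : ℝ × ℝ | p.2 ≤ q.1 ∧ q.1 < q.2 ∧ q.2 < p.1} := rfl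
    rw [h1, h2, ptwise p.1 p.2, two_ofReal_half]
    congr 1
    rw [Real.norm_eq_abs, sq_abs]
  -- a generic swap lemma
  have swap_meas : ∀ (S : Set ((ℝ × ℝ) × (ℝ × ℝ))), MeasurableSet S →
      ∫⁻ p, (volume.prod volume) (Prod.mk p ⁻¹' S) ∂γ
        = ∫⁻ q, γ ((fun p => (p, q)) ⁻¹' S) ∂(volume.prod volume) := by
    intro S hS
    have key : ∀ p q, (Prod.mk p ⁻¹' S).indicator (1 : (ℝ × ℝ) → ℝ≥0∞) q
        = S.indicator 1 (p, q) := by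
      intro p q
      by_cases h : (p, q) ∈ S <;> simp [Set.indicator, h, Set.mem_preimage]
    have key2 : ∀ p q, ((fun p => (p, q)) ⁻¹' S).indicator (1 : (ℝ × ℝ) → ℝ≥0∞) p
        = S.indicator 1 (p, q) := by
      intro p q
      by_cases h : (p, q) ∈ S <;> simp [Set.indicator, h, Set.mem_preimage]
    calc ∫⁻ p, (volume.prod volume) (Prod.mk p ⁻¹' S) ∂γ
        = ∫⁻ p, ∫⁻ q, S.indicator 1 (p, q) ∂(volume.prod volume) ∂γ := by
          refine lintegral_congr fun p => ?_
          rw [← lintegral_indicator_one (hS.preimage measurable_prodMk_left)]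
          exact lintegral_congr fun q => (key p q).symm
      _ = ∫⁻ q, ∫⁻ p, S.indicator 1 (p, q) ∂γ ∂(volume.prod volume) := by
          refine lintegral_lintegral_swap ?_
          exact (measurable_one.indicator hS).aemeasurable
      _ = ∫⁻ q, γ ((fun p => (p, q)) ⁻¹' S) ∂(volume.prod volume) := by
          refine lintegral_congr fun q => ?_
          rw [← lintegral_indicator_one (hS.preimage measurable_prodMk_right)]
          exact lintegral_congr fun p => key2 p q
  rw [step1]
  rw [lintegral_const_mul' 2 _ (by norm_num)]
  congr 1
  rw [lintegral_add_left (measurable_measure_prodMk_left hA)]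
  rw [swap_meas A hA, swap_meas B hB]
  rw [← lintegral_add_left (measurable_measure_prodMk_right hA)]
  have hmeas : AEMeasurable
      (fun q : ℝ × ℝ => γ ((fun p => (p, q)) ⁻¹' A) + γ ((fun p => (p, q)) ⁻¹' B))
      (volume.prod volume) :=
    ((measurable_measure_prodMk_right hA).add (measurable_measure_prodMk_right hB)).aemeasurable
  rw [lintegral_prod _ hmeas]
  refine lintegral_congr fun x => ?_
  have hind : ∀ y : ℝ, γ ((fun p => (p, (x, y))) ⁻¹' A) + γ ((fun p => (p, (x, y))) ⁻¹' B)
      = (Ioi x).indicator (fun y => γ {p : ℝ × ℝ | p.1 ≤ x ∧ y < p.2}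
          + γ {p : ℝ × ℝ | p.2 ≤ x ∧ y < p.1}) y := by
    intro y
    have hA' : (fun p => (p, (x, y))) ⁻¹' A = {p : ℝ × ℝ | p.1 ≤ x ∧ x < y ∧ y < p.2} := rfl
    have hB' : (fun p => (p, (x, y))) ⁻¹' B = {p : ℝ × ℝ | p.2 ≤ x ∧ x < y ∧ y < p.1} := rfl
    by_cases h : x < y
    · rw [indicator_of_mem (mem_Ioi.mpr h), hA', hB']
      congr 1
      · congr 1; ext p; simp [h, and_comm, and_left_comm]
      · congr 1; ext p; simp [h, and_comm, and_left_comm]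
    · rw [indicator_of_notMem (by simpa using h), hA', hB']
      have e1 : {p : ℝ × ℝ | p.1 ≤ x ∧ x < y ∧ y < p.2} = ∅ := by
        ext p; simp only [mem_setOf_eq, mem_empty_iff_false, iff_false]; tauto
      have e2 : {p : ℝ × ℝ | p.2 ≤ x ∧ x < y ∧ y < p.1} = ∅ := by
        ext p; simp only [mem_setOf_eq, mem_empty_iff_false, iff_false]; tauto
      rw [e1, e2, measure_empty, add_zero]
  simp_rw [hind]
  rw [lintegral_indicator measurableSet_Ioi]


lemma lb (γ : Measure (ℝ × ℝ)) [IsProbabilityMeasure γ]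
    (h1 : γ.map Prod.fst = μ) (h2 : γ.map Prod.snd = ν) (x y : ℝ) :
    ENNReal.ofReal (cdf μ x - cdf ν y) ≤ γ {p : ℝ × ℝ | p.1 ≤ x ∧ y < p.2} := by
  have hμ : μ (Iic x) = γ {p : ℝ × ℝ | p.1 ≤ x} := by
    rw [← h1, Measure.map_apply measurable_fst measurableSet_Iic]; rfl
  have hν : ν (Iic y) = γ {p : ℝ × ℝ | p.2 ≤ y} := by
    rw [← h2, Measure.map_apply measurable_snd measurableSet_Iic]; rfl
  have hsub : {p : ℝ × ℝ | p.1 ≤ x}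
      ⊆ {p : ℝ × ℝ | p.1 ≤ x ∧ y < p.2} ∪ {p : ℝ × ℝ | p.2 ≤ y} := by
    intro p hp
    by_cases h : p.2 ≤ y
    · exact Or.inr h
    · exact Or.inl ⟨hp, not_le.mp h⟩
  have hle : μ (Iic x) ≤ γ {p : ℝ × ℝ | p.1 ≤ x ∧ y < p.2} + ν (Iic y) := by
    rw [hμ, hν]
    exact (measure_mono hsub).trans (measure_union_le _ _)
  rw [← ofReal_cdf μ x, ← ofReal_cdf ν y] at hle
  rw [ENNReal.ofReal_sub _ (cdf_nonneg ν y)]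
  exact tsub_le_iff_right.mpr hle



lemma lb' (γ : Measure (ℝ × ℝ)) [IsProbabilityMeasure γ]
    (h1 : γ.map Prod.fst = μ) (h2 : γ.map Prod.snd = ν) (x y : ℝ) :
    ENNReal.ofReal (cdf ν x - cdf μ y) ≤ γ {p : ℝ × ℝ | p.2 ≤ x ∧ y < p.1} := by
  have hν : ν (Iic x) = γ {p : ℝ × ℝ | p.2 ≤ x} := by
    rw [← h2, Measure.map_apply measurable_snd measurableSet_Iic]; rfl
  have hμ : μ (Iic y) = γ {p : ℝ × ℝ | p.1 ≤ y} := by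
    rw [← h1, Measure.map_apply measurable_fst measurableSet_Iic]; rfl
  have hsub : {p : ℝ × ℝ | p.2 ≤ x}
      ⊆ {p : ℝ × ℝ | p.2 ≤ x ∧ y < p.1} ∪ {p : ℝ × ℝ | p.1 ≤ y} := by
    intro p hp
    by_cases h : p.1 ≤ y
    · exact Or.inr h
    · exact Or.inl ⟨hp, not_le.mp h⟩
  have hle : ν (Iic x) ≤ γ {p : ℝ × ℝ | p.2 ≤ x ∧ y < p.1} + μ (Iic y) := by
    rw [hν, hμ]
    exact (measure_mono hsub).trans (measure_union_le _ _)
  rw [← ofReal_cdf ν x, ← ofReal_cdf μ y] at hle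
  rw [ENNReal.ofReal_sub _ (cdf_nonneg μ y)]
  exact tsub_le_iff_right.mpr hle

end W2aux

open MeasureTheory ENNReal

-- STATEMENT 7: W₂²(μ,ν) = 2 ∫ ∫_x^∞ [(F(x) − G(y))⁺ + (G(x) − F(y))⁺] dy dx,
-- where F, G are the c.d.f.s of μ, ν (positive part given by ENNReal.ofReal).
theorem w2sq_eq_two_mul_integral (μ ν : Measure ℝ)
    [IsProbabilityMeasure μ] [IsProbabilityMeasure ν] :
    W2sq μ ν = 2 * ∫⁻ x, ∫⁻ y in Set.Ioi x,
      (ENNReal.ofReal ((μ (Set.Iic x)).toReal - (ν (Set.Iic y)).toReal) +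
        ENNReal.ofReal ((ν (Set.Iic x)).toReal - (μ (Set.Iic y)).toReal)) := by
  have hR : (2 * ∫⁻ x, ∫⁻ y in Set.Ioi x,
      (ENNReal.ofReal ((μ (Set.Iic x)).toReal - (ν (Set.Iic y)).toReal) +
        ENNReal.ofReal ((ν (Set.Iic x)).toReal - (μ (Set.Iic y)).toReal)))
      = 2 * ∫⁻ x, ∫⁻ y in Set.Ioi x,
        (ENNReal.ofReal (ProbabilityTheory.cdf μ x - ProbabilityTheory.cdf ν y)
          + ENNReal.ofReal (ProbabilityTheory.cdf ν x - ProbabilityTheory.cdf μ y)) := by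
    simp_rw [ProbabilityTheory.cdf_eq_real, measureReal_def]
  rw [hR]
  apply le_antisymm
  · have hcost : ∫⁻ p, ENNReal.ofReal (‖p.1 - p.2‖ ^ 2) ∂(W2aux.cpl μ ν)
        = 2 * ∫⁻ x, ∫⁻ y in Set.Ioi x,
          (ENNReal.ofReal (ProbabilityTheory.cdf μ x - ProbabilityTheory.cdf ν y)
            + ENNReal.ofReal (ProbabilityTheory.cdf ν x - ProbabilityTheory.cdf μ y)) := by
      rw [W2aux.cost_eq]
      congr 1
      refine lintegral_congr fun x => ?_
      refine lintegral_congr fun y => ?_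
      rw [W2aux.cpl_apply, W2aux.cpl_apply']
    rw [W2sq]
    refine iInf_le_of_le (W2aux.cpl μ ν) ?_
    refine iInf_le_of_le inferInstance ?_
    refine iInf_le_of_le W2aux.cpl_fst ?_
    refine iInf_le_of_le W2aux.cpl_snd ?_
    exact le_of_eq hcost
  · rw [W2sq]
    refine le_iInf fun γ => le_iInf fun hγ => le_iInf fun h1 => le_iInf fun h2 => ?_
    haveI := hγ
    rw [W2aux.cost_eq γ]
    refine mul_le_mul_right ?_ 2
    refine lintegral_mono fun x => ?_
    refine lintegral_mono fun y => ?_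
    exact add_le_add (W2aux.lb γ h1 h2 x y) (W2aux.lb' γ h1 h2 x y)
end

section
/- Let μ₁, μ₂ be probability measures on ℝ^{d₁}, ℝ^{d₂}, let ν be a probability measure on ℝ^{d₁} × ℝ^{d₂} absolutely continuous with respect to μ₁ ⊗ μ₂ with density ρ(x₁,x₂), and set ρ₁(x₁) = ∫ ρ(x₁,x₂) dμ₂(x₂). Then for all constants β ≥ α > 0, ∫∫ (ρ(x₁,x₂)/ρ₁(x₁) − 1)² 1_{ρ₁(x₁) ≥ 1/α} dν₁(x₁) dμ₂(x₂) + β ∫ (ρ₁(x₁) − 1)² 1_{ρ₁(x₁) ≥ 1/α} dμ₁(x₁) ≤ β ∫∫ (ρ(x₁,x₂) − 1)² 1_{ρ₁(x₁) ≥ 1/α} dμ₁(x₁) dμ₂(x₂), where ν₁ is the first marginal of ν, so dν₁(x₁) = ρ₁(x₁) dμ₁(x₁). -/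
open MeasureTheory ENNReal

theorem key_aux {Ω : Type*} [MeasurableSpace Ω] (μ : Measure Ω) [IsProbabilityMeasure μ]
    (f : Ω → ℝ) (hf : Measurable f) (r β : ℝ) (hr : 0 < r)
    (hrβ : r⁻¹ ≤ β) (hint : Integrable f μ) (hfr : ∫ x, f x ∂μ = r) :
    ENNReal.ofReal r * ∫⁻ x, ENNReal.ofReal ((f x / r - 1) ^ 2) ∂μ
      + ENNReal.ofReal β * ENNReal.ofReal ((r - 1) ^ 2)
      ≤ ENNReal.ofReal β * ∫⁻ x, ENNReal.ofReal ((f x - 1) ^ 2) ∂μ := by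
  have hβ : 0 < β := lt_of_lt_of_le (inv_pos.2 hr) hrβ
  set J : ℝ≥0∞ := ∫⁻ x, ENNReal.ofReal ((f x - r) ^ 2) ∂μ with hJ
  set K : ℝ≥0∞ := ∫⁻ x, ENNReal.ofReal ((f x - 1) ^ 2) ∂μ with hK
  have step1 : ENNReal.ofReal r * ∫⁻ x, ENNReal.ofReal ((f x / r - 1) ^ 2) ∂μ
      ≤ ENNReal.ofReal β * J := by
    rw [← lintegral_const_mul _ (by fun_prop), hJ, ← lintegral_const_mul _ (by fun_prop)]
    refine lintegral_mono fun x => ?_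
    rw [← ENNReal.ofReal_mul hr.le, ← ENNReal.ofReal_mul hβ.le]
    apply ENNReal.ofReal_le_ofReal
    have h1 : r * (f x / r - 1) ^ 2 = (f x - r) ^ 2 * r⁻¹ := by
      field_simp
    rw [h1]
    calc (f x - r)^2 * r⁻¹ ≤ (f x - r)^2 * β :=
          mul_le_mul_of_nonneg_left hrβ (sq_nonneg _)
      _ = β * (f x - r)^2 := mul_comm _ _
  have step2 : J + ENNReal.ofReal ((r - 1) ^ 2) ≤ K := by
    rcases eq_or_ne K ∞ with h | h
    · rw [h]; exact le_top
    · have hg : Integrable (fun x => (f x - 1) ^ 2) μ := by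
        refine ⟨(by fun_prop : Measurable fun x => (f x - 1)^2).aestronglyMeasurable, ?_⟩
        rw [hasFiniteIntegral_iff_ofReal (Filter.Eventually.of_forall fun x => sq_nonneg _)]
        exact h.lt_top
      have hf1 : Integrable (fun x => f x - 1) μ := hint.sub (integrable_const 1)
      have hfr2 : Integrable (fun x => (f x - r) ^ 2) μ := by
        have h2 : (fun x => (f x - r)^2)
            = fun x => (f x - 1)^2 - (2*(r-1)) * (f x - 1) + (r-1)^2 := by
          funext x; ring
        rw [h2]
        exact (hg.sub (hf1.const_mul _)).add (integrable_const _)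
      have hJeq : J = ENNReal.ofReal (∫ x, (f x - r)^2 ∂μ) :=
        (ofReal_integral_eq_lintegral_ofReal hfr2
          (Filter.Eventually.of_forall fun x => sq_nonneg _)).symm
      have hKeq : K = ENNReal.ofReal (∫ x, (f x - 1)^2 ∂μ) :=
        (ofReal_integral_eq_lintegral_ofReal hg
          (Filter.Eventually.of_forall fun x => sq_nonneg _)).symm
      have hint_fr : Integrable (fun x => f x - r) μ := hint.sub (integrable_const r)
      have hzero : ∫ x, (f x - r) ∂μ = 0 := by
        rw [integral_sub hint (integrable_const r), hfr, integral_const]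
        simp
      have hreal : ∫ x, (f x - 1)^2 ∂μ = (∫ x, (f x - r)^2 ∂μ) + (r - 1)^2 := by
        have expand : (fun x => (f x - 1)^2)
            = fun x => (f x - r)^2 + (2*(r-1)) * (f x - r) + (r-1)^2 := by
          funext x; ring
        have hB : Integrable (fun x => 2*(r-1)*(f x - r)) μ := hint_fr.const_mul _
        have hA : Integrable (fun x => (f x - r)^2 + 2*(r-1)*(f x - r)) μ := hfr2.add hB
        rw [expand, integral_add hA (integrable_const _),
          integral_add hfr2 hB, MeasureTheory.integral_const_mul, hzero, integral_const]
        simp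
      rw [hJeq, hKeq, hreal,
        ← ENNReal.ofReal_add (integral_nonneg fun x => sq_nonneg _) (sq_nonneg _)]
  calc ENNReal.ofReal r * (∫⁻ x, ENNReal.ofReal ((f x / r - 1) ^ 2) ∂μ)
        + ENNReal.ofReal β * ENNReal.ofReal ((r - 1) ^ 2)
      ≤ ENNReal.ofReal β * J + ENNReal.ofReal β * ENNReal.ofReal ((r-1)^2) :=
        add_le_add_left step1 _
    _ = ENNReal.ofReal β * (J + ENNReal.ofReal ((r-1)^2)) := (mul_add _ _ _).symm
    _ ≤ _ := mul_le_mul_right step2 _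

-- STATEMENT 8: key lemma for the tensorization of the transport–chi-square inequality.
theorem tensorization_lemma {d₁ d₂ : ℕ}
    (μ₁ : Measure (EuclideanSpace ℝ (Fin d₁))) (μ₂ : Measure (EuclideanSpace ℝ (Fin d₂)))
    [IsProbabilityMeasure μ₁] [IsProbabilityMeasure μ₂]
    (ν : Measure (EuclideanSpace ℝ (Fin d₁) × EuclideanSpace ℝ (Fin d₂)))
    [IsProbabilityMeasure ν]
    (ρ : EuclideanSpace ℝ (Fin d₁) × EuclideanSpace ℝ (Fin d₂) → ℝ)
    (hρm : Measurable ρ) (hρnn : ∀ p, 0 ≤ ρ p)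
    (hν : ν = (μ₁.prod μ₂).withDensity fun p => ENNReal.ofReal (ρ p))
    (ρ₁ : EuclideanSpace ℝ (Fin d₁) → ℝ)
    (hρ₁ : ∀ x₁, ρ₁ x₁ = ∫ x₂, ρ (x₁, x₂) ∂μ₂)
    (α β : ℝ) (hα : 0 < α) (hαβ : α ≤ β) :
    (∫⁻ p, {x₁ | α⁻¹ ≤ ρ₁ x₁}.indicator (fun _ => (1 : ℝ≥0∞)) p.1 *
        ENNReal.ofReal ((ρ p / ρ₁ p.1 - 1) ^ 2) ∂((ν.map Prod.fst).prod μ₂)) +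
      ENNReal.ofReal β *
        ∫⁻ x₁, {x₁ | α⁻¹ ≤ ρ₁ x₁}.indicator (fun _ => (1 : ℝ≥0∞)) x₁ *
          ENNReal.ofReal ((ρ₁ x₁ - 1) ^ 2) ∂μ₁
      ≤ ENNReal.ofReal β *
        ∫⁻ p, {x₁ | α⁻¹ ≤ ρ₁ x₁}.indicator (fun _ => (1 : ℝ≥0∞)) p.1 *
          ENNReal.ofReal ((ρ p - 1) ^ 2) ∂(μ₁.prod μ₂) := by
  classical
  have hρ₁m : Measurable ρ₁ := by
    have h : ρ₁ = fun x₁ => ∫ x₂, ρ (x₁, x₂) ∂μ₂ := funext hρ₁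
    rw [h]
    exact (hρm.stronglyMeasurable.integral_prod_right').measurable
  set S : Set (EuclideanSpace ℝ (Fin d₁)) := {x₁ | α⁻¹ ≤ ρ₁ x₁} with hS
  have hSm : MeasurableSet S := measurableSet_le measurable_const hρ₁m
  set I : EuclideanSpace ℝ (Fin d₁) → ℝ≥0∞ := S.indicator (fun _ => (1 : ℝ≥0∞)) with hI
  have hIm : Measurable I := measurable_const.indicator hSm
  have : IsProbabilityMeasure (ν.map Prod.fst) :=
    Measure.isProbabilityMeasure_map measurable_fst.aemeasurable
  set G : EuclideanSpace ℝ (Fin d₁) → ℝ≥0∞ :=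
    fun x₁ => ∫⁻ x₂, ENNReal.ofReal ((ρ (x₁, x₂) / ρ₁ x₁ - 1) ^ 2) ∂μ₂ with hG
  set H : EuclideanSpace ℝ (Fin d₁) → ℝ≥0∞ :=
    fun x₁ => ∫⁻ x₂, ENNReal.ofReal (ρ (x₁, x₂)) ∂μ₂ with hH
  set K2 : EuclideanSpace ℝ (Fin d₁) → ℝ≥0∞ :=
    fun x₁ => ∫⁻ x₂, ENNReal.ofReal ((ρ (x₁, x₂) - 1) ^ 2) ∂μ₂ with hK2
  have hGm : Measurable G :=
    Measurable.lintegral_prod_right'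
      (f := fun p => ENNReal.ofReal ((ρ p / ρ₁ p.1 - 1) ^ 2)) (by fun_prop)
  have hHm : Measurable H :=
    Measurable.lintegral_prod_right'
      (f := fun p => ENNReal.ofReal (ρ p)) (by fun_prop)
  have hK2m : Measurable K2 :=
    Measurable.lintegral_prod_right'
      (f := fun p => ENNReal.ofReal ((ρ p - 1) ^ 2)) (by fun_prop)
  have hT1 : (∫⁻ p, I p.1 * ENNReal.ofReal ((ρ p / ρ₁ p.1 - 1) ^ 2) ∂((ν.map Prod.fst).prod μ₂))
      = ∫⁻ x₁, I x₁ * G x₁ * H x₁ ∂μ₁ := by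
    rw [lintegral_prod _ (by fun_prop : Measurable fun p :
        EuclideanSpace ℝ (Fin d₁) × EuclideanSpace ℝ (Fin d₂) =>
        I p.1 * ENNReal.ofReal ((ρ p / ρ₁ p.1 - 1) ^ 2)).aemeasurable]
    have h1 : ∀ x₁, (∫⁻ x₂, I x₁ * ENNReal.ofReal ((ρ (x₁, x₂) / ρ₁ x₁ - 1) ^ 2) ∂μ₂)
        = I x₁ * G x₁ := fun x₁ => lintegral_const_mul _ (by fun_prop)
    simp_rw [h1]
    rw [lintegral_map (f := fun x => I x * G x) (hIm.mul hGm) measurable_fst, hν,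
      lintegral_withDensity_eq_lintegral_mul _ (by fun_prop) (by fun_prop)]
    simp only [Pi.mul_apply]
    rw [lintegral_prod _ (by fun_prop : Measurable fun p :
        EuclideanSpace ℝ (Fin d₁) × EuclideanSpace ℝ (Fin d₂) =>
        ENNReal.ofReal (ρ p) * (I p.1 * G p.1)).aemeasurable]
    refine lintegral_congr fun x₁ => ?_
    calc (∫⁻ x₂, ENNReal.ofReal (ρ (x₁, x₂)) * (I x₁ * G x₁) ∂μ₂)
        = (∫⁻ x₂, ENNReal.ofReal (ρ (x₁, x₂)) ∂μ₂) * (I x₁ * G x₁) :=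
          lintegral_mul_const _ (by fun_prop)
      _ = I x₁ * G x₁ * H x₁ := mul_comm _ _
  have hT3 : (∫⁻ p, I p.1 * ENNReal.ofReal ((ρ p - 1) ^ 2) ∂(μ₁.prod μ₂))
      = ∫⁻ x₁, I x₁ * K2 x₁ ∂μ₁ := by
    rw [lintegral_prod _ (by fun_prop : Measurable fun p :
        EuclideanSpace ℝ (Fin d₁) × EuclideanSpace ℝ (Fin d₂) =>
        I p.1 * ENNReal.ofReal ((ρ p - 1) ^ 2)).aemeasurable]
    have h1 : ∀ x₁, (∫⁻ x₂, I x₁ * ENNReal.ofReal ((ρ (x₁, x₂) - 1) ^ 2) ∂μ₂)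
        = I x₁ * K2 x₁ := fun x₁ => lintegral_const_mul _ (by fun_prop)
    simp_rw [h1]
  rw [hT1, hT3]
  rw [← lintegral_const_mul _ (by fun_prop : Measurable fun x₁ : EuclideanSpace ℝ (Fin d₁) =>
      I x₁ * ENNReal.ofReal ((ρ₁ x₁ - 1) ^ 2)),
    ← lintegral_const_mul (f := fun x => I x * K2 x) _ (hIm.mul hK2m),
    ← lintegral_add_left (f := fun x => I x * G x * H x) ((hIm.mul hGm).mul hHm)]
  refine lintegral_mono fun x₁ => ?_
  by_cases hx : x₁ ∈ S
  · have hI1 : I x₁ = 1 := Set.indicator_of_mem hx _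
    rw [hI1, one_mul, one_mul, one_mul]
    have hrα : α⁻¹ ≤ ρ₁ x₁ := hx
    have hr : 0 < ρ₁ x₁ := lt_of_lt_of_le (inv_pos.2 hα) hrα
    have hint : Integrable (fun x₂ => ρ (x₁, x₂)) μ₂ := by
      by_contra hc
      rw [hρ₁ x₁, integral_undef hc] at hr
      exact lt_irrefl _ hr
    have hHeq : H x₁ = ENNReal.ofReal (ρ₁ x₁) := by
      rw [hρ₁ x₁]
      exact (ofReal_integral_eq_lintegral_ofReal hint
        (Filter.Eventually.of_forall fun x₂ => hρnn _)).symm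
    have hrβ : (ρ₁ x₁)⁻¹ ≤ β := by
      have h1 : (ρ₁ x₁)⁻¹ ≤ α⁻¹⁻¹ := inv_anti₀ (inv_pos.2 hα) hrα
      rw [inv_inv] at h1
      exact h1.trans hαβ
    rw [hHeq, mul_comm (G x₁)]
    exact key_aux μ₂ _ (by fun_prop) (ρ₁ x₁) β hr hrβ hint (hρ₁ x₁).symm
  · have hI0 : I x₁ = 0 := Set.indicator_of_notMem hx _
    simp [hI0]
end

section
/- For any two probability measures μ and ν on ℝ with cumulative distribution functions F and G respectively, the Wasserstein distance of index 1 satisfies W₁(μ,ν) = ∫_ℝ |F(x) − G(x)| dx. -/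
open MeasureTheory ENNReal

section QuantileAux

open ProbabilityTheory Set Filter
open scoped symmDiff

noncomputable def quant (μ : Measure ℝ) (u : ℝ) : ℝ := sInf {x | u ≤ cdf μ x}

lemma quant_le_iff (μ : Measure ℝ) {u : ℝ} (hu : u ∈ Set.Ioo (0:ℝ) 1) (t : ℝ) :
    quant μ u ≤ t ↔ u ≤ cdf μ t := by
  have hne : {x | u ≤ cdf μ x}.Nonempty := by
    have : ∀ᶠ x in atTop, u < cdf μ x :=
      (tendsto_cdf_atTop μ).eventually (eventually_gt_nhds hu.2)
    obtain ⟨x, hx⟩ := this.exists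
    exact ⟨x, hx.le⟩
  have hbdd : BddBelow {x | u ≤ cdf μ x} := by
    have h2 : ∀ᶠ x in atBot, cdf μ x < u :=
      (tendsto_cdf_atBot μ).eventually (eventually_lt_nhds hu.1)
    obtain ⟨a, ha⟩ := h2.exists
    refine ⟨a, fun x hx => ?_⟩
    by_contra hax
    push_neg at hax
    exact absurd (hx.trans (monotone_cdf μ hax.le)) (not_le.mpr ha)
  constructor
  · intro h
    have hs : ∀ s, t < s → u ≤ cdf μ s := by
      intro s hs
      obtain ⟨x, hx, hxs⟩ := exists_lt_of_csInf_lt hne (lt_of_le_of_lt h hs)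
      exact hx.trans (monotone_cdf μ hxs.le)
    have hcont : Filter.Tendsto (cdf μ) (nhdsWithin t (Set.Ioi t)) (nhds (cdf μ t)) :=
      ((cdf μ).right_continuous t).mono_left (nhdsWithin_mono t Set.Ioi_subset_Ici_self)
    exact ge_of_tendsto hcont (eventually_nhdsWithin_of_forall (fun s h' => hs s h'))
  · intro h
    exact csInf_le hbdd h

lemma quant_monotoneOn (μ : Measure ℝ) : MonotoneOn (quant μ) (Set.Ioo (0:ℝ) 1) := by
  intro u hu v hv huv
  rw [quant_le_iff μ hu]
  exact huv.trans ((quant_le_iff μ hv (quant μ v)).mp le_rfl)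

lemma vol_eq_of_diff_singleton {s t : Set ℝ} (hsub : s ⊆ t) (hd : t \ s ⊆ {1}) :
    volume s = volume t := by
  refine le_antisymm (measure_mono hsub) ?_
  calc volume t ≤ volume ((t \ s) ∪ s) := measure_mono (Set.subset_diff_union t s)
    _ ≤ volume (t \ s) + volume s := measure_union_le _ _
    _ = volume s := by
        rw [measure_mono_null hd (by simp : volume ({1} : Set ℝ) = 0), zero_add]

lemma vol_Ioo_inter_Iic {c : ℝ} (h0 : 0 ≤ c) (h1 : c ≤ 1) :
    volume (Set.Ioo (0:ℝ) 1 ∩ Set.Iic c) = ENNReal.ofReal c := by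
  rw [vol_eq_of_diff_singleton (t := Set.Ioc 0 c) (fun x hx => ⟨hx.1.1, hx.2⟩) ?_,
    Real.volume_Ioc, sub_zero]
  intro x hx
  simp only [Set.mem_diff, Set.mem_Ioc, Set.mem_inter_iff, Set.mem_Ioo, Set.mem_Iic,
    not_and, Set.mem_singleton_iff] at hx ⊢
  rcases hx with ⟨⟨hx0, hxc⟩, h⟩
  by_contra hne
  exact (h ⟨hx0, lt_of_le_of_ne (hxc.trans h1) hne⟩) hxc

lemma vol_Ioo_inter_Ioc {m M : ℝ} (h0 : 0 ≤ m) (h1 : M ≤ 1) :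
    volume (Set.Ioo (0:ℝ) 1 ∩ Set.Ioc m M) = ENNReal.ofReal (M - m) := by
  rcases le_or_gt M m with h | hmM
  · rw [Set.Ioc_eq_empty (not_lt.mpr h)]
    rw [Set.inter_empty, measure_empty, eq_comm, ENNReal.ofReal_eq_zero]
    linarith
  rw [vol_eq_of_diff_singleton (t := Set.Ioc m M) (fun x hx => hx.2) ?_, Real.volume_Ioc]
  intro x hx
  simp only [Set.mem_diff, Set.mem_Ioc, Set.mem_inter_iff, Set.mem_Ioo,
    not_and, Set.mem_singleton_iff] at hx ⊢
  rcases hx with ⟨⟨hxm, hxM⟩, h⟩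
  by_contra hne
  exact h ⟨lt_of_le_of_lt h0 hxm, lt_of_le_of_ne (hxM.trans h1) hne⟩ hxm hxM

instance : IsProbabilityMeasure (volume.restrict (Set.Ioo (0:ℝ) 1)) := by
  constructor
  rw [Measure.restrict_apply MeasurableSet.univ, Set.univ_inter, Real.volume_Ioo]
  norm_num

lemma map_quant (μ : Measure ℝ) [IsProbabilityMeasure μ] {Q : ℝ → ℝ} (hQm : Measurable Q)
    (hae : Q =ᵐ[volume.restrict (Set.Ioo (0:ℝ) 1)] quant μ) :
    (volume.restrict (Set.Ioo (0:ℝ) 1)).map Q = μ := by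
  set P := volume.restrict (Set.Ioo (0:ℝ) 1)
  have : IsProbabilityMeasure (P.map Q) := Measure.isProbabilityMeasure_map hQm.aemeasurable
  refine Measure.ext_of_Iic _ _ (fun t => ?_)
  rw [Measure.map_apply hQm measurableSet_Iic]
  have h1 : (Q ⁻¹' Set.Iic t : Set ℝ) =ᵐ[P] {u | quant μ u ≤ t} := by
    rw [Filter.eventuallyEq_set]
    exact hae.mono (fun u hu => by simp [Set.mem_preimage, Set.mem_Iic, hu, Set.mem_setOf_eq])
  rw [measure_congr h1, Measure.restrict_apply' measurableSet_Ioo]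
  have h2 : {u | quant μ u ≤ t} ∩ Set.Ioo (0:ℝ) 1 = Set.Ioo (0:ℝ) 1 ∩ Set.Iic (cdf μ t) := by
    ext u
    simp only [Set.mem_inter_iff, Set.mem_setOf_eq, Set.mem_Iic]
    rw [and_comm]
    exact and_congr_right (fun hu => quant_le_iff μ hu t)
  rw [h2, vol_Ioo_inter_Iic (cdf_nonneg μ t) (cdf_le_one μ t), ofReal_cdf]

lemma mem_Ico_minmax {a b t : ℝ} :
    t ∈ Set.Ico (min a b) (max a b) ↔ ((a ≤ t ∧ ¬ b ≤ t) ∨ (b ≤ t ∧ ¬ a ≤ t)) := by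
  simp only [Set.mem_Ico, min_le_iff, lt_max_iff, not_le]
  constructor
  · rintro ⟨h1 | h1, h2 | h2⟩
    · exact absurd h2 (not_lt.mpr h1)
    · exact Or.inl ⟨h1, h2⟩
    · exact Or.inr ⟨h1, h2⟩
    · exact absurd h2 (not_lt.mpr h1)
  · rintro (⟨h1, h2⟩ | ⟨h1, h2⟩)
    · exact ⟨Or.inl h1, Or.inr h2⟩
    · exact ⟨Or.inr h1, Or.inl h2⟩

lemma mem_Ioc_minmax {c d u : ℝ} :
    u ∈ Set.Ioc (min c d) (max c d) ↔ ((u ≤ c ∧ ¬ u ≤ d) ∨ (u ≤ d ∧ ¬ u ≤ c)) := by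
  simp only [Set.mem_Ioc, min_lt_iff, le_max_iff, not_le]
  constructor
  · rintro ⟨h1 | h1, h2 | h2⟩
    · exact absurd h2 (not_le.mpr h1)
    · exact Or.inr ⟨h2, h1⟩
    · exact Or.inl ⟨h2, h1⟩
    · exact absurd h2 (not_le.mpr h1)
  · rintro (⟨h1, h2⟩ | ⟨h1, h2⟩)
    · exact ⟨Or.inr h2, Or.inl h1⟩
    · exact ⟨Or.inl h2, Or.inr h1⟩

lemma lintegral_ico_abs (a b : ℝ) :
    ∫⁻ t, (Set.Ico (min a b) (max a b)).indicator 1 t = ENNReal.ofReal |a - b| := by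
  rw [lintegral_indicator_one measurableSet_Ico, Real.volume_Ico, max_sub_min_eq_abs,
    abs_sub_comm]

lemma ofReal_abs_toReal_le {γ : Measure (ℝ × ℝ)} [IsFiniteMeasure γ] {A B : Set (ℝ × ℝ)} :
    ENNReal.ofReal |(γ A).toReal - (γ B).toReal| ≤ γ (A ∆ B) := by
  have hAB : ∀ S T : Set (ℝ × ℝ), γ S ≤ γ T + γ (S ∆ T) := by
    intro S T
    refine le_trans (measure_mono (fun x hx => ?_)) (measure_union_le _ _)
    by_cases hT : x ∈ T
    · exact Or.inl hT
    · exact Or.inr (Set.mem_symmDiff.mpr (Or.inl ⟨hx, hT⟩))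
  have key : ∀ S T : Set (ℝ × ℝ), (γ S).toReal - (γ T).toReal ≤ (γ (S ∆ T)).toReal := by
    intro S T
    have h := hAB S T
    have := ENNReal.toReal_mono (by finiteness) h
    rw [ENNReal.toReal_add (measure_ne_top γ T) (measure_ne_top γ (S ∆ T))] at this
    linarith
  refine ENNReal.ofReal_le_of_le_toReal ?_
  rw [abs_sub_le_iff]
  exact ⟨key A B, by rw [symmDiff_comm]; exact key B A⟩

lemma coupling_lower (μ ν : Measure ℝ) [IsProbabilityMeasure μ] [IsProbabilityMeasure ν]
    (γ : Measure (ℝ × ℝ)) [IsProbabilityMeasure γ]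
    (h1 : γ.map Prod.fst = μ) (h2 : γ.map Prod.snd = ν) :
    ∫⁻ t, ENNReal.ofReal |cdf μ t - cdf ν t| ≤ ∫⁻ p, ENNReal.ofReal |p.1 - p.2| ∂γ := by
  have hswap : ∫⁻ p, ∫⁻ t, (Set.Ico (min p.1 p.2) (max p.1 p.2)).indicator 1 t ∂volume ∂γ
      = ∫⁻ t, ∫⁻ p, (Set.Ico (min p.1 p.2) (max p.1 p.2)).indicator 1 t ∂γ ∂volume := by
    refine lintegral_lintegral_swap ?_
    have hE : MeasurableSet {q : (ℝ × ℝ) × ℝ | min q.1.1 q.1.2 ≤ q.2 ∧ q.2 < max q.1.1 q.1.2} :=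
      (measurableSet_le ((measurable_fst.fst).min (measurable_fst.snd)) measurable_snd).inter
        (measurableSet_lt measurable_snd ((measurable_fst.fst).max (measurable_fst.snd)))
    have : (Function.uncurry fun (p : ℝ × ℝ) (t : ℝ) =>
        (Set.Ico (min p.1 p.2) (max p.1 p.2)).indicator 1 t)
        = ({q : (ℝ × ℝ) × ℝ | min q.1.1 q.1.2 ≤ q.2 ∧ q.2 < max q.1.1 q.1.2}).indicator
            (1 : ((ℝ × ℝ) × ℝ) → ℝ≥0∞) := by
      ext q
      simp only [Function.uncurry, Set.indicator_apply, Set.mem_Ico, Set.mem_setOf_eq,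
        Pi.one_apply]
    rw [this]
    exact (((measurable_one : Measurable (1 : ((ℝ × ℝ) × ℝ) → ℝ≥0∞))).indicator hE).aemeasurable
  calc ∫⁻ t, ENNReal.ofReal |cdf μ t - cdf ν t|
      ≤ ∫⁻ t, ∫⁻ p, (Set.Ico (min p.1 p.2) (max p.1 p.2)).indicator 1 t ∂γ ∂volume := by
        refine lintegral_mono (fun t => ?_)
        have hS : MeasurableSet {p : ℝ × ℝ | min p.1 p.2 ≤ t ∧ t < max p.1 p.2} :=
          (measurableSet_le (measurable_fst.min measurable_snd) measurable_const).inter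
            (measurableSet_lt measurable_const (measurable_fst.max measurable_snd))
        have hfun : (fun p : ℝ × ℝ => (Set.Ico (min p.1 p.2) (max p.1 p.2)).indicator 1 t)
            = ({p : ℝ × ℝ | min p.1 p.2 ≤ t ∧ t < max p.1 p.2}).indicator
                (1 : (ℝ × ℝ) → ℝ≥0∞) := by
          ext p
          simp only [Set.indicator_apply, Set.mem_Ico, Set.mem_setOf_eq, Pi.one_apply]
        rw [hfun, lintegral_indicator_one hS]
        have hSeq : {p : ℝ × ℝ | min p.1 p.2 ≤ t ∧ t < max p.1 p.2}
            = (Prod.fst ⁻¹' Set.Iic t) ∆ (Prod.snd ⁻¹' Set.Iic t) := by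
          ext p
          rw [Set.mem_symmDiff]
          exact mem_Ico_minmax (a := p.1) (b := p.2) (t := t)
        have hA : γ (Prod.fst ⁻¹' Set.Iic t) = μ (Set.Iic t) := by
          rw [← h1, Measure.map_apply measurable_fst measurableSet_Iic]
        have hB : γ (Prod.snd ⁻¹' Set.Iic t) = ν (Set.Iic t) := by
          rw [← h2, Measure.map_apply measurable_snd measurableSet_Iic]
        rw [hSeq, cdf_eq_real μ t, cdf_eq_real ν t, measureReal_def, measureReal_def, ← hA, ← hB]
        exact ofReal_abs_toReal_le
    _ = ∫⁻ p, ∫⁻ t, (Set.Ico (min p.1 p.2) (max p.1 p.2)).indicator 1 t ∂volume ∂γ := hswap.symm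
    _ = ∫⁻ p, ENNReal.ofReal |p.1 - p.2| ∂γ := by
        refine lintegral_congr (fun p => ?_)
        exact lintegral_ico_abs p.1 p.2

lemma quantile_coupling_cost (μ ν : Measure ℝ) [IsProbabilityMeasure μ] [IsProbabilityMeasure ν]
    {Qμ Qν : ℝ → ℝ} (hQμm : Measurable Qμ) (hQνm : Measurable Qν)
    (haeμ : Qμ =ᵐ[volume.restrict (Set.Ioo (0:ℝ) 1)] quant μ)
    (haeν : Qν =ᵐ[volume.restrict (Set.Ioo (0:ℝ) 1)] quant ν) :
    ∫⁻ u, ENNReal.ofReal |Qμ u - Qν u| ∂(volume.restrict (Set.Ioo (0:ℝ) 1))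
      = ∫⁻ t, ENNReal.ofReal |cdf μ t - cdf ν t| := by
  set P := volume.restrict (Set.Ioo (0:ℝ) 1) with hP
  have hswap : ∫⁻ u, ∫⁻ t, (Set.Ico (min (Qμ u) (Qν u)) (max (Qμ u) (Qν u))).indicator 1 t
        ∂volume ∂P
      = ∫⁻ t, ∫⁻ u, (Set.Ico (min (Qμ u) (Qν u)) (max (Qμ u) (Qν u))).indicator 1 t ∂P
        ∂volume := by
    refine lintegral_lintegral_swap ?_
    have hE : MeasurableSet {q : ℝ × ℝ | min (Qμ q.1) (Qν q.1) ≤ q.2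
        ∧ q.2 < max (Qμ q.1) (Qν q.1)} :=
      (measurableSet_le ((hQμm.comp measurable_fst).min (hQνm.comp measurable_fst))
          measurable_snd).inter
        (measurableSet_lt measurable_snd
          ((hQμm.comp measurable_fst).max (hQνm.comp measurable_fst)))
    have : (Function.uncurry fun (u : ℝ) (t : ℝ) =>
        (Set.Ico (min (Qμ u) (Qν u)) (max (Qμ u) (Qν u))).indicator 1 t)
        = ({q : ℝ × ℝ | min (Qμ q.1) (Qν q.1) ≤ q.2 ∧ q.2 < max (Qμ q.1) (Qν q.1)}).indicator
            (1 : (ℝ × ℝ) → ℝ≥0∞) := by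
      ext q
      simp only [Function.uncurry, Set.indicator_apply, Set.mem_Ico, Set.mem_setOf_eq,
        Pi.one_apply]
    rw [this]
    exact (((measurable_one : Measurable (1 : (ℝ × ℝ) → ℝ≥0∞))).indicator hE).aemeasurable
  calc ∫⁻ u, ENNReal.ofReal |Qμ u - Qν u| ∂P
      = ∫⁻ u, ∫⁻ t, (Set.Ico (min (Qμ u) (Qν u)) (max (Qμ u) (Qν u))).indicator 1 t
          ∂volume ∂P := by
        refine lintegral_congr (fun u => (lintegral_ico_abs (Qμ u) (Qν u)).symm)
    _ = ∫⁻ t, ∫⁻ u, (Set.Ico (min (Qμ u) (Qν u)) (max (Qμ u) (Qν u))).indicator 1 t ∂P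
          ∂volume := hswap
    _ = ∫⁻ t, ENNReal.ofReal |cdf μ t - cdf ν t| := by
        refine lintegral_congr (fun t => ?_)
        have hS : MeasurableSet {u : ℝ | min (Qμ u) (Qν u) ≤ t ∧ t < max (Qμ u) (Qν u)} :=
          (measurableSet_le (hQμm.min hQνm) measurable_const).inter
            (measurableSet_lt measurable_const (hQμm.max hQνm))
        have hfun : (fun u : ℝ => (Set.Ico (min (Qμ u) (Qν u)) (max (Qμ u) (Qν u))).indicator 1 t)
            = ({u : ℝ | min (Qμ u) (Qν u) ≤ t ∧ t < max (Qμ u) (Qν u)}).indicator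
                (1 : ℝ → ℝ≥0∞) := by
          ext u
          simp only [Set.indicator_apply, Set.mem_Ico, Set.mem_setOf_eq, Pi.one_apply]
        rw [hfun, lintegral_indicator_one hS]
        have hae : ({u : ℝ | min (Qμ u) (Qν u) ≤ t ∧ t < max (Qμ u) (Qν u)} : Set ℝ)
            =ᵐ[P] Set.Ioc (min (cdf μ t) (cdf ν t)) (max (cdf μ t) (cdf ν t)) := by
          rw [Filter.eventuallyEq_set]
          filter_upwards [haeμ, haeν, ae_restrict_mem measurableSet_Ioo] with u hu1 hu2 hu
          rw [hu1, hu2]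
          rw [show (min (quant μ u) (quant ν u) ≤ t ∧ t < max (quant μ u) (quant ν u))
            ↔ t ∈ Set.Ico (min (quant μ u) (quant ν u)) (max (quant μ u) (quant ν u)) from
            Iff.rfl, mem_Ico_minmax, mem_Ioc_minmax,
            quant_le_iff μ hu, quant_le_iff ν hu]
        rw [measure_congr hae, Measure.restrict_apply' measurableSet_Ioo, Set.inter_comm,
          vol_Ioo_inter_Ioc (le_min (cdf_nonneg μ t) (cdf_nonneg ν t))
            (max_le (cdf_le_one μ t) (cdf_le_one ν t)),
          max_sub_min_eq_abs, abs_sub_comm]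

end QuantileAux

-- Wasserstein distance of index 1: infimum over couplings of the expected distance.
noncomputable def W1 (μ ν : Measure ℝ) : ℝ≥0∞ :=
  ⨅ (γ : Measure (ℝ × ℝ)) (_ : IsProbabilityMeasure γ)
    (_ : γ.map Prod.fst = μ) (_ : γ.map Prod.snd = ν),
    ∫⁻ p, ENNReal.ofReal |p.1 - p.2| ∂γ

-- STATEMENT 15: W₁(μ,ν) = ∫ |F(x) − G(x)| dx where F, G are the c.d.f.s of μ, ν.
theorem w1_eq_integral_abs_cdf_sub (μ ν : Measure ℝ)
    [IsProbabilityMeasure μ] [IsProbabilityMeasure ν] :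
    W1 μ ν = ∫⁻ x, ENNReal.ofReal |(μ (Set.Iic x)).toReal - (ν (Set.Iic x)).toReal| := by
  have hrhs : ∫⁻ x, ENNReal.ofReal |(μ (Set.Iic x)).toReal - (ν (Set.Iic x)).toReal|
      = ∫⁻ t, ENNReal.ofReal |ProbabilityTheory.cdf μ t - ProbabilityTheory.cdf ν t| := by
    simp_rw [← measureReal_def, ← ProbabilityTheory.cdf_eq_real]
  rw [hrhs]
  set P := volume.restrict (Set.Ioo (0:ℝ) 1) with hPdef
  have hQμ : AEMeasurable (quant μ) P :=
    aemeasurable_restrict_of_monotoneOn measurableSet_Ioo (quant_monotoneOn μ)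
  have hQν : AEMeasurable (quant ν) P :=
    aemeasurable_restrict_of_monotoneOn measurableSet_Ioo (quant_monotoneOn ν)
  set Qμ := hQμ.mk (quant μ) with hQμdef
  set Qν := hQν.mk (quant ν) with hQνdef
  have hQμm : Measurable Qμ := hQμ.measurable_mk
  have hQνm : Measurable Qν := hQν.measurable_mk
  have haeμ : Qμ =ᵐ[P] quant μ := hQμ.ae_eq_mk.symm
  have haeν : Qν =ᵐ[P] quant ν := hQν.ae_eq_mk.symm
  have hpair : Measurable (fun u => (Qμ u, Qν u)) := hQμm.prodMk hQνm
  set γ₀ : Measure (ℝ × ℝ) := P.map (fun u => (Qμ u, Qν u)) with hγ₀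
  have hprob : IsProbabilityMeasure γ₀ := Measure.isProbabilityMeasure_map hpair.aemeasurable
  have hm1 : γ₀.map Prod.fst = μ := by
    rw [hγ₀, Measure.map_map measurable_fst hpair]
    exact map_quant μ hQμm haeμ
  have hm2 : γ₀.map Prod.snd = ν := by
    rw [hγ₀, Measure.map_map measurable_snd hpair]
    exact map_quant ν hQνm haeν
  have hcost : ∫⁻ p, ENNReal.ofReal |p.1 - p.2| ∂γ₀
      = ∫⁻ t, ENNReal.ofReal |ProbabilityTheory.cdf μ t - ProbabilityTheory.cdf ν t| := by
    rw [hγ₀, lintegral_map (f := fun p : ℝ × ℝ => ENNReal.ofReal |p.1 - p.2|) ((measurable_fst.sub measurable_snd).abs.ennreal_ofReal) hpair]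
    exact quantile_coupling_cost μ ν hQμm hQνm haeμ haeν
  refine le_antisymm ?_ ?_
  · refine iInf_le_of_le γ₀ (iInf_le_of_le hprob (iInf_le_of_le hm1 (iInf_le_of_le hm2 ?_)))
    exact le_of_eq hcost
  · refine le_iInf fun γ => le_iInf fun hγ => le_iInf fun h1 => le_iInf fun h2 => ?_
    haveI := hγ
    exact coupling_lower μ ν γ h1 h2
end

section
/- Let μ be a probability measure on ℝ admitting a positive probability density f with cumulative distribution function F. Then for any probability measure ν on ℝ with cumulative distribution function G, W₁²(μ,ν) ≤ ∫_ℝ (F(x) − G(x))² / f(x) dx. -/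
open MeasureTheory ENNReal

open Set Filter ProbabilityTheory
open scoped Topology

noncomputable def qtl (μ : Measure ℝ) (u : ℝ) : ℝ :=
  if u ∈ Set.Ioo (0:ℝ) 1 then sInf {x | u ≤ cdf μ x} else 0

lemma qtl_le_iff (μ : Measure ℝ) [IsProbabilityMeasure μ] {u : ℝ} (hu : u ∈ Set.Ioo (0:ℝ) 1)
    (x : ℝ) : qtl μ u ≤ x ↔ u ≤ cdf μ x := by
  set S := {x | u ≤ cdf μ x} with hS
  have hne : S.Nonempty := by
    have : ∀ᶠ x in atTop, u ≤ cdf μ x :=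
      (tendsto_cdf_atTop μ).eventually (eventually_ge_nhds hu.2)
    exact this.exists
  have hbdd : BddBelow S := by
    have : ∀ᶠ x in atBot, cdf μ x < u :=
      (tendsto_cdf_atBot μ).eventually (eventually_lt_nhds hu.1)
    obtain ⟨x0, hx0⟩ := this.exists
    refine ⟨x0, fun z hz => ?_⟩
    by_contra h
    push_neg at h
    exact absurd (hz.trans ((monotone_cdf μ) h.le)) (not_le.2 hx0)
  have hq : qtl μ u = sInf S := if_pos hu
  constructor
  · intro h
    have key : u ≤ cdf μ (sInf S) := by
      have h1 : Tendsto (cdf μ) (𝓝[>] (sInf S)) (𝓝 (cdf μ (sInf S))) :=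
        ((cdf μ).right_continuous (sInf S)).tendsto.mono_left
          (nhdsWithin_mono _ Ioi_subset_Ici_self)
      refine ge_of_tendsto h1 ?_
      filter_upwards [self_mem_nhdsWithin] with y hy
      obtain ⟨s, hs, hsy⟩ := exists_lt_of_csInf_lt hne hy
      exact hs.trans ((monotone_cdf μ) hsy.le)
    rw [hq] at h
    exact key.trans ((monotone_cdf μ) h)
  · intro h
    rw [hq]
    exact csInf_le hbdd h

lemma qtl_measurable (μ : Measure ℝ) [IsProbabilityMeasure μ] : Measurable (qtl μ) := by
  refine measurable_of_Iic (fun x => ?_)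
  have : qtl μ ⁻¹' Set.Iic x
      = (Set.Ioo (0:ℝ) 1 ∩ Set.Iic (cdf μ x)) ∪ ((Set.Ioo (0:ℝ) 1)ᶜ ∩ {u : ℝ | (0:ℝ) ≤ x}) := by
    ext u
    by_cases hu : u ∈ Set.Ioo (0:ℝ) 1
    · simp [hu, qtl_le_iff μ hu x]
    · simp [hu, qtl, Set.mem_Iic]
  rw [this]
  exact ((measurableSet_Ioo.inter measurableSet_Iic).union
    (measurableSet_Ioo.compl.inter (MeasurableSet.const _)))

lemma vol_Iic_inter {c : ℝ} (h0 : 0 ≤ c) (h1 : c ≤ 1) :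
    volume (Set.Iic c ∩ Set.Ioo 0 1) = ENNReal.ofReal c := by
  apply le_antisymm
  · have hsub : Set.Iic c ∩ Set.Ioo (0:ℝ) 1 ⊆ Set.Ioc 0 c :=
      fun u hu => ⟨hu.2.1, hu.1⟩
    calc volume (Set.Iic c ∩ Set.Ioo 0 1) ≤ volume (Set.Ioc 0 c) := measure_mono hsub
      _ = ENNReal.ofReal c := by simp
  · have hsub : Set.Ioo (0:ℝ) c ⊆ Set.Iic c ∩ Set.Ioo 0 1 :=
      fun u hu => ⟨hu.2.le, hu.1, hu.2.trans_le h1⟩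
    calc ENNReal.ofReal c = volume (Set.Ioo 0 c) := by simp
      _ ≤ _ := measure_mono hsub

lemma qtl_map (μ : Measure ℝ) [IsProbabilityMeasure μ] :
    (volume.restrict (Set.Ioo (0:ℝ) 1)).map (qtl μ) = μ := by
  have hm := qtl_measurable μ
  haveI : IsProbabilityMeasure (volume.restrict (Set.Ioo (0:ℝ) 1)) :=
    ⟨by simp⟩
  haveI : IsProbabilityMeasure ((volume.restrict (Set.Ioo (0:ℝ) 1)).map (qtl μ)) :=
    Measure.isProbabilityMeasure_map hm.aemeasurable
  refine Measure.ext_of_Iic _ _ (fun x => ?_)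
  rw [Measure.map_apply hm measurableSet_Iic,
    Measure.restrict_apply (hm measurableSet_Iic)]
  have hset : qtl μ ⁻¹' Set.Iic x ∩ Set.Ioo 0 1 = Set.Iic (cdf μ x) ∩ Set.Ioo 0 1 := by
    ext u
    constructor
    · rintro ⟨h1, h2⟩; exact ⟨(qtl_le_iff μ h2 x).1 h1, h2⟩
    · rintro ⟨h1, h2⟩; exact ⟨(qtl_le_iff μ h2 x).2 h1, h2⟩
  rw [hset, vol_Iic_inter (cdf_nonneg μ x) (cdf_le_one μ x), ofReal_cdf]

lemma xor_set_eq (a b : ℝ) :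
    {x : ℝ | ¬(a ≤ x ↔ b ≤ x)} = Set.Ico (min a b) (max a b) := by
  ext x
  simp only [Set.mem_setOf_eq, Set.mem_Ico]
  constructor
  · intro h
    by_cases h1 : a ≤ x <;> by_cases h2 : b ≤ x
    · exact absurd (iff_of_true h1 h2) h
    · exact ⟨min_le_iff.2 (Or.inl h1), lt_max_iff.2 (Or.inr (not_le.1 h2))⟩
    · exact ⟨min_le_iff.2 (Or.inr h2), lt_max_iff.2 (Or.inl (not_le.1 h1))⟩
    · exact absurd (iff_of_false h1 h2) h
  · rintro ⟨hm, hM⟩ hab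
    rcases min_le_iff.1 hm with h1 | h1
    · exact absurd hM (not_lt.2 (max_le h1 (hab.1 h1)))
    · exact absurd hM (not_lt.2 (max_le (hab.2 h1) h1))

lemma vol_xor (a b : ℝ) :
    volume {x : ℝ | ¬(a ≤ x ↔ b ≤ x)} = ENNReal.ofReal |a - b| := by
  rw [xor_set_eq, Real.volume_Ico, max_sub_min_eq_abs, abs_sub_comm]

lemma xor_set_eq' (a b : ℝ) :
    {u : ℝ | ¬(u ≤ a ↔ u ≤ b)} = Set.Ioc (min a b) (max a b) := by
  ext u
  simp only [Set.mem_setOf_eq, Set.mem_Ioc]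
  constructor
  · intro h
    by_cases h1 : u ≤ a <;> by_cases h2 : u ≤ b
    · exact absurd (iff_of_true h1 h2) h
    · exact ⟨(min_le_right a b).trans_lt (not_le.1 h2), le_max_iff.2 (Or.inl h1)⟩
    · exact ⟨(min_le_left a b).trans_lt (not_le.1 h1), le_max_iff.2 (Or.inr h2)⟩
    · exact absurd (iff_of_false h1 h2) h
  · rintro ⟨hm, hM⟩ hab
    rcases le_max_iff.1 hM with h1 | h1
    · exact absurd hm (not_lt.2 (le_min h1 (hab.1 h1)))
    · exact absurd hm (not_lt.2 (le_min (hab.2 h1) h1))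

lemma vol_xor' {a b : ℝ} (ha : a ∈ Set.Icc (0:ℝ) 1) (hb : b ∈ Set.Icc (0:ℝ) 1) :
    volume ({u : ℝ | ¬(u ≤ a ↔ u ≤ b)} ∩ Set.Ioo 0 1) = ENNReal.ofReal |a - b| := by
  rw [xor_set_eq']
  have h0 : (0:ℝ) ≤ min a b := le_min ha.1 hb.1
  have h1 : max a b ≤ 1 := max_le ha.2 hb.2
  apply le_antisymm
  · calc volume (Set.Ioc (min a b) (max a b) ∩ Set.Ioo 0 1)
        ≤ volume (Set.Ioc (min a b) (max a b)) := measure_mono inter_subset_left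
      _ = ENNReal.ofReal |a - b| := by rw [Real.volume_Ioc, max_sub_min_eq_abs, abs_sub_comm]
  · have hsub : Set.Ioo (min a b) (max a b) ⊆ Set.Ioc (min a b) (max a b) ∩ Set.Ioo 0 1 :=
      fun u hu => ⟨⟨hu.1, hu.2.le⟩, h0.trans_lt hu.1, hu.2.trans_le h1⟩
    calc ENNReal.ofReal |a - b| = volume (Set.Ioo (min a b) (max a b)) := by
          rw [Real.volume_Ioo, max_sub_min_eq_abs, abs_sub_comm]
      _ ≤ _ := measure_mono hsub

-- STATEMENT 16: if μ has a positive density f, then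
-- W₁²(μ,ν) ≤ ∫ (F − G)²/f dx where F, G are the c.d.f.s of μ, ν.
theorem w1_sq_le_integral (f : ℝ → ℝ) (hfpos : ∀ x, 0 < f x) (hfm : Measurable f)
    (μ ν : Measure ℝ) [IsProbabilityMeasure μ] [IsProbabilityMeasure ν]
    (hμ : μ = volume.withDensity fun x => ENNReal.ofReal (f x)) :
    W1 μ ν ^ 2
      ≤ ∫⁻ x, ENNReal.ofReal
          (((μ (Set.Iic x)).toReal - (ν (Set.Iic x)).toReal) ^ 2 / f x) := by
  simp only [← measureReal_def, ← ProbabilityTheory.cdf_eq_real]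
  set P := volume.restrict (Set.Ioo (0:ℝ) 1) with hP
  haveI : IsProbabilityMeasure P := ⟨by simp [hP]⟩
  have hgμ := qtl_measurable μ
  have hgν := qtl_measurable ν
  have hpair : Measurable fun u => (qtl μ u, qtl ν u) := hgμ.prodMk hgν
  set γ := P.map (fun u => (qtl μ u, qtl ν u)) with hγ
  haveI hγprob : IsProbabilityMeasure γ := Measure.isProbabilityMeasure_map hpair.aemeasurable
  have hfst : γ.map Prod.fst = μ := by
    rw [hγ, Measure.map_map measurable_fst hpair]
    exact qtl_map μ
  have hsnd : γ.map Prod.snd = ν := by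
    rw [hγ, Measure.map_map measurable_snd hpair]
    exact qtl_map ν
  have hW : W1 μ ν ≤ ∫⁻ p, ENNReal.ofReal |p.1 - p.2| ∂γ :=
    iInf_le_of_le γ (iInf_le_of_le hγprob (iInf_le_of_le hfst (iInf_le_of_le hsnd le_rfl)))
  have hintm : Measurable fun p : ℝ × ℝ => ENNReal.ofReal |p.1 - p.2| :=
    (measurable_fst.sub measurable_snd).abs.ennreal_ofReal
  rw [hγ, lintegral_map hintm hpair] at hW
  -- the key identity: expected distance of the coupling equals ∫ |F - G|
  set s : Set (ℝ × ℝ) := {p | ¬(qtl μ p.1 ≤ p.2 ↔ qtl ν p.1 ≤ p.2)} with hs_def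
  have h1m : MeasurableSet {p : ℝ × ℝ | qtl μ p.1 ≤ p.2} :=
    measurableSet_le (hgμ.comp measurable_fst) measurable_snd
  have h2m : MeasurableSet {p : ℝ × ℝ | qtl ν p.1 ≤ p.2} :=
    measurableSet_le (hgν.comp measurable_fst) measurable_snd
  have hs : MeasurableSet s := by
    have : s = ({p : ℝ × ℝ | qtl μ p.1 ≤ p.2} ∩ {p : ℝ × ℝ | qtl ν p.1 ≤ p.2}ᶜ)
        ∪ ({p : ℝ × ℝ | qtl ν p.1 ≤ p.2} ∩ {p : ℝ × ℝ | qtl μ p.1 ≤ p.2}ᶜ) := by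
      ext p
      simp only [hs_def, Set.mem_setOf_eq, Set.mem_union, Set.mem_inter_iff, Set.mem_compl_iff]
      tauto
    rw [this]
    exact (h1m.inter h2m.compl).union (h2m.inter h1m.compl)
  have hI : ∫⁻ u, ENNReal.ofReal |qtl μ u - qtl ν u| ∂P
      = ∫⁻ x, ENNReal.ofReal |cdf μ x - cdf ν x| := by
    have key1 : ∀ u : ℝ, ENNReal.ofReal |qtl μ u - qtl ν u| = volume (Prod.mk u ⁻¹' s) := by
      intro u
      have : Prod.mk u ⁻¹' s = {x | ¬(qtl μ u ≤ x ↔ qtl ν u ≤ x)} := rfl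
      rw [this, vol_xor]
    calc ∫⁻ u, ENNReal.ofReal |qtl μ u - qtl ν u| ∂P
        = ∫⁻ u, volume (Prod.mk u ⁻¹' s) ∂P := by simp_rw [key1]
      _ = (P.prod volume) s := (Measure.prod_apply hs).symm
      _ = ∫⁻ x, P ((fun u => (u, x)) ⁻¹' s) ∂volume := Measure.prod_apply_symm hs
      _ = ∫⁻ x, ENNReal.ofReal |cdf μ x - cdf ν x| := by
          refine lintegral_congr fun x => ?_
          have hpre : (fun u => (u, x)) ⁻¹' s = {u | ¬(qtl μ u ≤ x ↔ qtl ν u ≤ x)} := rfl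
          rw [hpre, hP, Measure.restrict_apply' measurableSet_Ioo]
          have heq : {u | ¬(qtl μ u ≤ x ↔ qtl ν u ≤ x)} ∩ Set.Ioo 0 1
              = {u | ¬(u ≤ cdf μ x ↔ u ≤ cdf ν x)} ∩ Set.Ioo 0 1 := by
            ext u
            constructor
            · rintro ⟨h, hu⟩
              exact ⟨fun hiff => h (((qtl_le_iff μ hu x).trans hiff).trans
                (qtl_le_iff ν hu x).symm), hu⟩
            · rintro ⟨h, hu⟩
              exact ⟨fun hiff => h (((qtl_le_iff μ hu x).symm.trans hiff).trans
                (qtl_le_iff ν hu x)), hu⟩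
          rw [heq, vol_xor' ⟨cdf_nonneg μ x, cdf_le_one μ x⟩ ⟨cdf_nonneg ν x, cdf_le_one ν x⟩]
  rw [hI] at hW
  -- Cauchy-Schwarz
  have hfne : ∀ x, f x ≠ 0 := fun x => (hfpos x).ne'
  have hsqrtm : Measurable fun x => Real.sqrt (f x) := Real.continuous_sqrt.measurable.comp hfm
  set R := ∫⁻ x, ENNReal.ofReal ((cdf μ x - cdf ν x) ^ 2 / f x) with hR
  have hFm : Measurable fun x => cdf μ x := (monotone_cdf μ).measurable
  have hGm : Measurable fun x => cdf ν x := (monotone_cdf ν).measurable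
  have hconj : Real.HolderConjugate 2 2 := Real.HolderConjugate.two_two
  have hCS := ENNReal.lintegral_mul_le_Lp_mul_Lq volume hconj
    (f := fun x => ENNReal.ofReal (|cdf μ x - cdf ν x| / Real.sqrt (f x)))
    (g := fun x => ENNReal.ofReal (Real.sqrt (f x)))
    (((hFm.sub hGm).abs.div hsqrtm).ennreal_ofReal).aemeasurable
    (hsqrtm.ennreal_ofReal).aemeasurable
  have hprod : ∀ x : ℝ, ENNReal.ofReal |cdf μ x - cdf ν x|
      = ENNReal.ofReal (|cdf μ x - cdf ν x| / Real.sqrt (f x))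
        * ENNReal.ofReal (Real.sqrt (f x)) := by
    intro x
    rw [← ENNReal.ofReal_mul (by positivity),
      div_mul_cancel₀ _ (Real.sqrt_ne_zero'.2 (hfpos x))]
  have hfactor2 : ∫⁻ x, ENNReal.ofReal (Real.sqrt (f x)) ^ (2:ℝ) = 1 := by
    have hpt : ∀ x : ℝ, ENNReal.ofReal (Real.sqrt (f x)) ^ (2:ℝ) = ENNReal.ofReal (f x) := by
      intro x
      rw [ENNReal.ofReal_rpow_of_nonneg (Real.sqrt_nonneg _) (by norm_num : (0:ℝ) ≤ 2)]
      congr 1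
      rw [show ((2:ℝ)) = ((2:ℕ):ℝ) by norm_num, Real.rpow_natCast,
        Real.sq_sqrt (hfpos x).le]
    simp_rw [hpt]
    have := measure_univ (μ := μ)
    rw [hμ, withDensity_apply _ MeasurableSet.univ, Measure.restrict_univ] at this
    exact this
  have hfactor1 : ∫⁻ x, ENNReal.ofReal (|cdf μ x - cdf ν x| / Real.sqrt (f x)) ^ (2:ℝ) = R := by
    refine lintegral_congr fun x => ?_
    rw [ENNReal.ofReal_rpow_of_nonneg (by positivity) (by norm_num : (0:ℝ) ≤ 2)]
    congr 1
    rw [show ((2:ℝ)) = ((2:ℕ):ℝ) by norm_num, Real.rpow_natCast]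
    rw [div_pow, sq_abs, Real.sq_sqrt (hfpos x).le]
  have hWR : W1 μ ν ≤ R ^ (1/2 : ℝ) := by
    refine hW.trans ?_
    calc ∫⁻ x, ENNReal.ofReal |cdf μ x - cdf ν x|
        = ∫⁻ x, ENNReal.ofReal (|cdf μ x - cdf ν x| / Real.sqrt (f x))
            * ENNReal.ofReal (Real.sqrt (f x)) := by simp_rw [hprod]
      _ ≤ (∫⁻ x, ENNReal.ofReal (|cdf μ x - cdf ν x| / Real.sqrt (f x)) ^ (2:ℝ)) ^ (1/2:ℝ)
            * (∫⁻ x, ENNReal.ofReal (Real.sqrt (f x)) ^ (2:ℝ)) ^ (1/2:ℝ) := hCS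
      _ = R ^ (1/2:ℝ) := by rw [hfactor1, hfactor2, ENNReal.one_rpow, mul_one]
  calc W1 μ ν ^ 2 ≤ (R ^ (1/2:ℝ)) ^ 2 := pow_le_pow_left₀ zero_le hWR 2
    _ = R := by
        rw [← ENNReal.rpow_natCast (R ^ (1/2:ℝ)) 2, ← ENNReal.rpow_mul]
        norm_num
end

section
/- Let m > 0, let μ be the probability measure on ℝ with density f(x) = (1/2)e^{−|x|} and ν the probability measure with density g(x) = (1/2)e^{−|x−m|}, with cumulative distribution functions F and G respectively. Then W₂²(μ,ν) = m², while ∫_ℝ (F(x) − G(x))² / f(x) dx ≥ (e^{−m}/2)(e^m − 1)². In particular, ∫_ℝ (F−G)²/f dx cannot be controlled by a constant multiple of W₂²(μ,ν). -/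
open MeasureTheory ENNReal

open Real Set

lemma integrableOn_exp_neg_mul_abs_Ici {b : ℝ} (hb : 0 < b) :
    IntegrableOn (fun x : ℝ => Real.exp (-(b * |x|))) (Ici 0) := by
  rw [integrableOn_Ici_iff_integrableOn_Ioi]
  exact (exp_neg_integrableOn_Ioi 0 hb).congr_fun
    (fun x hx => by rw [abs_of_pos hx]; simp only [neg_mul]) measurableSet_Ioi

lemma integrable_exp_neg_mul_abs {b : ℝ} (hb : 0 < b) :
    Integrable (fun x : ℝ => Real.exp (-(b * |x|))) := by
  rw [← integrableOn_univ, ← Set.Iic_union_Ioi (a := (0:ℝ)), integrableOn_union]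
  refine ⟨?_, (integrableOn_exp_neg_mul_abs_Ici hb).mono_set Ioi_subset_Ici_self⟩
  have h : IntegrableOn (fun x : ℝ => Real.exp (-(b * |(-x)|))) (Iic 0) := by
    refine ((MeasurePreserving.integrableOn_comp_preimage (Measure.measurePreserving_neg volume)
      (Homeomorph.neg ℝ).measurableEmbedding).2 (integrableOn_exp_neg_mul_abs_Ici hb)).mono_set ?_
    intro x hx
    simpa using hx
  simpa using h

lemma integrable_exp_neg_abs : Integrable (fun x : ℝ => Real.exp (-|x|)) := by
  simpa using integrable_exp_neg_mul_abs one_pos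

lemma integrable_id_exp_neg_abs : Integrable (fun x : ℝ => x * (Real.exp (-|x|) / 2)) := by
  refine (integrable_exp_neg_mul_abs (b := 1/2) (by norm_num)).mono ?_ ?_
  · exact (continuous_id.mul ((continuous_abs.neg.rexp).div_const 2)).aestronglyMeasurable
  · refine Filter.Eventually.of_forall fun x => ?_
    rw [Real.norm_eq_abs, Real.norm_eq_abs, abs_of_pos (Real.exp_pos _), abs_mul,
      abs_div, abs_of_pos (Real.exp_pos _), abs_two]
    have h1 : |x| / 2 ≤ Real.exp (|x| / 2) := (Real.add_one_le_exp _).trans' (by linarith)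
    have h2 : Real.exp (-|x|) = Real.exp (-(1/2 * |x|)) * Real.exp (-(|x|/2)) := by
      rw [← Real.exp_add]; ring_nf
    rw [h2]
    have h3 : Real.exp (-(|x|/2)) = (Real.exp (|x|/2))⁻¹ := by
      rw [← Real.exp_neg]
    calc |x| * (Real.exp (-(1/2 * |x|)) * Real.exp (-(|x|/2)) / 2)
        = (|x|/2 * Real.exp (-(|x|/2))) * Real.exp (-(1/2 * |x|)) := by ring
      _ ≤ 1 * Real.exp (-(1/2 * |x|)) := by
          refine mul_le_mul_of_nonneg_right ?_ (Real.exp_pos _).le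
          rw [h3]
          rw [← div_eq_mul_inv, div_le_one (Real.exp_pos _)]
          exact h1
      _ = Real.exp (-(1/2 * |x|)) := one_mul _

-- real integral computations
lemma setIntegral_laplace_Iic_zero : ∫ t in Iic (0:ℝ), Real.exp (-|t|) / 2 = 1/2 := by
  rw [setIntegral_congr_fun measurableSet_Iic
    (g := fun t => Real.exp t / 2) (fun t ht => by rw [abs_of_nonpos ht, neg_neg]),
    integral_div, integral_exp_Iic_zero]

lemma setIntegral_laplace_Ioi (a : ℝ) (ha : 0 ≤ a) :
    ∫ t in Ioi a, Real.exp (-|t|) / 2 = Real.exp (-a) / 2 := by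
  rw [setIntegral_congr_fun measurableSet_Ioi
    (g := fun t => Real.exp (-t) / 2) (fun t ht => by rw [abs_of_pos (lt_of_le_of_lt ha ht)]),
    integral_div, integral_exp_neg_Ioi]

lemma setIntegral_laplace_Ioc (x : ℝ) (hx : 0 ≤ x) :
    ∫ t in Ioc (0:ℝ) x, Real.exp (-|t|) / 2 = (1 - Real.exp (-x)) / 2 := by
  rw [setIntegral_congr_fun measurableSet_Ioc
    (g := fun t => Real.exp (-t) / 2) (fun t ht => by rw [abs_of_pos ht.1]),
    ← intervalIntegral.integral_of_le hx, intervalIntegral.integral_div]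
  have : (∫ t in (0:ℝ)..x, Real.exp (-t)) = 1 - Real.exp (-x) := by
    rw [intervalIntegral.integral_comp_neg (fun t => Real.exp t), integral_exp]
    simp
  rw [this]

lemma integrable_exp_neg_abs_div_two : Integrable (fun x : ℝ => Real.exp (-|x|) / 2) := by
  simpa using (integrable_exp_neg_mul_abs one_pos).div_const 2


noncomputable def lapDen : ℝ → ℝ≥0∞ := fun x => ENNReal.ofReal (Real.exp (-|x|) / 2)

lemma lapDen_meas : Measurable lapDen :=
  (ENNReal.measurable_ofReal.comp ((continuous_abs.neg.rexp.div_const 2).measurable))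

lemma lap_nonneg : ∀ x : ℝ, 0 ≤ Real.exp (-|x|) / 2 := fun x => by positivity

lemma lap_set_apply {s : Set ℝ} (hs : MeasurableSet s) :
    (volume.withDensity lapDen) s = ENNReal.ofReal (∫ t in s, Real.exp (-|t|) / 2) := by
  rw [withDensity_apply _ hs]
  simp only [lapDen]
  rw [← ofReal_integral_eq_lintegral_ofReal integrable_exp_neg_abs_div_two.integrableOn
      (Filter.Eventually.of_forall lap_nonneg)]

lemma lap_cdf {x : ℝ} (hx : 0 ≤ x) :
    (volume.withDensity lapDen) (Iic x) = ENNReal.ofReal (1 - Real.exp (-x) / 2) := by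
  rw [lap_set_apply measurableSet_Iic, ← Iic_union_Ioc_eq_Iic hx,
    setIntegral_union (Iic_disjoint_Ioc le_rfl) measurableSet_Ioc
      integrable_exp_neg_abs_div_two.integrableOn integrable_exp_neg_abs_div_two.integrableOn,
    setIntegral_laplace_Iic_zero, setIntegral_laplace_Ioc x hx]
  ring_nf

instance lap_prob : IsProbabilityMeasure (volume.withDensity lapDen) := by
  constructor
  rw [lap_set_apply MeasurableSet.univ, ← Set.Iic_union_Ioi (a := (0:ℝ)),
    setIntegral_union (Iic_disjoint_Ioi le_rfl) measurableSet_Ioi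
      integrable_exp_neg_abs_div_two.integrableOn integrable_exp_neg_abs_div_two.integrableOn,
    setIntegral_laplace_Iic_zero, setIntegral_laplace_Ioi 0 le_rfl]
  norm_num

lemma lap_map (m : ℝ) :
    (volume.withDensity lapDen).map (fun x => x + m)
      = volume.withDensity fun x => ENNReal.ofReal (Real.exp (-|x - m|) / 2) := by
  ext s hs
  rw [Measure.map_apply (measurable_add_const m) hs,
    withDensity_apply _ (hs.preimage (measurable_add_const m)), withDensity_apply _ hs]
  have key := setLIntegral_map (μ := volume) hs
    (f := fun x => ENNReal.ofReal (Real.exp (-|x - m|) / 2)) (g := fun x => x + m)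
    (ENNReal.measurable_ofReal.comp
      (((continuous_id.sub continuous_const).abs.neg.rexp.div_const 2).measurable))
    (measurable_add_const m)
  rw [map_add_right_eq_self volume m] at key
  simp only [add_sub_cancel_right] at key
  simp only [lapDen]
  rw [key]



lemma integrable_id_lap : Integrable (fun x : ℝ => x) (volume.withDensity lapDen) := by
  rw [integrable_withDensity_iff lapDen_meas (Filter.Eventually.of_forall fun x => ofReal_lt_top)]
  have : (fun x : ℝ => x * (lapDen x).toReal) = fun x : ℝ => x * (Real.exp (-|x|) / 2) := by
    funext x
    rw [lapDen, toReal_ofReal (by positivity)]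
  rw [this]
  exact integrable_id_exp_neg_abs

lemma w2_upper (m : ℝ) :
    W2sq (volume.withDensity lapDen) ((volume.withDensity lapDen).map (fun x => x + m))
      ≤ ENNReal.ofReal (m ^ 2) := by
  set μ0 := volume.withDensity lapDen
  have hmeas : Measurable (fun x : ℝ => (x, x + m)) :=
    measurable_id.prodMk (measurable_add_const m)
  set γ := μ0.map (fun x => (x, x + m)) with hγ
  have hprob : IsProbabilityMeasure γ := Measure.isProbabilityMeasure_map hmeas.aemeasurable
  have hfst : γ.map Prod.fst = μ0 := by
    rw [hγ, Measure.map_map measurable_fst hmeas]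
    simp [Function.comp_def]
  have hsnd : γ.map Prod.snd = μ0.map (fun x => x + m) := by
    rw [hγ, Measure.map_map measurable_snd hmeas]
    rfl
  refine le_trans (iInf_le _ γ) (le_trans (iInf_le _ hprob)
    (le_trans (iInf_le _ hfst) (le_trans (iInf_le _ hsnd) ?_)))
  rw [hγ, lintegral_map (by fun_prop) hmeas]
  simp only [show ∀ x : ℝ, x - (x + m) = -m by intro x; ring, norm_neg, Real.norm_eq_abs, sq_abs]
  rw [lintegral_const, measure_univ, mul_one]

lemma w2_lower (m : ℝ) (γ : Measure (ℝ × ℝ)) [IsProbabilityMeasure γ]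
    (h1 : γ.map Prod.fst = volume.withDensity lapDen)
    (h2 : γ.map Prod.snd = (volume.withDensity lapDen).map (fun x => x + m)) :
    ENNReal.ofReal (m ^ 2) ≤ ∫⁻ p, ENNReal.ofReal (‖p.1 - p.2‖ ^ 2) ∂γ := by
  set μ0 := volume.withDensity lapDen
  have iid : Integrable (fun x : ℝ => x) μ0 := integrable_id_lap
  have iishift : Integrable (fun x : ℝ => x) (μ0.map (fun x => x + m)) := by
    rw [integrable_map_measure (g := fun x : ℝ => x) measurable_id.aestronglyMeasurable
      (measurable_add_const m).aemeasurable]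
    exact iid.add (integrable_const m)
  have ip1 : Integrable (fun p : ℝ × ℝ => p.1) γ := by
    have := (integrable_map_measure (g := fun x : ℝ => x) measurable_id.aestronglyMeasurable
      measurable_fst.aemeasurable).mp (h1 ▸ iid)
    exact this
  have ip2 : Integrable (fun p : ℝ × ℝ => p.2) γ := by
    have := (integrable_map_measure (g := fun x : ℝ => x) measurable_id.aestronglyMeasurable
      measurable_snd.aemeasurable).mp (h2 ▸ iishift)
    exact this
  have M1 : ∫ p : ℝ × ℝ, p.1 ∂γ = ∫ x : ℝ, x ∂μ0 := by
    have e1 : ∫ x : ℝ, x ∂(γ.map Prod.fst) = ∫ p : ℝ × ℝ, p.1 ∂γ :=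
      integral_map (f := fun x : ℝ => x) measurable_fst.aemeasurable
        measurable_id.aestronglyMeasurable
    rw [h1] at e1
    exact e1.symm
  have M2 : ∫ p : ℝ × ℝ, p.2 ∂γ = (∫ x : ℝ, x ∂μ0) + m := by
    have e1 : ∫ x : ℝ, x ∂(γ.map Prod.snd) = ∫ p : ℝ × ℝ, p.2 ∂γ :=
      integral_map (f := fun x : ℝ => x) measurable_snd.aemeasurable
        measurable_id.aestronglyMeasurable
    have e2 : ∫ x : ℝ, x ∂(μ0.map (fun x => x + m)) = ∫ x : ℝ, x + m ∂μ0 :=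
      integral_map (f := fun x : ℝ => x) (measurable_add_const m).aemeasurable
        measurable_id.aestronglyMeasurable
    rw [h2, e2, integral_add iid (integrable_const m), integral_const, probReal_univ] at e1
    rw [← e1]
    simp
  have ipsub : Integrable (fun p : ℝ × ℝ => p.2 - p.1) γ := ip2.sub ip1
  have isub : Integrable (fun p : ℝ × ℝ => p.2 - p.1 - m) γ :=
    ipsub.sub (integrable_const m)
  have imul : Integrable (fun p : ℝ × ℝ => 2 * m * (p.2 - p.1 - m)) γ := isub.const_mul (2 * m)
  have ig : Integrable (fun p : ℝ × ℝ => m ^ 2 + 2 * m * (p.2 - p.1 - m)) γ :=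
    (integrable_const _).add imul
  have intg : ∫ p : ℝ × ℝ, (m ^ 2 + 2 * m * (p.2 - p.1 - m)) ∂γ = m ^ 2 := by
    rw [integral_add (integrable_const _) imul,
      integral_const, probReal_univ, integral_const_mul,
      integral_sub ipsub (integrable_const m),
      integral_sub ip2 ip1, M1, M2, integral_const, probReal_univ]
    simp
  have hle : ∀ p : ℝ × ℝ, m ^ 2 + 2 * m * (p.2 - p.1 - m) ≤ ‖p.1 - p.2‖ ^ 2 := by
    intro p
    rw [Real.norm_eq_abs, sq_abs]
    nlinarith [sq_nonneg (p.2 - p.1 - m)]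
  calc ENNReal.ofReal (m ^ 2)
      = ENNReal.ofReal (∫ p : ℝ × ℝ, (m ^ 2 + 2 * m * (p.2 - p.1 - m)) ∂γ) := by rw [intg]
    _ ≤ ENNReal.ofReal (∫ p : ℝ × ℝ, max (m ^ 2 + 2 * m * (p.2 - p.1 - m)) 0 ∂γ) := by
        apply ENNReal.ofReal_le_ofReal
        exact integral_mono ig ig.pos_part (fun p => le_max_left _ _)
    _ = ∫⁻ p, ENNReal.ofReal (max (m ^ 2 + 2 * m * (p.2 - p.1 - m)) 0) ∂γ :=
        ofReal_integral_eq_lintegral_ofReal ig.pos_part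
          (Filter.Eventually.of_forall fun p => le_max_right _ _)
    _ ≤ ∫⁻ p, ENNReal.ofReal (‖p.1 - p.2‖ ^ 2) ∂γ := by
        apply lintegral_mono
        intro p
        apply ENNReal.ofReal_le_ofReal
        exact max_le (hle p) (by positivity)


lemma part2 (m : ℝ) (hm : 0 < m) :
    ENNReal.ofReal (Real.exp (-m) / 2 * (Real.exp m - 1) ^ 2)
      ≤ ∫⁻ x, ENNReal.ofReal
          ((((volume.withDensity lapDen) (Set.Iic x)).toReal -
            (((volume.withDensity lapDen).map (fun y => y + m)) (Set.Iic x)).toReal) ^ 2 /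
            (Real.exp (-|x|) / 2)) := by
  set c : ℝ := (Real.exp m - 1) ^ 2 / 2 with hc
  have key : ∀ x ∈ Ioi m,
      ENNReal.ofReal ((((volume.withDensity lapDen) (Set.Iic x)).toReal -
            (((volume.withDensity lapDen).map (fun y => y + m)) (Set.Iic x)).toReal) ^ 2 /
            (Real.exp (-|x|) / 2)) = ENNReal.ofReal (Real.exp (-x) * c) := by
    intro x hx
    have hxm : 0 ≤ x - m := by simp only [mem_Ioi] at hx; linarith
    have hx0 : 0 < x := lt_trans hm hx
    have hF : ((volume.withDensity lapDen) (Set.Iic x)).toReal = 1 - Real.exp (-x) / 2 := by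
      rw [lap_cdf hx0.le, toReal_ofReal]
      have := Real.exp_le_one_iff.mpr (neg_nonpos.mpr hx0.le)
      linarith
    have hG : (((volume.withDensity lapDen).map (fun y => y + m)) (Set.Iic x)).toReal
        = 1 - Real.exp (-(x - m)) / 2 := by
      rw [Measure.map_apply (measurable_add_const m) measurableSet_Iic]
      have : (fun y => y + m) ⁻¹' Iic x = Iic (x - m) := by
        ext y; simp [le_sub_iff_add_le]
      rw [this, lap_cdf hxm, toReal_ofReal]
      have := Real.exp_le_one_iff.mpr (neg_nonpos.mpr hxm)
      linarith
    rw [hF, hG]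
    congr 1
    rw [abs_of_pos hx0, hc]
    have hsub : (1 - Real.exp (-x) / 2 - (1 - Real.exp (-(x - m)) / 2))
        = Real.exp (-x) * (Real.exp m - 1) / 2 := by
      have : Real.exp (-(x - m)) = Real.exp m * Real.exp (-x) := by
        rw [← Real.exp_add]; ring_nf
      rw [this]; ring
    rw [hsub]
    rw [div_div_eq_mul_div]
    field_simp
  calc ENNReal.ofReal (Real.exp (-m) / 2 * (Real.exp m - 1) ^ 2)
      = ENNReal.ofReal (∫ x in Ioi m, Real.exp (-x) * c) := by
        rw [integral_mul_const, integral_exp_neg_Ioi, hc]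
        congr 1; ring
    _ = ∫⁻ x in Ioi m, ENNReal.ofReal (Real.exp (-x) * c) := by
        refine ofReal_integral_eq_lintegral_ofReal ?_
          (Filter.Eventually.of_forall fun x => by positivity)
        exact ((exp_neg_integrableOn_Ioi m one_pos).congr_fun
          (fun x _ => by rw [neg_mul, one_mul]) measurableSet_Ioi).mul_const c
    _ = ∫⁻ x in Ioi m, ENNReal.ofReal
          ((((volume.withDensity lapDen) (Set.Iic x)).toReal -
            (((volume.withDensity lapDen).map (fun y => y + m)) (Set.Iic x)).toReal) ^ 2 /
            (Real.exp (-|x|) / 2)) :=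
        (setLIntegral_congr_fun measurableSet_Ioi key).symm
    _ ≤ _ := setLIntegral_le_lintegral _ _

theorem counterexample_laplace (m : ℝ) (hm : 0 < m) (μ ν : Measure ℝ)
    (hμ : μ = volume.withDensity fun x => ENNReal.ofReal (Real.exp (-|x|) / 2))
    (hν : ν = volume.withDensity fun x => ENNReal.ofReal (Real.exp (-|x - m|) / 2)) :
    W2sq μ ν = ENNReal.ofReal (m ^ 2) ∧
    ENNReal.ofReal (Real.exp (-m) / 2 * (Real.exp m - 1) ^ 2)
      ≤ ∫⁻ x, ENNReal.ofReal
          (((μ (Set.Iic x)).toReal - (ν (Set.Iic x)).toReal) ^ 2 /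
            (Real.exp (-|x|) / 2)) := by
  have hlap : (volume.withDensity fun x => ENNReal.ofReal (Real.exp (-|x|) / 2))
      = volume.withDensity lapDen := rfl
  subst hμ
  subst hν
  have hν' : (volume.withDensity fun x => ENNReal.ofReal (Real.exp (-|x - m|) / 2))
      = (volume.withDensity lapDen).map (fun x => x + m) := (lap_map m).symm
  rw [hlap, hν']
  constructor
  · refine le_antisymm (w2_upper m) ?_
    refine le_iInf fun γ => le_iInf fun hγ => le_iInf fun h1 => le_iInf fun h2 => ?_
    haveI := hγ
    exact w2_lower m γ h1 h2
  · exact part2 m hm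
end

section
/- Let f be a positive probability density on ℝ with cumulative distribution function F and median m such that b := max( sup_{x≥m} (∫_x^{+∞} f(y) dy)(∫_m^x dy/f(y)), sup_{x≤m} (∫_{−∞}^x f(y) dy)(∫_x^m dy/f(y)) ) < +∞, and let g be a probability density on ℝ with cumulative distribution function G such that ∫_ℝ (f−g)²/f dx < +∞. Then ∫_ℝ (F(x)−G(x))² / f(x) dx ≤ 2b ∫_ℝ |(F(x)−G(x))(f(x)−g(x))| ( 1_{x≥m} / ∫_x^{+∞} f(y) dy + 1_{x<m} / ∫_{−∞}^x f(y) dy ) dx. -/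
open MeasureTheory ENNReal

lemma sq_integral_eq (T : ℝ → ℝ) (hTi : Integrable T) :
    (∫ v, T v) ^ 2 = 2 * ∫ v, T v * ∫ u in Set.Iic v, T u := by
  have hprod : Integrable (fun p : ℝ × ℝ => T p.1 * T p.2)
      ((volume : Measure ℝ).prod volume) := hTi.mul_prod hTi
  have hB : MeasurableSet {p : ℝ × ℝ | p.2 ≤ p.1} := measurableSet_le measurable_snd measurable_fst
  have hBo : MeasurableSet {p : ℝ × ℝ | p.2 < p.1} := measurableSet_lt measurable_snd measurable_fst
  have hIic : ∀ x : ℝ, ∫ u in Set.Iio x, T u = ∫ u in Set.Iic x, T u := fun x =>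
    setIntegral_congr_set Iio_ae_eq_Iic
  have calc1 : ∫ p in {p : ℝ × ℝ | p.2 ≤ p.1}, T p.1 * T p.2 ∂((volume : Measure ℝ).prod volume)
      = ∫ x, T x * ∫ u in Set.Iic x, T u := by
    rw [← integral_indicator hB, integral_prod _ (hprod.indicator hB)]
    refine integral_congr_ae (Filter.Eventually.of_forall fun x => ?_)
    have : (fun y => Set.indicator {p : ℝ × ℝ | p.2 ≤ p.1} (fun p => T p.1 * T p.2) (x, y))
        = fun y => Set.indicator (Set.Iic x) (fun y => T x * T y) y := by
      funext y
      by_cases hy : y ≤ x <;> simp [Set.indicator, hy]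
    dsimp only
    rw [this, integral_indicator measurableSet_Iic, MeasureTheory.integral_const_mul]
  have calc2 : ∫ p in {p : ℝ × ℝ | p.2 < p.1}, T p.1 * T p.2 ∂((volume : Measure ℝ).prod volume)
      = ∫ x, T x * ∫ u in Set.Iic x, T u := by
    rw [← integral_indicator hBo, integral_prod _ (hprod.indicator hBo)]
    have h1 : ∀ x : ℝ, (fun y => Set.indicator {p : ℝ × ℝ | p.2 < p.1} (fun p => T p.1 * T p.2) (x, y))
        = fun y => Set.indicator (Set.Iio x) (fun y => T x * T y) y := by
      intro x; funext y
      by_cases hy : y < x <;> simp [Set.indicator, hy]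
    refine integral_congr_ae (Filter.Eventually.of_forall fun x => ?_)
    dsimp only
    rw [h1 x, integral_indicator measurableSet_Iio, MeasureTheory.integral_const_mul]
    rw [hIic x]
  have hcompl : {p : ℝ × ℝ | p.2 ≤ p.1}ᶜ = Prod.swap ⁻¹' {p : ℝ × ℝ | p.2 < p.1} := by
    ext p; simp [not_le, Prod.swap]
  have hemb : MeasurableEmbedding (Prod.swap : ℝ × ℝ → ℝ × ℝ) :=
    MeasurableEquiv.prodComm.measurableEmbedding
  have calc3 : ∫ p in {p : ℝ × ℝ | p.2 ≤ p.1}ᶜ, T p.1 * T p.2 ∂((volume : Measure ℝ).prod volume)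
      = ∫ x, T x * ∫ u in Set.Iic x, T u := by
    rw [hcompl]
    have hswap := (Measure.measurePreserving_swap (μ := (volume : Measure ℝ))
      (ν := volume)).setIntegral_preimage_emb hemb
      (fun p : ℝ × ℝ => T p.1 * T p.2) {p : ℝ × ℝ | p.2 < p.1}
    calc ∫ p in Prod.swap ⁻¹' {p : ℝ × ℝ | p.2 < p.1}, T p.1 * T p.2
          ∂((volume : Measure ℝ).prod volume)
        = ∫ p in Prod.swap ⁻¹' {p : ℝ × ℝ | p.2 < p.1},
            (fun q : ℝ × ℝ => T q.1 * T q.2) (Prod.swap p) ∂((volume : Measure ℝ).prod volume) := by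
          refine integral_congr_ae (Filter.Eventually.of_forall fun p => ?_)
          simp [mul_comm]
      _ = ∫ q in {p : ℝ × ℝ | p.2 < p.1}, T q.1 * T q.2 ∂((volume : Measure ℝ).prod volume) := hswap
      _ = ∫ x, T x * ∫ u in Set.Iic x, T u := calc2
  have expand : (∫ v, T v) ^ 2 = ∫ p : ℝ × ℝ, T p.1 * T p.2 ∂((volume : Measure ℝ).prod volume) := by
    rw [integral_prod_mul]; ring
  rw [expand, ← integral_add_compl hB hprod, calc1, calc3]; ring


lemma main_aux (f g H : ℝ → ℝ) (hfpos : ∀ x, 0 < f x) (hgpos : ∀ x, 0 ≤ g x)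
    (hfm : Measurable f) (hgm : Measurable g)
    (hf1 : ∫⁻ x, ENNReal.ofReal (f x) = 1) (hg1 : ∫⁻ x, ENNReal.ofReal (g x) = 1)
    (m : ℝ) (hb : bConst f m ≠ ⊤)
    (hHdef : ∀ x, H x = (∫ y in Set.Iic x, f y) - ∫ y in Set.Iic x, g y) :
    ∫⁻ x, ENNReal.ofReal (H x ^ 2 / f x)
      ≤ 2 * bConst f m *
        ∫⁻ x, ENNReal.ofReal (|H x * (f x - g x)|) *
          ((Set.Ici m).indicator (fun _ => (1 : ℝ≥0∞)) x *
            (∫⁻ y in Set.Ioi x, ENNReal.ofReal (f y))⁻¹ +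
          (Set.Iio m).indicator (fun _ => (1 : ℝ≥0∞)) x *
            (∫⁻ y in Set.Iic x, ENNReal.ofReal (f y))⁻¹) := by
  have hfnn : ∀ x, (0:ℝ) ≤ f x := fun x => (hfpos x).le
  have hfi : Integrable f := by
    refine ⟨hfm.aestronglyMeasurable, ?_⟩
    rw [hasFiniteIntegral_iff_ofReal (Filter.Eventually.of_forall hfnn)]
    rw [hf1]; exact one_lt_top
  have hgi : Integrable g := by
    refine ⟨hgm.aestronglyMeasurable, ?_⟩
    rw [hasFiniteIntegral_iff_ofReal (Filter.Eventually.of_forall hgpos)]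
    rw [hg1]; exact one_lt_top
  have hfint : ∫ y, f y = 1 := by
    rw [integral_eq_lintegral_of_nonneg_ae (Filter.Eventually.of_forall hfnn)
      hfm.aestronglyMeasurable, hf1]; simp
  have hgint : ∫ y, g y = 1 := by
    rw [integral_eq_lintegral_of_nonneg_ae (Filter.Eventually.of_forall hgpos)
      hgm.aestronglyMeasurable, hg1]; simp
  have hhi : Integrable (fun x => f x - g x) := hfi.sub hgi
  have hhm : Measurable (fun x => f x - g x) := hfm.sub hgm
  have hHint : ∀ x, H x = ∫ y in Set.Iic x, (f y - g y) := fun x => by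
    rw [hHdef x, ← integral_sub hfi.integrableOn hgi.integrableOn]
  -- measurability of H
  have hFmono : Monotone fun x => ∫ y in Set.Iic x, f y := fun a b hab =>
    setIntegral_mono_set hfi.integrableOn (Filter.Eventually.of_forall fun x => hfnn x)
      (HasSubset.Subset.eventuallyLE (Set.Iic_subset_Iic.2 hab))
  have hGmono : Monotone fun x => ∫ y in Set.Iic x, g y := fun a b hab =>
    setIntegral_mono_set hgi.integrableOn (Filter.Eventually.of_forall hgpos)
      (HasSubset.Subset.eventuallyLE (Set.Iic_subset_Iic.2 hab))
  have hHmeas : Measurable H := by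
    have : H = fun x => (∫ y in Set.Iic x, f y) - ∫ y in Set.Iic x, g y := funext hHdef
    rw [this]; exact hFmono.measurable.sub hGmono.measurable
  -- boundedness of H
  have hHbdd : ∀ x, |H x| ≤ 1 := by
    intro x
    rw [hHdef x, abs_sub_le_iff]
    have h1 : ∫ y in Set.Iic x, f y ≤ 1 :=
      hfint ▸ setIntegral_le_integral hfi (Filter.Eventually.of_forall hfnn)
    have h2 : ∫ y in Set.Iic x, g y ≤ 1 :=
      hgint ▸ setIntegral_le_integral hgi (Filter.Eventually.of_forall hgpos)
    have h3 : 0 ≤ ∫ y in Set.Iic x, f y := setIntegral_nonneg measurableSet_Iic fun y _ => hfnn y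
    have h4 : 0 ≤ ∫ y in Set.Iic x, g y := setIntegral_nonneg measurableSet_Iic fun y _ => hgpos y
    constructor <;> linarith
  have hHh : Integrable (fun v => H v * (f v - g v)) :=
    hhi.bdd_mul (c := 1) hHmeas.aestronglyMeasurable (Filter.Eventually.of_forall fun x => by rw [Real.norm_eq_abs]; exact hHbdd x)
  -- key identity on Iic
  have keyIic : ∀ x : ℝ, H x ^ 2 = 2 * ∫ v in Set.Iic x, H v * (f v - g v) := by
    intro x
    have hT : Integrable ((Set.Iic x).indicator fun y => f y - g y) :=
      hhi.indicator measurableSet_Iic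
    have e1 : ∫ v, (Set.Iic x).indicator (fun y => f y - g y) v = H x := by
      rw [integral_indicator measurableSet_Iic, ← hHint x]
    have hkey := sq_integral_eq _ hT
    rw [e1] at hkey
    rw [hkey]
    congr 1
    have e3 : (fun v => (Set.Iic x).indicator (fun y => f y - g y) v *
        ∫ u in Set.Iic v, (Set.Iic x).indicator (fun y => f y - g y) u)
        = (Set.Iic x).indicator (fun v => H v * (f v - g v)) := by
      funext v
      rw [setIntegral_indicator measurableSet_Iic, Set.Iic_inter_Iic]
      by_cases hv : v ≤ x
      · rw [Set.indicator_of_mem (Set.mem_Iic.2 hv), Set.indicator_of_mem (Set.mem_Iic.2 hv),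
          min_eq_left hv, ← hHint v, mul_comm]
      · rw [Set.indicator_of_notMem (fun hc => hv (Set.mem_Iic.1 hc)),
          Set.indicator_of_notMem (fun hc => hv (Set.mem_Iic.1 hc)), zero_mul]
    rw [e3, integral_indicator measurableSet_Iic]
  -- total integral is zero
  have keyTot : ∫ v, H v * (f v - g v) = 0 := by
    have hkey := sq_integral_eq (fun y => f y - g y) hhi
    have hint0 : ∫ v, (f v - g v) = 0 := by
      rw [integral_sub hfi hgi, hfint, hgint]; ring
    rw [hint0] at hkey
    have e : ∫ v, (f v - g v) * ∫ u in Set.Iic v, (f u - g u) = ∫ v, H v * (f v - g v) := by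
      refine integral_congr_ae (Filter.Eventually.of_forall fun v => ?_)
      dsimp only
      rw [← hHint v, mul_comm]
    rw [e] at hkey
    linarith [hkey]
  -- key identity on Ioi
  have keyIoi : ∀ x : ℝ, H x ^ 2 = -(2 * ∫ v in Set.Ioi x, H v * (f v - g v)) := by
    intro x
    have hsum := integral_add_compl (measurableSet_Iic (a := x)) hHh
    rw [Set.compl_Iic, keyTot] at hsum
    rw [keyIic x]; linarith
  -- pass to ENNReal
  have hΦm : Measurable (fun v => ENNReal.ofReal (|H v * (f v - g v)|)) :=
    ENNReal.measurable_ofReal.comp ((hHmeas.mul hhm).abs)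
  have boundIoi : ∀ x : ℝ, ENNReal.ofReal (H x ^ 2)
      ≤ 2 * ∫⁻ v in Set.Ioi x, ENNReal.ofReal (|H v * (f v - g v)|) := by
    intro x
    have habs : |∫ v in Set.Ioi x, H v * (f v - g v)| ≤ ∫ v in Set.Ioi x, |H v * (f v - g v)| := by
      simpa only [Real.norm_eq_abs] using norm_integral_le_integral_norm
        (μ := volume.restrict (Set.Ioi x)) (fun v => H v * (f v - g v))
    have h1 : H x ^ 2 ≤ 2 * ∫ v in Set.Ioi x, |H v * (f v - g v)| := by
      have h2 := neg_abs_le (∫ v in Set.Ioi x, H v * (f v - g v))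
      rw [keyIoi x]; linarith
    calc ENNReal.ofReal (H x ^ 2)
        ≤ ENNReal.ofReal (2 * ∫ v in Set.Ioi x, |H v * (f v - g v)|) :=
          ENNReal.ofReal_le_ofReal h1
      _ = 2 * ENNReal.ofReal (∫ v in Set.Ioi x, |H v * (f v - g v)|) := by
          rw [ENNReal.ofReal_mul (by norm_num)]; norm_num
      _ = 2 * ∫⁻ v in Set.Ioi x, ENNReal.ofReal (|H v * (f v - g v)|) := by
          rw [ofReal_integral_eq_lintegral_ofReal (hHh.abs.restrict)
            (Filter.Eventually.of_forall fun v => abs_nonneg _)]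
  have boundIic : ∀ x : ℝ, ENNReal.ofReal (H x ^ 2)
      ≤ 2 * ∫⁻ v in Set.Iic x, ENNReal.ofReal (|H v * (f v - g v)|) := by
    intro x
    have habs : |∫ v in Set.Iic x, H v * (f v - g v)| ≤ ∫ v in Set.Iic x, |H v * (f v - g v)| := by
      simpa only [Real.norm_eq_abs] using norm_integral_le_integral_norm
        (μ := volume.restrict (Set.Iic x)) (fun v => H v * (f v - g v))
    have h1 : H x ^ 2 ≤ 2 * ∫ v in Set.Iic x, |H v * (f v - g v)| := by
      have h2 := le_abs_self (∫ v in Set.Iic x, H v * (f v - g v))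
      rw [keyIic x]; linarith
    calc ENNReal.ofReal (H x ^ 2)
        ≤ ENNReal.ofReal (2 * ∫ v in Set.Iic x, |H v * (f v - g v)|) :=
          ENNReal.ofReal_le_ofReal h1
      _ = 2 * ENNReal.ofReal (∫ v in Set.Iic x, |H v * (f v - g v)|) := by
          rw [ENNReal.ofReal_mul (by norm_num)]; norm_num
      _ = 2 * ∫⁻ v in Set.Iic x, ENNReal.ofReal (|H v * (f v - g v)|) := by
          rw [ofReal_integral_eq_lintegral_ofReal (hHh.abs.restrict)
            (Filter.Eventually.of_forall fun v => abs_nonneg _)]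
  -- weight functions
  have hfmE : Measurable fun y => ENNReal.ofReal (f y) := ENNReal.measurable_ofReal.comp hfm
  have hwm : Measurable fun x => ENNReal.ofReal ((f x)⁻¹) :=
    ENNReal.measurable_ofReal.comp hfm.inv
  have hXanti : Antitone fun v => ∫⁻ y in Set.Ioi v, ENNReal.ofReal (f y) := fun a b hab =>
    lintegral_mono_set (Set.Ioi_subset_Ioi hab)
  have hXm : Measurable fun v => ∫⁻ y in Set.Ioi v, ENNReal.ofReal (f y) := hXanti.measurable
  have hYmono : Monotone fun v => ∫⁻ y in Set.Iic v, ENNReal.ofReal (f y) := fun a b hab =>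
    lintegral_mono_set (Set.Iic_subset_Iic.2 hab)
  have hYm : Measurable fun v => ∫⁻ y in Set.Iic v, ENNReal.ofReal (f y) := hYmono.measurable
  have hne : ∀ (s : Set ℝ), volume s = ⊤ → (∫⁻ y in s, ENNReal.ofReal (f y)) ≠ 0 := by
    intro s hs h0
    have h1 := (lintegral_eq_zero_iff hfmE).1 h0
    have h3 : ∀ᵐ y ∂(volume.restrict s), False := by
      refine h1.mono fun y hy => ?_
      simp only [Pi.zero_apply, ENNReal.ofReal_eq_zero] at hy
      exact absurd hy (not_le.2 (hfpos y))
    have h4 : volume.restrict s Set.univ = 0 := by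
      simpa [ae_iff] using h3
    rw [Measure.restrict_apply_univ, hs] at h4
    simp at h4
  have hlt : ∀ (s : Set ℝ), (∫⁻ y in s, ENNReal.ofReal (f y)) ≠ ⊤ := fun s =>
    (lt_of_le_of_lt (le_trans (setLIntegral_le_lintegral _ _) hf1.le) one_lt_top).ne
  have hXne : ∀ v : ℝ, (∫⁻ y in Set.Ioi v, ENNReal.ofReal (f y)) ≠ 0 := fun v =>
    hne _ Real.volume_Ioi
  have hYne : ∀ v : ℝ, (∫⁻ y in Set.Iic v, ENNReal.ofReal (f y)) ≠ 0 := fun v =>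
    hne _ Real.volume_Iic
  -- bConst bounds
  have hR : ∀ v, m ≤ v → ∫⁻ x in Set.Ico m v, ENNReal.ofReal ((f x)⁻¹)
      ≤ bConst f m * (∫⁻ y in Set.Ioi v, ENNReal.ofReal (f y))⁻¹ := by
    intro v hv
    rw [setLIntegral_congr Ico_ae_eq_Ioc, ← div_eq_mul_inv]
    refine (ENNReal.le_div_iff_mul_le (Or.inl (hXne v)) (Or.inl (hlt _))).2 ?_
    rw [mul_comm]
    refine le_trans ?_ (le_max_left _ _)
    exact le_biSup (fun x => (∫⁻ y in Set.Ioi x, ENNReal.ofReal (f y)) *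
      ∫⁻ y in Set.Ioc m x, ENNReal.ofReal ((f y)⁻¹)) (Set.mem_Ici.2 hv)
  have hL : ∀ v, v ≤ m → ∫⁻ x in Set.Ico v m, ENNReal.ofReal ((f x)⁻¹)
      ≤ bConst f m * (∫⁻ y in Set.Iic v, ENNReal.ofReal (f y))⁻¹ := by
    intro v hv
    rw [← div_eq_mul_inv]
    refine (ENNReal.le_div_iff_mul_le (Or.inl (hYne v)) (Or.inl (hlt _))).2 ?_
    rw [mul_comm]
    refine le_trans ?_ (le_max_right _ _)
    exact le_biSup (fun x => (∫⁻ y in Set.Iic x, ENNReal.ofReal (f y)) *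
      ∫⁻ y in Set.Ico x m, ENNReal.ofReal ((f y)⁻¹)) (Set.mem_Iic.2 hv)
  -- right piece
  have pieceR : ∫⁻ x in Set.Ici m, ENNReal.ofReal (H x ^ 2) * ENNReal.ofReal ((f x)⁻¹)
      ≤ 2 * (bConst f m * ∫⁻ v, ENNReal.ofReal (|H v * (f v - g v)|) *
          ((Set.Ici m).indicator (fun _ => (1 : ℝ≥0∞)) v *
            (∫⁻ y in Set.Ioi v, ENNReal.ofReal (f y))⁻¹)) := by
    have step1 : ∫⁻ x in Set.Ici m, ENNReal.ofReal (H x ^ 2) * ENNReal.ofReal ((f x)⁻¹)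
        ≤ ∫⁻ x in Set.Ici m, 2 * ((∫⁻ v in Set.Ioi x, ENNReal.ofReal (|H v * (f v - g v)|)) *
            ENNReal.ofReal ((f x)⁻¹)) := by
      refine lintegral_mono fun x => ?_
      rw [← mul_assoc]
      exact mul_le_mul_left (boundIoi x) _
    refine step1.trans ?_
    rw [lintegral_const_mul' 2 _ (by norm_num)]
    refine mul_le_mul_right ?_ 2
    have e : ∀ x : ℝ, (∫⁻ v in Set.Ioi x, ENNReal.ofReal (|H v * (f v - g v)|)) *
        ENNReal.ofReal ((f x)⁻¹)
        = ∫⁻ v, (Set.Ioi x).indicator (fun v => ENNReal.ofReal (|H v * (f v - g v)|)) v *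
            ENNReal.ofReal ((f x)⁻¹) := by
      intro x
      rw [lintegral_mul_const' _ _ ENNReal.ofReal_ne_top,
        lintegral_indicator measurableSet_Ioi]
    have hum : Measurable (Function.uncurry fun x v =>
        (Set.Ioi x).indicator (fun v => ENNReal.ofReal (|H v * (f v - g v)|)) v *
          ENNReal.ofReal ((f x)⁻¹)) := by
      have h1 : (Function.uncurry fun x v =>
          (Set.Ioi x).indicator (fun v => ENNReal.ofReal (|H v * (f v - g v)|)) v *
            ENNReal.ofReal ((f x)⁻¹))
          = fun p : ℝ × ℝ => ({q : ℝ × ℝ | q.1 < q.2}.indicator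
              (fun q => ENNReal.ofReal (|H q.2 * (f q.2 - g q.2)|)) p) *
              ENNReal.ofReal ((f p.1)⁻¹) := by
        funext p
        rcases p with ⟨x, v⟩
        simp only [Function.uncurry, Set.indicator]
        by_cases hx : x < v
        · simp [hx]
        · simp [hx]
      rw [h1]
      exact ((hΦm.comp measurable_snd).indicator
        (measurableSet_lt measurable_fst measurable_snd)).mul (hwm.comp measurable_fst)
    calc ∫⁻ x in Set.Ici m, (∫⁻ v in Set.Ioi x, ENNReal.ofReal (|H v * (f v - g v)|)) *
          ENNReal.ofReal ((f x)⁻¹)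
        = ∫⁻ x in Set.Ici m, ∫⁻ v,
            (Set.Ioi x).indicator (fun v => ENNReal.ofReal (|H v * (f v - g v)|)) v *
              ENNReal.ofReal ((f x)⁻¹) := by
          exact lintegral_congr e
      _ = ∫⁻ v, ∫⁻ x in Set.Ici m,
            (Set.Ioi x).indicator (fun v => ENNReal.ofReal (|H v * (f v - g v)|)) v *
              ENNReal.ofReal ((f x)⁻¹) := by
          exact lintegral_lintegral_swap hum.aemeasurable
      _ ≤ ∫⁻ v, bConst f m * (ENNReal.ofReal (|H v * (f v - g v)|) *
            ((Set.Ici m).indicator (fun _ => (1 : ℝ≥0∞)) v *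
              (∫⁻ y in Set.Ioi v, ENNReal.ofReal (f y))⁻¹)) := by
          refine lintegral_mono fun v => ?_
          have e2 : ∀ x : ℝ, (Set.Ioi x).indicator
              (fun v => ENNReal.ofReal (|H v * (f v - g v)|)) v * ENNReal.ofReal ((f x)⁻¹)
              = (Set.Iio v).indicator
                  (fun x => ENNReal.ofReal (|H v * (f v - g v)|) * ENNReal.ofReal ((f x)⁻¹)) x := by
            intro x
            by_cases hx : x < v
            · rw [Set.indicator_of_mem (Set.mem_Ioi.2 hx), Set.indicator_of_mem (Set.mem_Iio.2 hx)]
            · rw [Set.indicator_of_notMem (fun hc => hx (Set.mem_Ioi.1 hc)),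
                Set.indicator_of_notMem (fun hc => hx (Set.mem_Iio.1 hc)), zero_mul]
          rw [lintegral_congr fun x => e2 x, lintegral_indicator measurableSet_Iio,
            Measure.restrict_restrict measurableSet_Iio, Set.inter_comm, Set.Ici_inter_Iio,
            lintegral_const_mul' _ _ ENNReal.ofReal_ne_top]
          by_cases hv : m ≤ v
          · rw [Set.indicator_of_mem (Set.mem_Ici.2 hv)]
            calc ENNReal.ofReal (|H v * (f v - g v)|) *
                  ∫⁻ x in Set.Ico m v, ENNReal.ofReal ((f x)⁻¹)
                ≤ ENNReal.ofReal (|H v * (f v - g v)|) *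
                    (bConst f m * (∫⁻ y in Set.Ioi v, ENNReal.ofReal (f y))⁻¹) :=
                  mul_le_mul_right (hR v hv) _
              _ = bConst f m * (ENNReal.ofReal (|H v * (f v - g v)|) *
                    ((1 : ℝ≥0∞) * (∫⁻ y in Set.Ioi v, ENNReal.ofReal (f y))⁻¹)) := by ring
          · rw [Set.Ico_eq_empty (fun hlt => hv hlt.le)]
            simp
      _ = bConst f m * ∫⁻ v, ENNReal.ofReal (|H v * (f v - g v)|) *
            ((Set.Ici m).indicator (fun _ => (1 : ℝ≥0∞)) v *
              (∫⁻ y in Set.Ioi v, ENNReal.ofReal (f y))⁻¹) := by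
          exact lintegral_const_mul' _ _ hb
  -- left piece
  have pieceL : ∫⁻ x in Set.Iio m, ENNReal.ofReal (H x ^ 2) * ENNReal.ofReal ((f x)⁻¹)
      ≤ 2 * (bConst f m * ∫⁻ v, ENNReal.ofReal (|H v * (f v - g v)|) *
          ((Set.Iio m).indicator (fun _ => (1 : ℝ≥0∞)) v *
            (∫⁻ y in Set.Iic v, ENNReal.ofReal (f y))⁻¹)) := by
    have step1 : ∫⁻ x in Set.Iio m, ENNReal.ofReal (H x ^ 2) * ENNReal.ofReal ((f x)⁻¹)
        ≤ ∫⁻ x in Set.Iio m, 2 * ((∫⁻ v in Set.Iic x, ENNReal.ofReal (|H v * (f v - g v)|)) *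
            ENNReal.ofReal ((f x)⁻¹)) := by
      refine lintegral_mono fun x => ?_
      rw [← mul_assoc]
      exact mul_le_mul_left (boundIic x) _
    refine step1.trans ?_
    rw [lintegral_const_mul' 2 _ (by norm_num)]
    refine mul_le_mul_right ?_ 2
    have e : ∀ x : ℝ, (∫⁻ v in Set.Iic x, ENNReal.ofReal (|H v * (f v - g v)|)) *
        ENNReal.ofReal ((f x)⁻¹)
        = ∫⁻ v, (Set.Iic x).indicator (fun v => ENNReal.ofReal (|H v * (f v - g v)|)) v *
            ENNReal.ofReal ((f x)⁻¹) := by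
      intro x
      rw [lintegral_mul_const' _ _ ENNReal.ofReal_ne_top,
        lintegral_indicator measurableSet_Iic]
    have hum : Measurable (Function.uncurry fun x v =>
        (Set.Iic x).indicator (fun v => ENNReal.ofReal (|H v * (f v - g v)|)) v *
          ENNReal.ofReal ((f x)⁻¹)) := by
      have h1 : (Function.uncurry fun x v =>
          (Set.Iic x).indicator (fun v => ENNReal.ofReal (|H v * (f v - g v)|)) v *
            ENNReal.ofReal ((f x)⁻¹))
          = fun p : ℝ × ℝ => ({q : ℝ × ℝ | q.2 ≤ q.1}.indicator
              (fun q => ENNReal.ofReal (|H q.2 * (f q.2 - g q.2)|)) p) *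
              ENNReal.ofReal ((f p.1)⁻¹) := by
        funext p
        rcases p with ⟨x, v⟩
        simp only [Function.uncurry, Set.indicator]
        by_cases hx : v ≤ x
        · simp [hx]
        · simp [hx]
      rw [h1]
      exact ((hΦm.comp measurable_snd).indicator
        (measurableSet_le measurable_snd measurable_fst)).mul (hwm.comp measurable_fst)
    calc ∫⁻ x in Set.Iio m, (∫⁻ v in Set.Iic x, ENNReal.ofReal (|H v * (f v - g v)|)) *
          ENNReal.ofReal ((f x)⁻¹)
        = ∫⁻ x in Set.Iio m, ∫⁻ v,
            (Set.Iic x).indicator (fun v => ENNReal.ofReal (|H v * (f v - g v)|)) v *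
              ENNReal.ofReal ((f x)⁻¹) := by
          exact lintegral_congr e
      _ = ∫⁻ v, ∫⁻ x in Set.Iio m,
            (Set.Iic x).indicator (fun v => ENNReal.ofReal (|H v * (f v - g v)|)) v *
              ENNReal.ofReal ((f x)⁻¹) := by
          exact lintegral_lintegral_swap hum.aemeasurable
      _ ≤ ∫⁻ v, bConst f m * (ENNReal.ofReal (|H v * (f v - g v)|) *
            ((Set.Iio m).indicator (fun _ => (1 : ℝ≥0∞)) v *
              (∫⁻ y in Set.Iic v, ENNReal.ofReal (f y))⁻¹)) := by
          refine lintegral_mono fun v => ?_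
          have e2 : ∀ x : ℝ, (Set.Iic x).indicator
              (fun v => ENNReal.ofReal (|H v * (f v - g v)|)) v * ENNReal.ofReal ((f x)⁻¹)
              = (Set.Ici v).indicator
                  (fun x => ENNReal.ofReal (|H v * (f v - g v)|) * ENNReal.ofReal ((f x)⁻¹)) x := by
            intro x
            by_cases hx : v ≤ x
            · rw [Set.indicator_of_mem (Set.mem_Iic.2 hx), Set.indicator_of_mem (Set.mem_Ici.2 hx)]
            · rw [Set.indicator_of_notMem (fun hc => hx (Set.mem_Iic.1 hc)),
                Set.indicator_of_notMem (fun hc => hx (Set.mem_Ici.1 hc)), zero_mul]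
          rw [lintegral_congr fun x => e2 x, lintegral_indicator measurableSet_Ici,
            Measure.restrict_restrict measurableSet_Ici, Set.Ici_inter_Iio,
            lintegral_const_mul' _ _ ENNReal.ofReal_ne_top]
          by_cases hv : v < m
          · rw [Set.indicator_of_mem (Set.mem_Iio.2 hv)]
            calc ENNReal.ofReal (|H v * (f v - g v)|) *
                  ∫⁻ x in Set.Ico v m, ENNReal.ofReal ((f x)⁻¹)
                ≤ ENNReal.ofReal (|H v * (f v - g v)|) *
                    (bConst f m * (∫⁻ y in Set.Iic v, ENNReal.ofReal (f y))⁻¹) :=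
                  mul_le_mul_right (hL v hv.le) _
              _ = bConst f m * (ENNReal.ofReal (|H v * (f v - g v)|) *
                    ((1 : ℝ≥0∞) * (∫⁻ y in Set.Iic v, ENNReal.ofReal (f y))⁻¹)) := by ring
          · rw [Set.Ico_eq_empty hv]
            simp
      _ = bConst f m * ∫⁻ v, ENNReal.ofReal (|H v * (f v - g v)|) *
            ((Set.Iio m).indicator (fun _ => (1 : ℝ≥0∞)) v *
              (∫⁻ y in Set.Iic v, ENNReal.ofReal (f y))⁻¹) := by
          exact lintegral_const_mul' _ _ hb
  -- combine
  have hre : ∀ x, ENNReal.ofReal (H x ^ 2 / f x)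
      = ENNReal.ofReal (H x ^ 2) * ENNReal.ofReal ((f x)⁻¹) := fun x => by
    rw [div_eq_mul_inv, ENNReal.ofReal_mul (sq_nonneg _)]
  rw [lintegral_congr hre, ← lintegral_add_compl
    (fun x => ENNReal.ofReal (H x ^ 2) * ENNReal.ofReal ((f x)⁻¹)) measurableSet_Iio
    (μ := volume), Set.compl_Iio]
  have hsum : ∫⁻ x, ENNReal.ofReal (|H x * (f x - g x)|) *
      ((Set.Ici m).indicator (fun _ => (1 : ℝ≥0∞)) x *
        (∫⁻ y in Set.Ioi x, ENNReal.ofReal (f y))⁻¹ +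
      (Set.Iio m).indicator (fun _ => (1 : ℝ≥0∞)) x *
        (∫⁻ y in Set.Iic x, ENNReal.ofReal (f y))⁻¹)
      = (∫⁻ x, ENNReal.ofReal (|H x * (f x - g x)|) *
          ((Set.Ici m).indicator (fun _ => (1 : ℝ≥0∞)) x *
            (∫⁻ y in Set.Ioi x, ENNReal.ofReal (f y))⁻¹)) +
        ∫⁻ x, ENNReal.ofReal (|H x * (f x - g x)|) *
          ((Set.Iio m).indicator (fun _ => (1 : ℝ≥0∞)) x *
            (∫⁻ y in Set.Iic x, ENNReal.ofReal (f y))⁻¹) := by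
    simp_rw [mul_add]
    refine lintegral_add_left ?_ _
    exact hΦm.mul ((measurable_const.indicator measurableSet_Ici).mul hXm.inv)
  calc (∫⁻ x in Set.Iio m, ENNReal.ofReal (H x ^ 2) * ENNReal.ofReal ((f x)⁻¹)) +
        ∫⁻ x in Set.Ici m, ENNReal.ofReal (H x ^ 2) * ENNReal.ofReal ((f x)⁻¹)
      ≤ (2 * (bConst f m * ∫⁻ v, ENNReal.ofReal (|H v * (f v - g v)|) *
            ((Set.Iio m).indicator (fun _ => (1 : ℝ≥0∞)) v *
              (∫⁻ y in Set.Iic v, ENNReal.ofReal (f y))⁻¹))) +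
          2 * (bConst f m * ∫⁻ v, ENNReal.ofReal (|H v * (f v - g v)|) *
            ((Set.Ici m).indicator (fun _ => (1 : ℝ≥0∞)) v *
              (∫⁻ y in Set.Ioi v, ENNReal.ofReal (f y))⁻¹)) := add_le_add pieceL pieceR
    _ = 2 * bConst f m *
        ∫⁻ x, ENNReal.ofReal (|H x * (f x - g x)|) *
          ((Set.Ici m).indicator (fun _ => (1 : ℝ≥0∞)) x *
            (∫⁻ y in Set.Ioi x, ENNReal.ofReal (f y))⁻¹ +
          (Set.Iio m).indicator (fun _ => (1 : ℝ≥0∞)) x *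
            (∫⁻ y in Set.Iic x, ENNReal.ofReal (f y))⁻¹) := by
        rw [hsum]; ring

-- STATEMENT 19: the chi-square-type cdf integral is bounded by 2b times the weighted
-- integral.
theorem cdf_integral_le_weighted (f g : ℝ → ℝ) (hfpos : ∀ x, 0 < f x) (hgpos : ∀ x, 0 ≤ g x)
    (hfm : Measurable f) (hgm : Measurable g)
    (hf1 : ∫⁻ x, ENNReal.ofReal (f x) = 1) (hg1 : ∫⁻ x, ENNReal.ofReal (g x) = 1)
    (m : ℝ) (hmed : ∫ y in Set.Iic m, f y = 1 / 2)
    (hb : bConst f m ≠ ⊤)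
    (hfin : ∫⁻ x, ENNReal.ofReal ((f x - g x) ^ 2 / f x) ≠ ⊤) :
    ∫⁻ x, ENNReal.ofReal
        (((∫ y in Set.Iic x, f y) - ∫ y in Set.Iic x, g y) ^ 2 / f x)
      ≤ 2 * bConst f m *
        ∫⁻ x, ENNReal.ofReal
          (|((∫ y in Set.Iic x, f y) - ∫ y in Set.Iic x, g y) * (f x - g x)|) *
          ((Set.Ici m).indicator (fun _ => (1 : ℝ≥0∞)) x *
            (∫⁻ y in Set.Ioi x, ENNReal.ofReal (f y))⁻¹ +
          (Set.Iio m).indicator (fun _ => (1 : ℝ≥0∞)) x *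
            (∫⁻ y in Set.Iic x, ENNReal.ofReal (f y))⁻¹) := by
  exact main_aux f g (fun x => (∫ y in Set.Iic x, f y) - ∫ y in Set.Iic x, g y)
    hfpos hgpos hfm hgm hf1 hg1 m hb (fun x => rfl)
end
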